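/- arXiv:2205.10164 — 10 statements merged into one kernel-verified Lean document; each statement's English description precedes it below -/
import Mathlib

section
/- For every integer n ≥ 1 there exists a globally simple tight relative non-zero sum Heffter array NH_2(n;n): an n×n matrix A = (a_{i,j}) with entries in Z_{2n²+2} such that the multiset formed by all a_{i,j} and −a_{i,j} contains every element of Z_{2n²+2} ∖ {0, n²+1} exactly once, and for every row i the partial sums a_{i,1} + ⋯ + a_{i,k} (1 ≤ k ≤ n) are nonzero and pairwise distinct in Z_{2n²+2}, and for every column j the partial sums a_{1,j} + ⋯ + a_{k,j} (1 ≤ k ≤ n) are nonzero and pairwise distinct in Z_{2n²+2}. -/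
/-!
Take $a_{i,j} = (-1)^{i+j}((i-1)n + j)$. The values $|a_{i,j}|$ run through $1, \dots, n^2$ exactly
once, and in $\mathbb{Z}_{2n^2+2}$ the elements $\pm 1, \dots, \pm n^2$ are precisely the nonzero
elements whose least-absolute-value representative is not $n^2+1$; this gives the covering
property.

Up to a global sign, the partial sums along a row or a column are alternating sums
$\sum_{j \le k} (-1)^j (b + d(j-1))$ of an arithmetic progression with $b, d > 0$. They equal $cd$
for $k = 2c$ and $-(b + cd)$ for $k = 2c+1$, so they are pairwise distinct for $k = 0, 1, \dots, n$
(the empty sum being $0$), and their absolute values stay below $n^2 + 1$, half the modulus, so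
they remain distinct after reduction.
-/

open Finset

namespace Heffter

def altSum (b d : ℤ) (k : ℕ) : ℤ := ∑ j ∈ Icc 1 k, (-1) ^ j * (b + d * ((j - 1 : ℕ) : ℤ))

section altSum

variable (b d : ℤ)

lemma altSum_succ (k : ℕ) :
    altSum b d (k + 1) = altSum b d k + (-1) ^ (k + 1) * (b + d * k) := by
  rw [altSum, sum_Icc_succ_top (by omega), Nat.add_sub_cancel]
  rfl

lemma altSum_two_mul_and_two_mul_add_one (c : ℕ) :
    altSum b d (2 * c) = c * d ∧ altSum b d (2 * c + 1) = -(b + c * d) := by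
  induction c with
  | zero => simp [altSum]
  | succ c ih =>
    have hodd : altSum b d (2 * c + 1) = -(b + c * d) := ih.2
    have heven : altSum b d (2 * (c + 1)) = (c + 1 : ℕ) * d := by
      rw [show 2 * (c + 1) = 2 * c + 1 + 1 by ring, altSum_succ, hodd,
        (Odd.add_one ⟨c, rfl⟩).neg_one_pow]
      push_cast; ring
    refine ⟨heven, ?_⟩
    rw [altSum_succ, heven, (Even.add_one ⟨c + 1, by ring⟩).neg_one_pow]
    push_cast; ring

lemma altSum_two_mul (c : ℕ) : altSum b d (2 * c) = c * d :=
  (altSum_two_mul_and_two_mul_add_one b d c).1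

lemma altSum_two_mul_add_one (c : ℕ) : altSum b d (2 * c + 1) = -(b + c * d) :=
  (altSum_two_mul_and_two_mul_add_one b d c).2

variable {b d}

lemma altSum_injective (hb : 0 < b) (hd : 0 < d) : Function.Injective (altSum b d) := by
  intro k k' h
  obtain ⟨c, rfl | rfl⟩ := Nat.even_or_odd' k <;> obtain ⟨c', rfl | rfl⟩ := Nat.even_or_odd' k' <;>
    simp only [altSum_two_mul, altSum_two_mul_add_one] at h
  · have : (c : ℤ) = c' := mul_right_cancel₀ hd.ne' h
    omega
  · nlinarith [(Nat.cast_nonneg c : (0 : ℤ) ≤ c), (Nat.cast_nonneg c' : (0 : ℤ) ≤ c')]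
  · nlinarith [(Nat.cast_nonneg c : (0 : ℤ) ≤ c), (Nat.cast_nonneg c' : (0 : ℤ) ≤ c')]
  · have : (c : ℤ) = c' := mul_right_cancel₀ hd.ne' (by linarith)
    omega

lemma abs_altSum_le (hb : 0 ≤ b) (hd : 0 ≤ d) (k : ℕ) :
    |altSum b d k| ≤ b + d * (k / 2 : ℕ) := by
  obtain ⟨c, rfl | rfl⟩ := Nat.even_or_odd' k
  · rw [altSum_two_mul, abs_of_nonneg (by positivity), Nat.mul_div_cancel_left c two_pos]
    linarith
  · rw [altSum_two_mul_add_one, abs_neg, abs_of_nonneg (by positivity),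
      show (2 * c + 1) / 2 = c by omega, mul_comm]

end altSum

section ZMod

variable {v : ℕ} [NeZero v]

lemma valMinAbs_intCast {y : ℤ} (hy : 2 * |y| < v) : (y : ZMod v).valMinAbs = y :=
  (ZMod.valMinAbs_spec _ _).2 ⟨rfl, by constructor <;> linarith [neg_abs_le y, le_abs_self y]⟩

lemma intCast_injOn {s : Set ℕ} {g : ℕ → ℤ} (hg : Set.InjOn g s)
    (hbound : ∀ k ∈ s, 2 * |g k| < v) : Set.InjOn (fun k => (g k : ZMod v)) s := by
  intro k hk k' hk' h
  refine hg hk hk' ?_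
  rw [← valMinAbs_intCast (hbound k hk), ← valMinAbs_intCast (hbound k' hk')]
  exact congrArg ZMod.valMinAbs h

lemma count_pair_neg (x : ZMod v) {e : ℤ} (he : 2 * |e| < v) (he0 : e ≠ 0) :
    Multiset.count x {(e : ZMod v), -(e : ZMod v)} =
      if e.natAbs = x.valMinAbs.natAbs then 1 else 0 := by
  have hcast (y : ℤ) (hy : 2 * |y| < v) : x = y ↔ x.valMinAbs = y :=
    ⟨by rintro rfl; exact valMinAbs_intCast hy, by rintro h; rw [← h, ZMod.coe_valMinAbs]⟩
  have hpos := hcast e he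
  have hneg := hcast (-e) (by rwa [abs_neg])
  rw [Int.cast_neg] at hneg
  rw [Multiset.insert_eq_cons, Multiset.count_cons, Multiset.count_singleton]
  simp only [hpos, hneg, Int.natAbs_eq_natAbs_iff]
  split_ifs <;> omega

lemma count_bind_pair_neg {ι : Type*} (s : Finset ι) (e : ι → ℤ) (he : ∀ p ∈ s, 2 * |e p| < v)
    (he0 : ∀ p ∈ s, e p ≠ 0) (x : ZMod v) :
    Multiset.count x (s.val.bind fun p => {(e p : ZMod v), -(e p : ZMod v)}) =
      #{p ∈ s | (e p).natAbs = x.valMinAbs.natAbs} := by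
  rw [Multiset.count_bind, card_filter]
  exact sum_congr rfl fun p hp => count_pair_neg x (he p hp) (he0 p hp)

end ZMod

lemma natAbs_valMinAbs_mem_Icc_iff (N : ℕ) (x : ZMod (2 * N + 2)) :
    x.valMinAbs.natAbs ∈ Icc 1 N ↔ ¬(x = 0 ∨ x = ((N + 1 : ℕ) : ZMod (2 * N + 2))) := by
  have hw := x.natAbs_valMinAbs_le
  have hIoc := x.valMinAbs_mem_Ioc
  have hhalf : x = ((N + 1 : ℕ) : ZMod (2 * N + 2)) ↔ x.valMinAbs = N + 1 := by
    rw [ZMod.valMinAbs_spec]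
    push_cast
    simp only [Set.mem_Ioc]
    constructor
    · intro h; exact ⟨h, by omega, by omega⟩
    · exact fun h => h.1
  rw [mem_Icc, hhalf, ← ZMod.valMinAbs_eq_zero]
  simp only [Set.mem_Ioc] at hIoc
  rw [show (2 * N + 2) / 2 = N + 1 by omega] at hw
  push_cast at hIoc
  omega

lemma sum_Icc_add {M : Type*} [AddCommMonoid M] (F : ℕ → M) (a c : ℕ) :
    ∑ m ∈ Icc 1 (a + c), F m = ∑ m ∈ Icc 1 a, F m + ∑ j ∈ Icc 1 c, F (a + j) := by
  induction c with
  | zero => simp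
  | succ c ih => rw [← add_assoc, sum_Icc_succ_top (by omega), ih, sum_Icc_succ_top (by omega),
      add_assoc, add_assoc]

lemma sum_product_Icc {M : Type*} [AddCommMonoid M] (F : ℕ → M) (a n : ℕ) :
    ∑ p ∈ Icc 1 a ×ˢ Icc 1 n, F ((p.1 - 1) * n + p.2) = ∑ m ∈ Icc 1 (a * n), F m := by
  rw [sum_product]
  induction a with
  | zero => simp
  | succ a ih => simp only [sum_Icc_succ_top (Nat.le_add_left 1 a), ih, Nat.add_sub_cancel,
      add_one_mul, sum_Icc_add]

def HasSimplePartialSums {G : Type*} [AddCommMonoid G] (n : ℕ) (a : ℕ → G) : Prop :=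
  (∀ k ∈ Icc 1 n, ∑ j ∈ Icc 1 k, a j ≠ 0) ∧
    ∀ k ∈ Icc 1 n, ∀ k' ∈ Icc 1 n, ∑ j ∈ Icc 1 k, a j = ∑ j ∈ Icc 1 k', a j → k = k'

lemma hasSimplePartialSums_of_injOn {G : Type*} [AddCommMonoid G] {n : ℕ} {a : ℕ → G}
    (h : Set.InjOn (fun k => ∑ j ∈ Icc 1 k, a j) (Set.Iic n)) :
    HasSimplePartialSums n a := by
  refine ⟨fun k hk h0 => ?_, fun k hk k' hk' hkk' => ?_⟩
  · simp only [mem_Icc] at hk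
    have : k = 0 := h (Set.mem_Iic.mpr hk.2) (Set.mem_Iic.mpr n.zero_le) (by simpa using h0)
    omega
  · simp only [mem_Icc] at hk hk'
    exact h (Set.mem_Iic.mpr hk.2) (Set.mem_Iic.mpr hk'.2) hkk'

lemma injOn_signed_altSum {v : ℕ} [NeZero v] {b d : ℤ} (hb : 0 < b) (hd : 0 < d) {n : ℕ}
    (hbound : 2 * (b + d * (n / 2 : ℕ)) < v) (e : ℕ) :
    Set.InjOn (fun k => (((-1) ^ e * altSum b d k : ℤ) : ZMod v)) (Set.Iic n) := by
  refine intCast_injOn (((mul_right_injective₀ (by simp)).comp (altSum_injective hb hd)).injOn)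
    fun k hk => ?_
  have hk2 : ((k / 2 : ℕ) : ℤ) ≤ (n / 2 : ℕ) := by exact_mod_cast Nat.div_le_div_right hk
  rw [abs_mul, abs_pow, abs_neg, abs_one, one_pow, one_mul]
  nlinarith [abs_altSum_le hb.le hd.le k]

def entry (n i j : ℕ) : ℤ := (-1) ^ (i + j) * ((i - 1) * n + j : ℕ)

lemma natAbs_entry (n i j : ℕ) : (entry n i j).natAbs = (i - 1) * n + j := by
  rw [entry, Int.natAbs_mul, Int.natAbs_pow, Int.natAbs_neg, Int.natAbs_one, one_pow, one_mul,
    Int.natAbs_natCast]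

lemma sum_entry_row (n i k : ℕ) :
    ∑ j ∈ Icc 1 k, entry n i j = (-1) ^ i * altSum ((i - 1) * n + 1 : ℕ) 1 k := by
  rw [altSum, mul_sum]
  refine sum_congr rfl fun j hj => ?_
  rw [entry, show (i - 1) * n + j = (i - 1) * n + 1 + (j - 1) by simp at hj; omega]
  push_cast; ring

lemma sum_entry_col (n j k : ℕ) :
    ∑ i ∈ Icc 1 k, entry n i j = (-1) ^ j * altSum j n k := by
  rw [altSum, mul_sum]
  refine sum_congr rfl fun i _ => ?_
  rw [entry]
  push_cast; ring

lemma sub_one_mul_add_le_sq {n i j : ℕ} (hi : i ≤ n) (hj : j ≤ n) : (i - 1) * n + j ≤ n ^ 2 := by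
  calc (i - 1) * n + j ≤ (n - 1) * n + n := by gcongr
    _ = n ^ 2 := by cases n <;> simp [sq, Nat.succ_mul]

def array (n : ℕ) (i j : ℕ) : ZMod (2 * n ^ 2 + 2) := entry n i j

lemma count_array (n : ℕ) (x : ZMod (2 * n ^ 2 + 2)) :
    Multiset.count x (((Icc 1 n ×ˢ Icc 1 n).val).bind
        fun p => ({array n p.1 p.2, -array n p.1 p.2} : Multiset (ZMod (2 * n ^ 2 + 2)))) =
      if x = 0 ∨ x = ((n ^ 2 + 1 : ℕ) : ZMod (2 * n ^ 2 + 2)) then 0 else 1 := by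
  have hmem {p : ℕ × ℕ} (hp : p ∈ Icc 1 n ×ˢ Icc 1 n) :
      1 ≤ (entry n p.1 p.2).natAbs ∧ (entry n p.1 p.2).natAbs ≤ n ^ 2 := by
    simp only [mem_product, mem_Icc] at hp
    rw [natAbs_entry]
    exact ⟨by omega, sub_one_mul_add_le_sq hp.1.2 hp.2.2⟩
  unfold array
  rw [count_bind_pair_neg _ _ (fun p hp => ?_) (fun p hp => ?_), card_filter]
  · simp only [natAbs_entry]
    rw [sum_product_Icc (fun m => if m = x.valMinAbs.natAbs then 1 else 0), sum_ite_eq', ← sq]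
    simp only [natAbs_valMinAbs_mem_Icc_iff, ite_not]
  · have := hmem hp
    rw [Int.abs_eq_natAbs]
    exact_mod_cast (by omega : 2 * (entry n p.1 p.2).natAbs < 2 * n ^ 2 + 2)
  · exact Int.natAbs_pos.mp (hmem hp).1

lemma hasSimplePartialSums_row {n i : ℕ} (hi : i ∈ Icc 1 n) :
    HasSimplePartialSums n (array n i) := by
  rw [mem_Icc] at hi
  apply hasSimplePartialSums_of_injOn
  simp only [array, ← Int.cast_sum, sum_entry_row]
  refine injOn_signed_altSum (by positivity) one_pos ?_ i
  have := sub_one_mul_add_le_sq (j := 1 + n / 2) hi.2 (by omega)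
  exact_mod_cast (by omega : 2 * ((i - 1) * n + 1 + 1 * (n / 2)) < 2 * n ^ 2 + 2)

lemma hasSimplePartialSums_col {n j : ℕ} (hj : j ∈ Icc 1 n) :
    HasSimplePartialSums n (fun i => array n i j) := by
  rw [mem_Icc] at hj
  apply hasSimplePartialSums_of_injOn (a := fun i => array n i j)
  simp only [array, ← Int.cast_sum, sum_entry_col]
  refine injOn_signed_altSum (by omega) (by omega) ?_ j
  have := sub_one_mul_add_le_sq (i := n / 2 + 1) (by omega) hj.2
  rw [Nat.add_sub_cancel] at this
  exact_mod_cast (by nlinarith : 2 * (j + n * (n / 2)) < 2 * n ^ 2 + 2)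

end Heffter

theorem stmt2_general (n : ℕ) :
    ∃ A : ℕ → ℕ → ZMod (2 * n ^ 2 + 2),
      (∀ x : ZMod (2 * n ^ 2 + 2),
        (x = 0 ∨ x = ((n ^ 2 + 1 : ℕ) : ZMod (2 * n ^ 2 + 2))) →
        Multiset.count x
          (((Finset.Icc 1 n ×ˢ Finset.Icc 1 n).val).bind
            (fun p => ({A p.1 p.2, -A p.1 p.2} : Multiset (ZMod (2 * n ^ 2 + 2))))) = 0) ∧
      (∀ x : ZMod (2 * n ^ 2 + 2),
        ¬(x = 0 ∨ x = ((n ^ 2 + 1 : ℕ) : ZMod (2 * n ^ 2 + 2))) →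
        Multiset.count x
          (((Finset.Icc 1 n ×ˢ Finset.Icc 1 n).val).bind
            (fun p => ({A p.1 p.2, -A p.1 p.2} : Multiset (ZMod (2 * n ^ 2 + 2))))) = 1) ∧
      (∀ i ∈ Finset.Icc 1 n, ∀ k ∈ Finset.Icc 1 n,
        (∑ j ∈ Finset.Icc 1 k, A i j) ≠ 0) ∧
      (∀ i ∈ Finset.Icc 1 n, ∀ k ∈ Finset.Icc 1 n, ∀ k' ∈ Finset.Icc 1 n,
        (∑ j ∈ Finset.Icc 1 k, A i j) = (∑ j ∈ Finset.Icc 1 k', A i j) → k = k') ∧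
      (∀ j ∈ Finset.Icc 1 n, ∀ k ∈ Finset.Icc 1 n,
        (∑ i ∈ Finset.Icc 1 k, A i j) ≠ 0) ∧
      (∀ j ∈ Finset.Icc 1 n, ∀ k ∈ Finset.Icc 1 n, ∀ k' ∈ Finset.Icc 1 n,
        (∑ i ∈ Finset.Icc 1 k, A i j) = (∑ i ∈ Finset.Icc 1 k', A i j) → k = k') :=
  ⟨Heffter.array n,
    fun x hx => (Heffter.count_array n x).trans (if_pos hx),
    fun x hx => (Heffter.count_array n x).trans (if_neg hx),
    fun _ hi => (Heffter.hasSimplePartialSums_row hi).1,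
    fun _ hi => (Heffter.hasSimplePartialSums_row hi).2,
    fun _ hj => (Heffter.hasSimplePartialSums_col hj).1,
    fun _ hj => (Heffter.hasSimplePartialSums_col hj).2⟩

/-- Proposition 3.2 (existence form): for every n ≥ 1 there exists a globally simple
tight relative non-zero sum Heffter array NH₂(n;n), formalized as an n×n matrix
(1-indexed) over Z_{2n²+2} such that the multiset of all entries together with their
negatives covers Z_{2n²+2} ∖ {0, n²+1} exactly once, and all (natural, left-to-right
resp. top-to-bottom) partial sums of every row and column are nonzero and pairwise
distinct. -/
theorem stmt2 (n : ℕ) (hn : 1 ≤ n) :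
    ∃ A : ℕ → ℕ → ZMod (2 * n ^ 2 + 2),
      (∀ x : ZMod (2 * n ^ 2 + 2),
        (x = 0 ∨ x = ((n ^ 2 + 1 : ℕ) : ZMod (2 * n ^ 2 + 2))) →
        Multiset.count x
          (((Finset.Icc 1 n ×ˢ Finset.Icc 1 n).val).bind
            (fun p => ({A p.1 p.2, -A p.1 p.2} : Multiset (ZMod (2 * n ^ 2 + 2))))) = 0) ∧
      (∀ x : ZMod (2 * n ^ 2 + 2),
        ¬(x = 0 ∨ x = ((n ^ 2 + 1 : ℕ) : ZMod (2 * n ^ 2 + 2))) →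
        Multiset.count x
          (((Finset.Icc 1 n ×ˢ Finset.Icc 1 n).val).bind
            (fun p => ({A p.1 p.2, -A p.1 p.2} : Multiset (ZMod (2 * n ^ 2 + 2))))) = 1) ∧
      (∀ i ∈ Finset.Icc 1 n, ∀ k ∈ Finset.Icc 1 n,
        (∑ j ∈ Finset.Icc 1 k, A i j) ≠ 0) ∧
      (∀ i ∈ Finset.Icc 1 n, ∀ k ∈ Finset.Icc 1 n, ∀ k' ∈ Finset.Icc 1 n,
        (∑ j ∈ Finset.Icc 1 k, A i j) = (∑ j ∈ Finset.Icc 1 k', A i j) → k = k') ∧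
      (∀ j ∈ Finset.Icc 1 n, ∀ k ∈ Finset.Icc 1 n,
        (∑ i ∈ Finset.Icc 1 k, A i j) ≠ 0) ∧
      (∀ j ∈ Finset.Icc 1 n, ∀ k ∈ Finset.Icc 1 n, ∀ k' ∈ Finset.Icc 1 n,
        (∑ i ∈ Finset.Icc 1 k, A i j) = (∑ i ∈ Finset.Icc 1 k', A i j) → k = k') :=
  stmt2_general n
end

section
/- Let n ≥ 1 be an integer and define the n×n matrix A = (a_{i,j}) with entries in Z_{2n²+2} by a_{i,j} = (−1)^{i+j}·(j + (i−1)n) for 1 ≤ i,j ≤ n (that is, a_{i,j} = j + (i−1)n when i ≡ j (mod 2) and a_{i,j} = −(j + (i−1)n) otherwise). Then A is a globally simple NH_2(n;n): the multiset formed by all a_{i,j} and −a_{i,j} contains every element of Z_{2n²+2} ∖ {0, n²+1} exactly once, and for every row i the partial sums a_{i,1} + ⋯ + a_{i,k} (1 ≤ k ≤ n) are nonzero and pairwise distinct in Z_{2n²+2}, and for every column j the partial sums a_{1,j} + ⋯ + a_{k,j} (1 ≤ k ≤ n) are nonzero and pairwise distinct in Z_{2n²+2}. -/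
/-!
Every entry is `±v` with `v = j + (i - 1) n`, and `v` runs bijectively over `1, …, n²`. In
`ZMod (2n² + 2)` the elements `±1, …, ±n²` are pairwise distinct and are exactly the elements
other than `0` and `n² + 1`, which gives the covering property.

The partial sum of length `k` of a row or a column is an alternating sum of an arithmetic
progression, hence equals `(-1)^k g(k)` up to a sign fixed by the row or column, where
`1 ≤ g(k) ≤ n²` and `g` is injective on each parity class of `k`. Integers in `[-n², n²]`
that are congruent modulo `2n² + 2` are equal, so these partial sums are nonzero and pairwise
distinct.
-/

open Finset

namespace ZMod

lemma eq_of_intCast_eq_of_abs_sub_lt {m : ℕ} {a b : ℤ} (h : (a : ZMod m) = b)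
    (hab : |b - a| < m) : a = b :=
  (sub_eq_zero.1 <| Int.eq_zero_of_abs_lt_dvd ((intCast_eq_intCast_iff_dvd_sub a b m).1 h) hab).symm

lemma intCast_injOn_Icc {N : ℕ} :
    Set.InjOn (Int.cast : ℤ → ZMod (2 * N + 2)) (Set.Icc (-N) N) :=
  fun _ ha _ hb h => eq_of_intCast_eq_of_abs_sub_lt h (by
    rw [Set.mem_Icc] at ha hb; rw [abs_lt]; push_cast; omega)

lemma neg_one_pow_mul_mem_Icc {N : ℕ} (k : ℕ) {a : ℤ} (ha : 0 ≤ a) (haN : a ≤ N) :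
    (-1) ^ k * a ∈ Set.Icc (-N : ℤ) N := by
  rcases neg_one_pow_eq_or ℤ k with h | h <;> rw [h] <;> constructor <;> linarith

lemma intCast_neg_one_pow_mul_ne_zero {N : ℕ} (k : ℕ) {a : ℤ} (ha : 1 ≤ a) (haN : a ≤ N) :
    (((-1) ^ k * a : ℤ) : ZMod (2 * N + 2)) ≠ 0 := by
  intro h
  rw [← Int.cast_zero] at h
  exact mul_ne_zero (pow_ne_zero k (by norm_num)) (by omega)
    (intCast_injOn_Icc (neg_one_pow_mul_mem_Icc k (by omega) haN) ⟨by omega, by omega⟩ h)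

lemma neg_one_pow_mul_eq_of_intCast_eq {N : ℕ} {k k' : ℕ} {a b : ℤ}
    (ha : 1 ≤ a) (haN : a ≤ N) (hb : 1 ≤ b) (hbN : b ≤ N)
    (h : (((-1) ^ k * a : ℤ) : ZMod (2 * N + 2)) = (((-1) ^ k' * b : ℤ))) :
    k % 2 = k' % 2 ∧ a = b := by
  have h := intCast_injOn_Icc (neg_one_pow_mul_mem_Icc k (by omega) haN)
    (neg_one_pow_mul_mem_Icc k' (by omega) hbN) h
  rw [neg_one_pow_eq_pow_mod_two (R := ℤ), neg_one_pow_eq_pow_mod_two (R := ℤ) (n := k')] at h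
  rcases Nat.mod_two_eq_zero_or_one k with hk | hk <;>
    rcases Nat.mod_two_eq_zero_or_one k' with hk' | hk' <;>
    simp only [hk, hk', pow_zero, pow_one] at h <;> omega

lemma exists_eq_intCast_or_neg_iff {N : ℕ} (x : ZMod (2 * N + 2)) :
    (∃ v : ℤ, 1 ≤ v ∧ v ≤ N ∧ (x = v ∨ x = -v)) ↔
      ¬(x = 0 ∨ x = ((N + 1 : ℕ) : ZMod (2 * N + 2))) := by
  symm
  constructor
  · intro hx
    set a := x.valMinAbs
    have hxa : x = a := (coe_valMinAbs x).symm
    have ha0 : a ≠ 0 := fun h => hx (Or.inl ((valMinAbs_eq_zero x).1 h))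
    have haJ : a ≠ N + 1 := fun h => hx (Or.inr (by rw [hxa, h]; push_cast; rfl))
    have hmem := valMinAbs_mem_Ioc x
    simp only [Set.mem_Ioc] at hmem
    push_cast at hmem
    refine ⟨a.natAbs, by omega, by omega, ?_⟩
    rcases Int.natAbs_eq a with h | h
    · left; rw [hxa, ← h]
    · right; rw [hxa, ← Int.cast_neg, ← h]
  · rintro ⟨v, hv1, hvN, hxv⟩ hx
    rw [← Int.cast_neg] at hxv
    obtain ⟨b, hb, hxb⟩ : ∃ b : ℤ, (b = 0 ∨ b = N + 1) ∧ x = b := by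
      rcases hx with rfl | rfl
      · exact ⟨0, by omega, Int.cast_zero.symm⟩
      · exact ⟨N + 1, by omega, by push_cast; rfl⟩
    rw [hxb] at hxv
    rcases hxv with h | h <;>
      have := eq_of_intCast_eq_of_abs_sub_lt h (by rw [abs_lt]; push_cast; omega) <;> omega

end ZMod

lemma Multiset.nodup_bind_pair_intCast_neg {α : Type*} {s : Finset α} {N : ℕ} {v : α → ℤ}
    (hv : ∀ p ∈ s, 1 ≤ v p ∧ v p ≤ N) (hinj : Set.InjOn v s) :
    (s.val.bind fun p => ({(v p : ZMod (2 * N + 2)), -(v p : ZMod (2 * N + 2))} :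
      Multiset (ZMod (2 * N + 2)))).Nodup := by
  simp only [← Int.cast_neg]
  refine Multiset.nodup_bind.2 ⟨fun p hp => ?_, s.nodup.pairwise fun p hp q hq hpq => ?_⟩
  · have := hv p hp
    simp only [Multiset.insert_eq_cons, Multiset.nodup_cons, Multiset.mem_singleton,
      Multiset.nodup_singleton, and_true]
    intro h
    have := ZMod.intCast_injOn_Icc ⟨by omega, by omega⟩ ⟨by omega, by omega⟩ h
    omega
  · rw [Function.onFun, Multiset.disjoint_left]
    intro x hxp hxq
    simp only [Multiset.insert_eq_cons, Multiset.mem_cons, Multiset.mem_singleton] at hxp hxq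
    have hne : v p ≠ v q := fun h => hpq (hinj hp hq h)
    have := hv p hp; have := hv q hq
    rcases hxp with rfl | rfl <;> rcases hxq with h | h <;>
      have := ZMod.intCast_injOn_Icc ⟨by omega, by omega⟩ ⟨by omega, by omega⟩ h <;> omega

-- Consecutive terms `t = 2s - 1, 2s` contribute `d`; an odd `k` leaves `-(b + k d)` over.
lemma sum_Icc_neg_one_pow_mul_add_mul (b d : ℤ) (k : ℕ) :
    ∑ t ∈ Icc 1 k, (-1) ^ t * (b + t * d) =
      (-1) ^ k * ((((k + 1) / 2 : ℕ) : ℤ) * d + ((k % 2 : ℕ) : ℤ) * b) := by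
  induction k using Nat.twoStepInduction with
  | zero => simp
  | one => simp; ring
  | more k ih _ =>
    rw [sum_Icc_succ_top (by omega), sum_Icc_succ_top (by omega), ih,
      show (k + 2 + 1) / 2 = (k + 1) / 2 + 1 by omega, show (k + 2) % 2 = k % 2 by omega]
    push_cast
    ring

def cellValue (n i j : ℕ) : ℤ := j + (i - 1) * n

def rowPartialAbs (n i k : ℕ) : ℤ := ((k + 1) / 2 : ℕ) + (k % 2 : ℕ) * ((i - 1) * n)

def colPartialAbs (n j k : ℕ) : ℤ := ((k + 1) / 2 : ℕ) * n + (k % 2 : ℕ) * (j - n)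

section cellValue

variable {n i j : ℕ}

lemma cellValue_mem (hi : i ∈ Icc 1 n) (hj : j ∈ Icc 1 n) :
    1 ≤ cellValue n i j ∧ cellValue n i j ≤ (n : ℤ) ^ 2 := by
  simp only [mem_Icc] at hi hj
  unfold cellValue
  constructor <;> nlinarith

lemma cellValue_inj {i' j' : ℕ} (hj : j ∈ Icc 1 n) (hj' : j' ∈ Icc 1 n)
    (h : cellValue n i j = cellValue n i' j') : i = i' ∧ j = j' := by
  simp only [mem_Icc, cellValue] at *
  have hdvd : (n : ℤ) ∣ j - j' := ⟨i' - i, by linarith⟩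
  have hjj : (j : ℤ) - j' = 0 := Int.eq_zero_of_abs_lt_dvd hdvd (by rw [abs_lt]; omega)
  have hii : ((i : ℤ) - i') * n = 0 := by linarith
  rcases mul_eq_zero.1 hii with h | h <;> omega

lemma exists_cellValue_eq {v : ℤ} (hv : 1 ≤ v) (hvn : v ≤ (n : ℤ) ^ 2) :
    ∃ i ∈ Icc 1 n, ∃ j ∈ Icc 1 n, cellValue n i j = v := by
  lift v to ℕ using (by omega)
  have hn : 0 < n := Nat.pos_of_ne_zero (by rintro rfl; simp at hvn; omega)
  have hdiv : (v - 1) / n < n := (Nat.div_lt_iff_lt_mul (by omega)).2 (by zify [hv]; nlinarith)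
  have hmod : (v - 1) % n < n := Nat.mod_lt _ (by omega)
  have hqr := Nat.mod_add_div (v - 1) n
  set q := (v - 1) / n
  set r := (v - 1) % n
  refine ⟨q + 1, mem_Icc.2 ⟨Nat.le_add_left 1 q, hdiv⟩,
    r + 1, mem_Icc.2 ⟨Nat.le_add_left 1 r, hmod⟩, ?_⟩
  zify [show 1 ≤ v by omega] at hqr
  simp only [cellValue]
  push_cast
  linarith

lemma sum_row_cellValue (i k : ℕ) :
    ∑ j ∈ Icc 1 k, (-1) ^ (i + j) * cellValue n i j =
      (-1) ^ (i + k) * rowPartialAbs n i k := by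
  rw [rowPartialAbs, pow_add, mul_assoc, ← mul_one (((k + 1) / 2 : ℕ) : ℤ),
    ← sum_Icc_neg_one_pow_mul_add_mul, mul_sum]
  refine sum_congr rfl fun j _ => ?_
  rw [pow_add, cellValue]; ring

lemma sum_col_cellValue (j k : ℕ) :
    ∑ i ∈ Icc 1 k, (-1) ^ (i + j) * cellValue n i j =
      (-1) ^ (j + k) * colPartialAbs n j k := by
  rw [colPartialAbs, pow_add, mul_assoc, ← sum_Icc_neg_one_pow_mul_add_mul, mul_sum]
  refine sum_congr rfl fun i _ => ?_
  rw [pow_add, cellValue]; ring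

lemma rowPartialAbs_mem (hi : i ∈ Icc 1 n) {k : ℕ} (hk : k ∈ Icc 1 n) :
    1 ≤ rowPartialAbs n i k ∧ rowPartialAbs n i k ≤ (n : ℤ) ^ 2 := by
  simp only [mem_Icc] at hi hk
  have hq : 1 ≤ (k + 1) / 2 ∧ (k + 1) / 2 ≤ n := by omega
  rw [rowPartialAbs]
  rcases Nat.mod_two_eq_zero_or_one k with hr | hr <;> rw [hr] <;> push_cast <;>
    constructor <;> nlinarith

lemma colPartialAbs_mem (hj : j ∈ Icc 1 n) {k : ℕ} (hk : k ∈ Icc 1 n) :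
    1 ≤ colPartialAbs n j k ∧ colPartialAbs n j k ≤ (n : ℤ) ^ 2 := by
  simp only [mem_Icc] at hj hk
  have hq : 1 ≤ (k + 1) / 2 ∧ (k + 1) / 2 ≤ n := by omega
  rw [colPartialAbs]
  rcases Nat.mod_two_eq_zero_or_one k with hr | hr <;> rw [hr] <;> push_cast <;>
    constructor <;> nlinarith

lemma rowPartialAbs_inj {k k' : ℕ} (hkk' : k % 2 = k' % 2)
    (h : rowPartialAbs n i k = rowPartialAbs n i k') : k = k' := by
  rw [rowPartialAbs, rowPartialAbs, hkk', add_left_inj, Nat.cast_inj] at h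
  omega

lemma colPartialAbs_inj (hn : n ≠ 0) {k k' : ℕ} (hkk' : k % 2 = k' % 2)
    (h : colPartialAbs n j k = colPartialAbs n j k') : k = k' := by
  rw [colPartialAbs, colPartialAbs, hkk', add_left_inj, mul_left_inj' (by exact_mod_cast hn),
    Nat.cast_inj] at h
  omega

end cellValue

lemma sum_Icc_eq_intCast_sum {m n k : ℕ} {f : ℕ → ZMod m} {g : ℕ → ℤ}
    (hfg : ∀ j ∈ Icc 1 n, f j = g j) (hk : k ≤ n) :
    ∑ j ∈ Icc 1 k, f j = ((∑ j ∈ Icc 1 k, g j : ℤ) : ZMod m) := by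
  push_cast
  exact sum_congr rfl fun j hj => hfg j (Icc_subset_Icc_right hk hj)

lemma ZMod.nonzero_injOn_of_signed {N e : ℕ} {K : Finset ℕ} {s : ℕ → ZMod (2 * N + 2)}
    {g : ℕ → ℤ} (hs : ∀ k ∈ K, s k = (((-1) ^ (e + k) * g k : ℤ) : ZMod (2 * N + 2)))
    (hg : ∀ k ∈ K, 1 ≤ g k ∧ g k ≤ N)
    (hinj : ∀ k ∈ K, ∀ k' ∈ K, k % 2 = k' % 2 → g k = g k' → k = k') :
    (∀ k ∈ K, s k ≠ 0) ∧ Set.InjOn s K := by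
  refine ⟨fun k hk => ?_, fun k hk k' hk' h => ?_⟩
  · rw [hs k hk]
    exact intCast_neg_one_pow_mul_ne_zero _ (hg k hk).1 (hg k hk).2
  · rw [hs k hk, hs k' hk'] at h
    obtain ⟨hpar, habs⟩ := neg_one_pow_mul_eq_of_intCast_eq (hg k hk).1 (hg k hk).2
      (hg k' hk').1 (hg k' hk').2 h
    exact hinj k hk k' hk' (by omega) habs

section partialSums

variable {n : ℕ} {f : ℕ → ZMod (2 * n ^ 2 + 2)}

lemma row_partialSums {i : ℕ} (hi : i ∈ Icc 1 n)
    (hf : ∀ j ∈ Icc 1 n,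
      f j = (((-1) ^ (i + j) * cellValue n i j : ℤ) : ZMod (2 * n ^ 2 + 2))) :
    (∀ k ∈ Icc 1 n, ∑ j ∈ Icc 1 k, f j ≠ 0) ∧
      Set.InjOn (fun k => ∑ j ∈ Icc 1 k, f j) (Icc 1 n) :=
  ZMod.nonzero_injOn_of_signed
    (fun k hk => by rw [sum_Icc_eq_intCast_sum hf (mem_Icc.1 hk).2, sum_row_cellValue])
    (fun k hk => by exact_mod_cast rowPartialAbs_mem hi hk)
    (fun _ _ _ _ hpar h => rowPartialAbs_inj hpar h)

lemma col_partialSums {j : ℕ} (hj : j ∈ Icc 1 n)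
    (hf : ∀ i ∈ Icc 1 n,
      f i = (((-1) ^ (i + j) * cellValue n i j : ℤ) : ZMod (2 * n ^ 2 + 2))) :
    (∀ k ∈ Icc 1 n, ∑ i ∈ Icc 1 k, f i ≠ 0) ∧
      Set.InjOn (fun k => ∑ i ∈ Icc 1 k, f i) (Icc 1 n) :=
  ZMod.nonzero_injOn_of_signed
    (fun k hk => by rw [sum_Icc_eq_intCast_sum hf (mem_Icc.1 hk).2, sum_col_cellValue])
    (fun k hk => by exact_mod_cast colPartialAbs_mem hj hk)
    (fun _ _ _ _ hpar h => colPartialAbs_inj (by simp only [mem_Icc] at hj; omega) hpar h)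

end partialSums

def signedCellValues (n : ℕ) : Multiset (ZMod (2 * n ^ 2 + 2)) :=
  (Icc 1 n ×ˢ Icc 1 n).val.bind fun p =>
    {(cellValue n p.1 p.2 : ZMod (2 * n ^ 2 + 2)), -(cellValue n p.1 p.2 : ZMod (2 * n ^ 2 + 2))}

section signedCellValues

variable {n : ℕ}

lemma nodup_signedCellValues : (signedCellValues n).Nodup :=
  Multiset.nodup_bind_pair_intCast_neg
    (fun p hp => by
      obtain ⟨hi, hj⟩ := mem_product.1 hp
      exact_mod_cast cellValue_mem hi hj)
    (fun p hp q hq h => Prod.ext_iff.2 (cellValue_inj (mem_product.1 hp).2 (mem_product.1 hq).2 h))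

lemma mem_signedCellValues_iff (x : ZMod (2 * n ^ 2 + 2)) :
    x ∈ signedCellValues n ↔ ¬(x = 0 ∨ x = ((n ^ 2 + 1 : ℕ) : ZMod (2 * n ^ 2 + 2))) := by
  rw [← ZMod.exists_eq_intCast_or_neg_iff, signedCellValues]
  simp only [Multiset.mem_bind, mem_val, mem_product, Multiset.insert_eq_cons,
    Multiset.mem_cons, Multiset.mem_singleton]
  constructor
  · rintro ⟨p, ⟨hi, hj⟩, hx⟩
    have := cellValue_mem hi hj
    exact ⟨cellValue n p.1 p.2, this.1, by exact_mod_cast this.2, hx⟩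
  · rintro ⟨v, hv, hvn, hx⟩
    obtain ⟨i, hi, j, hj, rfl⟩ := exists_cellValue_eq hv (by exact_mod_cast hvn)
    exact ⟨(i, j), ⟨hi, hj⟩, hx⟩

lemma bind_entries_eq_signedCellValues {A : ℕ → ℕ → ZMod (2 * n ^ 2 + 2)}
    (hA : ∀ i ∈ Icc 1 n, ∀ j ∈ Icc 1 n,
      A i j = (((-1) ^ (i + j) * cellValue n i j : ℤ) : ZMod (2 * n ^ 2 + 2))) :
    (Icc 1 n ×ˢ Icc 1 n).val.bind (fun p => ({A p.1 p.2, -A p.1 p.2} :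
      Multiset (ZMod (2 * n ^ 2 + 2)))) = signedCellValues n := by
  refine Multiset.bind_congr fun p hp => ?_
  rw [mem_val, mem_product] at hp
  rw [hA p.1 hp.1 p.2 hp.2]
  rcases neg_one_pow_eq_or ℤ (p.1 + p.2) with h | h <;> rw [h]
  · rw [one_mul]
  · rw [neg_one_mul, Int.cast_neg, neg_neg, Multiset.pair_comm]

end signedCellValues

theorem stmt3_general (n : ℕ) (A : ℕ → ℕ → ZMod (2 * n ^ 2 + 2))
    (hA : ∀ i ∈ Finset.Icc 1 n, ∀ j ∈ Finset.Icc 1 n,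
      A i j = (((-1) ^ (i + j) * ((j : ℤ) + ((i : ℤ) - 1) * n) : ℤ) : ZMod (2 * n ^ 2 + 2))) :
    (∀ x : ZMod (2 * n ^ 2 + 2),
      (x = 0 ∨ x = ((n ^ 2 + 1 : ℕ) : ZMod (2 * n ^ 2 + 2))) →
      Multiset.count x
        (((Finset.Icc 1 n ×ˢ Finset.Icc 1 n).val).bind
          (fun p => ({A p.1 p.2, -A p.1 p.2} : Multiset (ZMod (2 * n ^ 2 + 2))))) = 0) ∧
    (∀ x : ZMod (2 * n ^ 2 + 2),
      ¬(x = 0 ∨ x = ((n ^ 2 + 1 : ℕ) : ZMod (2 * n ^ 2 + 2))) →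
      Multiset.count x
        (((Finset.Icc 1 n ×ˢ Finset.Icc 1 n).val).bind
          (fun p => ({A p.1 p.2, -A p.1 p.2} : Multiset (ZMod (2 * n ^ 2 + 2))))) = 1) ∧
    (∀ i ∈ Finset.Icc 1 n, ∀ k ∈ Finset.Icc 1 n,
      (∑ j ∈ Finset.Icc 1 k, A i j) ≠ 0) ∧
    (∀ i ∈ Finset.Icc 1 n, ∀ k ∈ Finset.Icc 1 n, ∀ k' ∈ Finset.Icc 1 n,
      (∑ j ∈ Finset.Icc 1 k, A i j) = (∑ j ∈ Finset.Icc 1 k', A i j) → k = k') ∧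
    (∀ j ∈ Finset.Icc 1 n, ∀ k ∈ Finset.Icc 1 n,
      (∑ i ∈ Finset.Icc 1 k, A i j) ≠ 0) ∧
    (∀ j ∈ Finset.Icc 1 n, ∀ k ∈ Finset.Icc 1 n, ∀ k' ∈ Finset.Icc 1 n,
      (∑ i ∈ Finset.Icc 1 k, A i j) = (∑ i ∈ Finset.Icc 1 k', A i j) → k = k') := by
  rw [bind_entries_eq_signedCellValues hA]
  have hrow (i : ℕ) (hi : i ∈ Icc 1 n) := row_partialSums hi (hA i hi)
  have hcol (j : ℕ) (hj : j ∈ Icc 1 n) := col_partialSums hj fun i hi => hA i hi j hj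
  exact ⟨fun x hx => Multiset.count_eq_zero.2 fun h => (mem_signedCellValues_iff x).1 h hx,
    fun x hx => Multiset.count_eq_one_of_mem nodup_signedCellValues
      ((mem_signedCellValues_iff x).2 hx),
    fun i hi => (hrow i hi).1, fun i hi _ hk _ hk' => (hrow i hi).2 hk hk',
    fun j hj => (hcol j hj).1, fun j hj _ hk _ hk' => (hcol j hj).2 hk hk'⟩

/-- Proposition 3.2 (explicit form): the matrix a_{i,j} = (−1)^{i+j}·(j + (i−1)n)
over Z_{2n²+2} is a globally simple NH₂(n;n): the entries together with their
negatives cover Z_{2n²+2} ∖ {0, n²+1} exactly once, and all natural partial sums of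
every row and column are nonzero and pairwise distinct. -/
theorem stmt3 (n : ℕ) (hn : 1 ≤ n) (A : ℕ → ℕ → ZMod (2 * n ^ 2 + 2))
    (hA : ∀ i ∈ Finset.Icc 1 n, ∀ j ∈ Finset.Icc 1 n,
      A i j = (((-1) ^ (i + j) * ((j : ℤ) + ((i : ℤ) - 1) * n) : ℤ) : ZMod (2 * n ^ 2 + 2))) :
    (∀ x : ZMod (2 * n ^ 2 + 2),
      (x = 0 ∨ x = ((n ^ 2 + 1 : ℕ) : ZMod (2 * n ^ 2 + 2))) →
      Multiset.count x
        (((Finset.Icc 1 n ×ˢ Finset.Icc 1 n).val).bind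
          (fun p => ({A p.1 p.2, -A p.1 p.2} : Multiset (ZMod (2 * n ^ 2 + 2))))) = 0) ∧
    (∀ x : ZMod (2 * n ^ 2 + 2),
      ¬(x = 0 ∨ x = ((n ^ 2 + 1 : ℕ) : ZMod (2 * n ^ 2 + 2))) →
      Multiset.count x
        (((Finset.Icc 1 n ×ˢ Finset.Icc 1 n).val).bind
          (fun p => ({A p.1 p.2, -A p.1 p.2} : Multiset (ZMod (2 * n ^ 2 + 2))))) = 1) ∧
    (∀ i ∈ Finset.Icc 1 n, ∀ k ∈ Finset.Icc 1 n,
      (∑ j ∈ Finset.Icc 1 k, A i j) ≠ 0) ∧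
    (∀ i ∈ Finset.Icc 1 n, ∀ k ∈ Finset.Icc 1 n, ∀ k' ∈ Finset.Icc 1 n,
      (∑ j ∈ Finset.Icc 1 k, A i j) = (∑ j ∈ Finset.Icc 1 k', A i j) → k = k') ∧
    (∀ j ∈ Finset.Icc 1 n, ∀ k ∈ Finset.Icc 1 n,
      (∑ i ∈ Finset.Icc 1 k, A i j) ≠ 0) ∧
    (∀ j ∈ Finset.Icc 1 n, ∀ k ∈ Finset.Icc 1 n, ∀ k' ∈ Finset.Icc 1 n,
      (∑ i ∈ Finset.Icc 1 k, A i j) = (∑ i ∈ Finset.Icc 1 k', A i j) → k = k') :=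
  stmt3_general n A hA
end

section
/- For every odd integer n ≥ 1 there exists a globally simple tight relative non-zero sum Heffter array NH_{n²}(n;n): an n×n matrix A = (a_{i,j}) with entries in Z_{3n²} such that the multiset formed by all a_{i,j} and −a_{i,j} contains every element of Z_{3n²} ∖ J exactly once, where J = 3·Z_{3n²} (the multiples of 3, the subgroup of order n²), and for every row i the partial sums a_{i,1} + ⋯ + a_{i,k} (1 ≤ k ≤ n) are nonzero and pairwise distinct in Z_{3n²}, and for every column j the partial sums a_{1,j} + ⋯ + a_{k,j} (1 ≤ k ≤ n) are nonzero and pairwise distinct in Z_{3n²}. -/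
/-! The array is `a i j = (-1)^(i+j) * (3 * ((i-1) + n*(j-1)) + 1)`. Its entries are `±(3m+1)`
with `m` running once over `0, …, n²-1`, and the elements `3m+1`, `-(3m+1)` for `m < n²` are
exactly the residues mod `3n²` not divisible by `3`, each met once.

Along a row (resp. column) the entries are, up to a global sign, `(-1)^l * (c + 3δl)` with
`c ≡ 1 mod 3` and `δ = n` (resp. `δ = 1`). The prefix sum of length `2m` is `-3δm` and that of
length `2m+1` is `c + 3δm`: sums of odd length are nonzero mod `3`, those of even length are
divisible by `3`, and two sums of the same parity differ by `3δ(m - m')` with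
`|δ(m - m')| < n²`. So the prefix sums of lengths `0, …, n` are pairwise distinct mod `3n²`. -/

open Finset

namespace HeffterArray

def altSum (c d : ℤ) (k : ℕ) : ℤ := ∑ l ∈ range k, (-1) ^ l * (c + l * d)

lemma altSum_two_mul (c d : ℤ) (m : ℕ) : altSum c d (2 * m) = -(m * d) := by
  induction m with
  | zero => simp [altSum]
  | succ m ih =>
    rw [altSum] at ih ⊢
    rw [show 2 * (m + 1) = 2 * m + 1 + 1 by ring, sum_range_succ, sum_range_succ, ih]
    simp only [pow_succ, pow_mul]
    push_cast
    ring

lemma altSum_two_mul_add_one (c d : ℤ) (m : ℕ) : altSum c d (2 * m + 1) = c + m * d := by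
  rw [altSum, sum_range_succ, ← altSum, altSum_two_mul, pow_mul, neg_one_sq, one_pow]
  push_cast
  ring

lemma eq_of_mul_modEq_mul {N δ m m' : ℕ} (hδ : 0 < δ) (hm : δ * m < N) (hm' : δ * m' < N)
    (h : (m * (3 * δ) : ℤ) ≡ m' * (3 * δ) [ZMOD 3 * N]) : m = m' := by
  have h3 : 3 * (δ * m) ≡ 3 * (δ * m') [MOD 3 * N] := by
    rw [← Int.natCast_modEq_iff]
    push_cast
    convert h using 1 <;> ring
  exact Nat.eq_of_mul_eq_mul_left hδ
    ((Nat.ModEq.mul_left_cancel' three_ne_zero h3).eq_of_lt_of_lt hm hm')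

lemma eq_of_altSum_modEq {N δ k k' : ℕ} {c : ℤ} (hc : ¬ (3 : ℤ) ∣ c) (hδ : 0 < δ)
    (hk : δ * (k / 2) < N) (hk' : δ * (k' / 2) < N)
    (h : altSum c (3 * δ) k ≡ altSum c (3 * δ) k' [ZMOD 3 * N]) : k = k' := by
  have mixed (m m' : ℕ) : ¬ c + m * (3 * δ) ≡ -(m' * (3 * δ)) [ZMOD 3 * N] := by
    intro h
    have h3 := (Int.ModEq.of_mul_right N h).dvd
    have hc3 : c = -(-(m' * (3 * δ)) - (c + m * (3 * δ))) + 3 * (-(m' * δ) - m * δ) := by ring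
    exact hc (hc3 ▸ (dvd_neg.mpr h3).add (dvd_mul_right 3 _))
  obtain ⟨m, rfl | rfl⟩ := Nat.even_or_odd' k <;>
    obtain ⟨m', rfl | rfl⟩ := Nat.even_or_odd' k'
  all_goals simp only [altSum_two_mul, altSum_two_mul_add_one] at h
  all_goals simp only [Nat.mul_div_cancel_left _ two_pos, Nat.mul_add_div two_pos, Nat.reduceDiv,
    add_zero] at hk hk'
  · rw [eq_of_mul_modEq_mul hδ hk hk' (by simpa using h.neg)]
  · exact absurd h.symm (mixed _ _)
  · exact absurd h (mixed _ _)
  · rw [eq_of_mul_modEq_mul hδ hk hk' (h.add_left_cancel' c)]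

lemma sum_Icc_one_eq_sum_range {M : Type*} [AddCommMonoid M] (f : ℕ → M) (k : ℕ) :
    ∑ j ∈ Icc 1 k, f j = ∑ l ∈ range k, f (l + 1) := by
  rw [← Ico_add_one_right_eq_Icc, range_eq_Ico, sum_Ico_add' f 0 k 1, zero_add]

lemma injOn_prefixSum {N δ K : ℕ} (f : ℕ → ZMod (3 * N)) {ε : ZMod (3 * N)}
    (hε : IsUnit ε) {c : ℤ} (hc : ¬ (3 : ℤ) ∣ c) (hδ : 0 < δ) (hK : δ * (K / 2) < N)
    (hf : ∀ l : ℕ, f (l + 1) = ε * (((-1) ^ l * (c + l * (3 * δ)) : ℤ) : ZMod (3 * N))) :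
    Set.InjOn (fun k => ∑ j ∈ Icc 1 k, f j) (Set.Iic K) := by
  have hsum (k : ℕ) : ∑ j ∈ Icc 1 k, f j = ε * (altSum c (3 * δ) k : ZMod (3 * N)) := by
    simp only [sum_Icc_one_eq_sum_range, hf, altSum, Int.cast_sum, mul_sum]
  have hbound {k : ℕ} (hk : k ≤ K) : δ * (k / 2) < N :=
    lt_of_le_of_lt (Nat.mul_le_mul_left δ (Nat.div_le_div_right hk)) hK
  intro k hk k' hk' h
  simp only [hsum, hε.mul_right_inj, ZMod.intCast_eq_intCast_iff] at h
  exact eq_of_altSum_modEq hc hδ (hbound hk) (hbound hk') (by exact_mod_cast h)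

lemma prefixSum_ne_zero {M : Type*} [AddCommMonoid M] {f : ℕ → M} {K k : ℕ}
    (h : Set.InjOn (fun k => ∑ j ∈ Icc 1 k, f j) (Set.Iic K)) (hk : k ∈ Icc 1 K) :
    ∑ j ∈ Icc 1 k, f j ≠ 0 := by
  rw [mem_Icc] at hk
  intro h0
  have : k = 0 := h (Set.mem_Iic.mpr hk.2) (Set.mem_Iic.mpr (Nat.zero_le K)) (by simpa using h0)
  omega

def oneModThree (N m : ℕ) : ZMod (3 * N) := ((3 * m + 1 : ℕ) : ZMod (3 * N))

section Residues

variable {N : ℕ}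

lemma castHom_oneModThree (m : ℕ) :
    ZMod.castHom (dvd_mul_right 3 N) (ZMod 3) (oneModThree N m) = 1 := by
  rw [oneModThree, map_natCast, Nat.cast_add, Nat.cast_mul, ZMod.natCast_self, zero_mul,
    zero_add, Nat.cast_one]

lemma oneModThree_ne_neg (m m' : ℕ) : oneModThree N m ≠ -oneModThree N m' := by
  intro h
  have := congrArg (ZMod.castHom (dvd_mul_right 3 N) (ZMod 3)) h
  rw [map_neg, castHom_oneModThree, castHom_oneModThree] at this
  exact absurd this (by decide)

lemma oneModThree_inj {m m' : ℕ} (hm : m < N) (hm' : m' < N)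
    (h : oneModThree N m = oneModThree N m') : m = m' := by
  have := congrArg ZMod.val h
  simp only [oneModThree, ZMod.val_natCast] at this
  rw [Nat.mod_eq_of_lt (by omega), Nat.mod_eq_of_lt (by omega)] at this
  omega

lemma exists_oneModThree_iff [NeZero N] (x : ZMod (3 * N)) :
    (∃ m < N, x = oneModThree N m ∨ x = -oneModThree N m) ↔
      ¬ ∃ y : ZMod (3 * N), x = ((3 : ℕ) : ZMod (3 * N)) * y := by
  constructor
  · rintro ⟨m, -, hx⟩ ⟨y, rfl⟩
    have h0 : ZMod.castHom (dvd_mul_right 3 N) (ZMod 3) (((3 : ℕ) : ZMod (3 * N)) * y) = 0 := by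
      rw [map_mul, map_natCast, ZMod.natCast_self, zero_mul]
    rcases hx with hx | hx <;> rw [hx, ← neg_eq_zero.eq] at h0 <;>
      simp only [map_neg, castHom_oneModThree] at h0 <;> exact absurd h0 (by decide)
  · intro hx
    have hval : ((x.val : ℕ) : ZMod (3 * N)) = x := ZMod.natCast_zmod_val x
    have hlt : x.val < 3 * N := ZMod.val_lt x
    have h3 : x.val % 3 ≠ 0 := fun h =>
      hx ⟨((x.val / 3 : ℕ) : ZMod (3 * N)), by
        rw [← Nat.cast_mul, Nat.mul_div_cancel' (Nat.dvd_of_mod_eq_zero h), hval]⟩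
    by_cases h1 : x.val % 3 = 1
    · refine ⟨x.val / 3, by omega, Or.inl ?_⟩
      rw [oneModThree, show 3 * (x.val / 3) + 1 = x.val by omega, hval]
    · refine ⟨(3 * N - x.val) / 3, by omega, Or.inr ?_⟩
      rw [oneModThree, show 3 * ((3 * N - x.val) / 3) + 1 = 3 * N - x.val by omega,
        Nat.cast_sub hlt.le, ZMod.natCast_self, hval, zero_sub, neg_neg]

def signedResidues (N : ℕ) : Multiset (ZMod (3 * N)) :=
  (range N).val.bind fun m => {oneModThree N m, -oneModThree N m}

lemma nodup_signedResidues : (signedResidues N).Nodup := by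
  refine Multiset.nodup_bind.mpr
    ⟨fun m _ => ?_, (range N).nodup.pairwise fun m hm m' hm' hne => ?_⟩
  · simpa using oneModThree_ne_neg m m
  · rw [mem_val, mem_range] at hm hm'
    have hne' : oneModThree N m ≠ oneModThree N m' := fun h => hne (oneModThree_inj hm hm' h)
    simp [Function.onFun, Multiset.disjoint_left, hne', oneModThree_ne_neg,
      (oneModThree_ne_neg m' m).symm]

lemma count_signedResidues [NeZero N] (x : ZMod (3 * N)) :
    (signedResidues N).count x =
      if ∃ y : ZMod (3 * N), x = ((3 : ℕ) : ZMod (3 * N)) * y then 0 else 1 := by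
  have hmem :
      x ∈ signedResidues N ↔ ¬ ∃ y : ZMod (3 * N), x = ((3 : ℕ) : ZMod (3 * N)) * y := by
    rw [← exists_oneModThree_iff, signedResidues, Multiset.mem_bind]
    simp
  split_ifs with h
  · exact Multiset.count_eq_zero.mpr (hmem.not.mpr (not_not.mpr h))
  · exact Multiset.count_eq_one_of_mem nodup_signedResidues (hmem.mpr h)

end Residues

lemma pair_neg_one_pow_mul {R : Type*} [Ring R] (e : ℕ) (a : R) :
    ({(-1) ^ e * a, -((-1) ^ e * a)} : Multiset R) = {a, -a} := by
  rcases neg_one_pow_eq_or R e with h | h <;> simp only [h, one_mul, neg_one_mul, neg_neg]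
  exact Multiset.pair_comm _ _

def cellIndex (n : ℕ) (p : ℕ × ℕ) : ℕ := (p.1 - 1) + n * (p.2 - 1)

lemma injOn_cellIndex (n : ℕ) : Set.InjOn (cellIndex n) ↑(Icc 1 n ×ˢ Icc 1 n) := by
  rintro ⟨i, j⟩ hij ⟨i', j'⟩ hij' h
  simp only [coe_product, Set.mem_prod, coe_Icc, Set.mem_Icc, cellIndex] at hij hij' h
  have hi : i - 1 = i' - 1 := by
    simpa [Nat.add_mul_mod_self_left, Nat.mod_eq_of_lt (by omega : i - 1 < n),
      Nat.mod_eq_of_lt (by omega : i' - 1 < n)] using congrArg (· % n) h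
  have hj : n * (j - 1) = n * (j' - 1) := by omega
  have := Nat.eq_of_mul_eq_mul_left (by omega) hj
  ext <;> simp only <;> omega

lemma image_cellIndex (n : ℕ) : (Icc 1 n ×ˢ Icc 1 n).image (cellIndex n) = range (n ^ 2) := by
  ext m
  simp only [mem_image, mem_product, mem_Icc, mem_range, Prod.exists, cellIndex]
  constructor
  · rintro ⟨i, j, ⟨⟨hi, hi'⟩, hj, hj'⟩, rfl⟩
    calc i - 1 + n * (j - 1) < n + n * (j - 1) := by omega
      _ = n * j := by rw [add_comm, ← Nat.mul_add_one, Nat.sub_add_cancel hj]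
      _ ≤ n ^ 2 := by rw [sq]; exact Nat.mul_le_mul_left n hj'
  · intro hm
    have hn : 0 < n := by rcases n with _ | n <;> simp_all
    refine ⟨m % n + 1, m / n + 1,
      ⟨⟨Nat.le_add_left _ _, Nat.mod_lt m hn⟩, Nat.le_add_left _ _, ?_⟩, ?_⟩
    · exact Nat.div_lt_of_lt_mul (by rwa [← sq])
    · simp [Nat.mod_add_div]

def heffterArray (n i j : ℕ) : ZMod (3 * n ^ 2) :=
  (-1) ^ (i + j) * oneModThree (n ^ 2) (cellIndex n (i, j))

lemma bind_pairs_heffterArray (n : ℕ) :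
    (Icc 1 n ×ˢ Icc 1 n).val.bind
        (fun p => ({heffterArray n p.1 p.2, -heffterArray n p.1 p.2} : Multiset _)) =
      signedResidues (n ^ 2) := by
  simp only [heffterArray, pair_neg_one_pow_mul]
  rw [← Multiset.bind_map (f := cellIndex n)
      (n := fun m => {oneModThree (n ^ 2) m, -oneModThree (n ^ 2) m}),
    ← image_val_of_injOn (injOn_cellIndex n), image_cellIndex, signedResidues]

lemma heffterArray_succ_right (n i l : ℕ) :
    heffterArray n i (l + 1) = (-1) ^ (i + 1) *
      (((-1) ^ l * ((3 * (i - 1 : ℕ) + 1 : ℤ) + l * (3 * n)) : ℤ) : ZMod (3 * n ^ 2)) := by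
  simp only [heffterArray, oneModThree, cellIndex, Nat.add_sub_cancel]
  push_cast
  ring

lemma heffterArray_succ_left (n j l : ℕ) :
    heffterArray n (l + 1) j = (-1) ^ (j + 1) *
      (((-1) ^ l * ((3 * (n * (j - 1) : ℕ) + 1 : ℤ) + l * (3 * (1 : ℕ))) : ℤ) :
        ZMod (3 * n ^ 2)) := by
  simp only [heffterArray, oneModThree, cellIndex, Nat.add_sub_cancel]
  push_cast
  ring

end HeffterArray

open HeffterArray

theorem stmt5_general (n : ℕ) (hn : 1 ≤ n) :
    ∃ A : ℕ → ℕ → ZMod (3 * n ^ 2),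
      (∀ x : ZMod (3 * n ^ 2),
        (∃ y : ZMod (3 * n ^ 2), x = ((3 : ℕ) : ZMod (3 * n ^ 2)) * y) →
        Multiset.count x
          (((Finset.Icc 1 n ×ˢ Finset.Icc 1 n).val).bind
            (fun p => ({A p.1 p.2, -A p.1 p.2} : Multiset (ZMod (3 * n ^ 2))))) = 0) ∧
      (∀ x : ZMod (3 * n ^ 2),
        ¬(∃ y : ZMod (3 * n ^ 2), x = ((3 : ℕ) : ZMod (3 * n ^ 2)) * y) →
        Multiset.count x
          (((Finset.Icc 1 n ×ˢ Finset.Icc 1 n).val).bind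
            (fun p => ({A p.1 p.2, -A p.1 p.2} : Multiset (ZMod (3 * n ^ 2))))) = 1) ∧
      (∀ i ∈ Finset.Icc 1 n, ∀ k ∈ Finset.Icc 1 n,
        (∑ j ∈ Finset.Icc 1 k, A i j) ≠ 0) ∧
      (∀ i ∈ Finset.Icc 1 n, ∀ k ∈ Finset.Icc 1 n, ∀ k' ∈ Finset.Icc 1 n,
        (∑ j ∈ Finset.Icc 1 k, A i j) = (∑ j ∈ Finset.Icc 1 k', A i j) → k = k') ∧
      (∀ j ∈ Finset.Icc 1 n, ∀ k ∈ Finset.Icc 1 n,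
        (∑ i ∈ Finset.Icc 1 k, A i j) ≠ 0) ∧
      (∀ j ∈ Finset.Icc 1 n, ∀ k ∈ Finset.Icc 1 n, ∀ k' ∈ Finset.Icc 1 n,
        (∑ i ∈ Finset.Icc 1 k, A i j) = (∑ i ∈ Finset.Icc 1 k', A i j) → k = k') := by
  have : NeZero (n ^ 2) := ⟨by positivity⟩
  have hhalf : n / 2 < n := Nat.div_lt_self hn one_lt_two
  have hrow (i : ℕ) : Set.InjOn (fun k => ∑ j ∈ Icc 1 k, heffterArray n i j) (Set.Iic n) :=
    injOn_prefixSum _ (isUnit_neg_one.pow _) (by omega) hn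
      (by rw [sq]; exact Nat.mul_lt_mul_of_pos_left hhalf hn) (heffterArray_succ_right n i)
  have hcol (j : ℕ) : Set.InjOn (fun k => ∑ i ∈ Icc 1 k, heffterArray n i j) (Set.Iic n) :=
    injOn_prefixSum _ (isUnit_neg_one.pow _) (by omega) one_pos
      (by nlinarith) (heffterArray_succ_left n j)
  refine ⟨heffterArray n, fun x hx => ?_, fun x hx => ?_,
    fun i _ k hk => prefixSum_ne_zero (hrow i) hk,
    fun i _ k hk k' hk' h => hrow i (mem_Icc.mp hk).2 (mem_Icc.mp hk').2 h,
    fun j _ k hk => prefixSum_ne_zero (hcol j) hk,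
    fun j _ k hk k' hk' h => hcol j (mem_Icc.mp hk).2 (mem_Icc.mp hk').2 h⟩
  · rw [bind_pairs_heffterArray, count_signedResidues, if_pos hx]
  · rw [bind_pairs_heffterArray, count_signedResidues, if_neg hx]

/-- Proposition 3.7: for every odd n ≥ 1 there exists a globally simple tight
relative non-zero sum Heffter array NH_{n²}(n;n) over Z_{3n²}, where the
subgroup J of order n² consists of the multiples of 3. -/
theorem stmt5 (n : ℕ) (hn : 1 ≤ n) (hodd : Odd n) :
    ∃ A : ℕ → ℕ → ZMod (3 * n ^ 2),
      (∀ x : ZMod (3 * n ^ 2),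
        (∃ y : ZMod (3 * n ^ 2), x = ((3 : ℕ) : ZMod (3 * n ^ 2)) * y) →
        Multiset.count x
          (((Finset.Icc 1 n ×ˢ Finset.Icc 1 n).val).bind
            (fun p => ({A p.1 p.2, -A p.1 p.2} : Multiset (ZMod (3 * n ^ 2))))) = 0) ∧
      (∀ x : ZMod (3 * n ^ 2),
        ¬(∃ y : ZMod (3 * n ^ 2), x = ((3 : ℕ) : ZMod (3 * n ^ 2)) * y) →
        Multiset.count x
          (((Finset.Icc 1 n ×ˢ Finset.Icc 1 n).val).bind
            (fun p => ({A p.1 p.2, -A p.1 p.2} : Multiset (ZMod (3 * n ^ 2))))) = 1) ∧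
      (∀ i ∈ Finset.Icc 1 n, ∀ k ∈ Finset.Icc 1 n,
        (∑ j ∈ Finset.Icc 1 k, A i j) ≠ 0) ∧
      (∀ i ∈ Finset.Icc 1 n, ∀ k ∈ Finset.Icc 1 n, ∀ k' ∈ Finset.Icc 1 n,
        (∑ j ∈ Finset.Icc 1 k, A i j) = (∑ j ∈ Finset.Icc 1 k', A i j) → k = k') ∧
      (∀ j ∈ Finset.Icc 1 n, ∀ k ∈ Finset.Icc 1 n,
        (∑ i ∈ Finset.Icc 1 k, A i j) ≠ 0) ∧
      (∀ j ∈ Finset.Icc 1 n, ∀ k ∈ Finset.Icc 1 n, ∀ k' ∈ Finset.Icc 1 n,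
        (∑ i ∈ Finset.Icc 1 k, A i j) = (∑ i ∈ Finset.Icc 1 k', A i j) → k = k') :=
  stmt5_general n hn
end

section
/- For every odd integer n ≥ 1 there exists a globally simple tight relative non-zero sum Heffter array NH_{2n²}(n;n): an n×n matrix A = (a_{i,j}) with entries in Z_{4n²} such that the multiset formed by all a_{i,j} and −a_{i,j} contains every element of Z_{4n²} ∖ J exactly once, where J = 2·Z_{4n²} (the even residues, the subgroup of order 2n²), and for every row i the partial sums a_{i,1} + ⋯ + a_{i,k} (1 ≤ k ≤ n) are nonzero and pairwise distinct in Z_{4n²}, and for every column j the partial sums a_{1,j} + ⋯ + a_{k,j} (1 ≤ k ≤ n) are nonzero and pairwise distinct in Z_{4n²}. -/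
/-!
Write the odd numbers `1, 3, …, 2n² - 1` row by row into the `n × n` array and give the entry
in cell `(i, j)` the sign `(-1)^(i+j)`. Every odd residue modulo `4n²` is `±u` for exactly one
odd `u < 2n²`, so the entries and their negatives are exactly the odd residues, each once.

Up to a global sign, every row and every column is an alternating sequence `-b₁, b₂, -b₃, …`
with `0 < b₁ < b₂ < ⋯ < 2n²`. Its partial sums are negative and decreasing at odd lengths,
positive and increasing at even lengths, and bounded in absolute value by the last term `b_k`.
So they are nonzero and pairwise distinct integers of absolute value below `2n²`, and remain
so modulo `4n²`.
-/

open Finset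

namespace ZMod

lemma intCast_eq_zero_iff_of_abs_lt {N : ℕ} {a : ℤ} (h : |a| < N) :
    (a : ZMod N) = 0 ↔ a = 0 :=
  ⟨fun h0 => Int.eq_zero_of_abs_lt_dvd ((intCast_zmod_eq_zero_iff_dvd a N).mp h0) h,
    by rintro rfl; simp⟩

lemma intCast_eq_intCast_iff_of_abs_sub_lt {N : ℕ} {a b : ℤ} (h : |a - b| < N) :
    (a : ZMod N) = b ↔ a = b := by
  rw [← sub_eq_zero, ← Int.cast_sub, intCast_eq_zero_iff_of_abs_lt h, sub_eq_zero]

lemma exists_intCast_eq_two_mul_iff_even {N : ℕ} (hN : 2 ∣ N) (a : ℤ) :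
    (∃ y : ZMod N, (a : ZMod N) = ((2 : ℕ) : ZMod N) * y) ↔ Even a := by
  constructor
  · rintro ⟨y, hy⟩
    have h2 := congrArg (castHom hN (ZMod 2)) hy
    rw [map_intCast, map_mul, map_natCast, natCast_self, zero_mul,
      intCast_zmod_eq_zero_iff_dvd] at h2
    exact even_iff_two_dvd.mpr (by exact_mod_cast h2)
  · rintro ⟨c, rfl⟩
    exact ⟨c, by push_cast; ring⟩

end ZMod

def altPartialSum (b : ℕ → ℤ) (k : ℕ) : ℤ := ∑ j ∈ Icc 1 k, (-1) ^ j * b j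

namespace altPartialSum

variable {b : ℕ → ℤ}

@[simp] lemma one : altPartialSum b 1 = -b 1 := by simp [altPartialSum]

lemma succ (k : ℕ) : altPartialSum b (k + 1) = altPartialSum b k + (-1) ^ (k + 1) * b (k + 1) :=
  sum_Icc_succ_top (by omega) _

lemma add_two (k : ℕ) :
    altPartialSum b (k + 2) = altPartialSum b k + (-1) ^ k * (b (k + 2) - b (k + 1)) := by
  rw [succ, succ]; ring

lemma odd_mem_Icc (hb : StrictMono b) (l : ℕ) :
    altPartialSum b (2 * l + 1) ∈ Set.Icc (-b (2 * l + 1)) (-b 1) := by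
  induction l with
  | zero => simp
  | succ l ih =>
    have h₁ := hb (show 2 * l + 1 < 2 * l + 2 by omega)
    have h₂ := hb (show 2 * l + 2 < 2 * l + 3 by omega)
    rw [show 2 * (l + 1) + 1 = 2 * l + 1 + 2 by ring, add_two, (odd_two_mul_add_one l).neg_one_pow]
    constructor <;> linarith [ih.1, ih.2]

lemma even_mem_Ioo (hb : StrictMono b) (hb1 : 0 < b 1) (l : ℕ) :
    altPartialSum b (2 * l + 2) ∈ Set.Ioo 0 (b (2 * l + 2)) := by
  have h := odd_mem_Icc hb l
  have h₁ := hb (show 2 * l + 1 < 2 * l + 2 by omega)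
  rw [succ, pow_succ, (odd_two_mul_add_one l).neg_one_pow]
  constructor <;> linarith [h.1, h.2]

lemma exists_eq_two_mul_add_one_or_two {k : ℕ} (hk : 1 ≤ k) :
    ∃ l, k = 2 * l + 1 ∨ k = 2 * l + 2 :=
  ⟨(k - 1) / 2, by omega⟩

lemma abs_le (hb : StrictMono b) (hb1 : 0 < b 1) {k : ℕ} (hk : 1 ≤ k) :
    |altPartialSum b k| ≤ b k := by
  obtain ⟨l, rfl | rfl⟩ := exists_eq_two_mul_add_one_or_two hk
  · have h := odd_mem_Icc hb l
    rw [abs_of_neg (by linarith [h.2])]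
    linarith [h.1]
  · have h := even_mem_Ioo hb hb1 l
    rw [abs_of_pos h.1]
    exact h.2.le

lemma ne_zero (hb : StrictMono b) (hb1 : 0 < b 1) {k : ℕ} (hk : 1 ≤ k) :
    altPartialSum b k ≠ 0 := by
  obtain ⟨l, rfl | rfl⟩ := exists_eq_two_mul_add_one_or_two hk
  · linarith [(odd_mem_Icc hb l).2]
  · exact (even_mem_Ioo hb hb1 l).1.ne'

lemma strictAnti_odd (hb : StrictMono b) : StrictAnti fun l => altPartialSum b (2 * l + 1) :=
  strictAnti_nat_of_succ_lt fun l => by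
    rw [show 2 * (l + 1) + 1 = 2 * l + 1 + 2 by ring, add_two, (odd_two_mul_add_one l).neg_one_pow]
    linarith [hb (show 2 * l + 2 < 2 * l + 1 + 2 by omega)]

lemma strictMono_even (hb : StrictMono b) : StrictMono fun l => altPartialSum b (2 * l + 2) :=
  strictMono_nat_of_lt_succ fun l => by
    rw [show 2 * (l + 1) + 2 = 2 * l + 2 + 2 by ring, add_two (2 * l + 2),
      Even.neg_one_pow ⟨l + 1, by ring⟩]
    linarith [hb (show 2 * l + 2 + 1 < 2 * l + 2 + 2 by omega)]

lemma injOn (hb : StrictMono b) (hb1 : 0 < b 1) : Set.InjOn (altPartialSum b) (Set.Ici 1) := by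
  intro k hk k' hk' h
  obtain ⟨l, rfl | rfl⟩ := exists_eq_two_mul_add_one_or_two hk <;>
    obtain ⟨l', rfl | rfl⟩ := exists_eq_two_mul_add_one_or_two hk'
  · rw [(strictAnti_odd hb).injective h]
  · linarith [(odd_mem_Icc hb l).2, (even_mem_Ioo hb hb1 l').1]
  · linarith [(odd_mem_Icc hb l').2, (even_mem_Ioo hb hb1 l).1]
  · rw [(strictMono_even hb).injective h]

lemma two_mul_abs_lt {N K : ℕ} (hb : StrictMono b) (hb1 : 0 < b 1) (hK : 2 * b K < N) {k : ℕ}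
    (hk : k ∈ Icc 1 K) : 2 * |altPartialSum b k| < N := by
  rw [mem_Icc] at hk
  linarith [abs_le hb hb1 hk.1, hb.monotone hk.2]

lemma intCast_neg_one_pow_mul_ne_zero {N K : ℕ} (hb : StrictMono b) (hb1 : 0 < b 1)
    (hK : 2 * b K < N) (e : ℕ) {k : ℕ} (hk : k ∈ Icc 1 K) :
    (((-1) ^ e * altPartialSum b k : ℤ) : ZMod N) ≠ 0 := by
  have h := two_mul_abs_lt hb hb1 hK hk
  push_cast
  rw [ne_eq, neg_one_pow_mul_eq_zero_iff,
    ZMod.intCast_eq_zero_iff_of_abs_lt (by linarith [abs_nonneg (altPartialSum b k)])]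
  exact ne_zero hb hb1 (mem_Icc.mp hk).1

lemma intCast_neg_one_pow_mul_injOn {N K : ℕ} (hb : StrictMono b) (hb1 : 0 < b 1)
    (hK : 2 * b K < N) (e : ℕ) :
    Set.InjOn (fun k => (((-1) ^ e * altPartialSum b k : ℤ) : ZMod N)) ↑(Icc 1 K) := by
  intro k hk k' hk' h
  have h₁ := two_mul_abs_lt hb hb1 hK hk
  have h₂ := two_mul_abs_lt hb hb1 hK hk'
  push_cast at h
  rw [((isUnit_neg_one (α := ZMod N)).pow e).mul_right_inj,
    ZMod.intCast_eq_intCast_iff_of_abs_sub_lt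
      (by linarith [abs_sub (altPartialSum b k) (altPartialSum b k')])] at h
  exact injOn hb hb1 (mem_Icc.mp hk).1 (mem_Icc.mp hk').1 h

end altPartialSum

namespace Multiset

lemma pair_neg_one_pow_mul {R : Type*} [Ring R] (e : ℕ) (a : R) :
    ({(-1) ^ e * a, -((-1) ^ e * a)} : Multiset R) = {a, -a} := by
  rcases neg_one_pow_eq_or R e with h | h <;> rw [h]
  · simp
  · rw [neg_one_mul, neg_neg, pair_comm]

lemma nodup_bind_pair_neg {ι G : Type*} [AddGroup G] {s : Finset ι} {f : ι → G}
    (hf : Set.InjOn f s) (hneg : ∀ p ∈ s, ∀ q ∈ s, f p ≠ -f q) :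
    (s.val.bind fun p => ({f p, -f p} : Multiset G)).Nodup := by
  rw [nodup_bind]
  refine ⟨fun p hp => by simpa using hneg p hp p hp, s.nodup.pairwise fun p hp q hq hpq => ?_⟩
  have hfpq : f p ≠ f q := fun h => hpq (hf hp hq h)
  simp [Function.onFun, Ne.symm hfpq, hneg q hq p hp, (hneg p hp q hq).symm]

end Multiset

namespace HeffterArray

def cellLabel (n i j : ℕ) : ℤ := 2 * n * ((i : ℤ) - 1) + 2 * j - 1

def entry (n i j : ℕ) : ℤ := (-1) ^ (i + j) * cellLabel n i j

variable {n : ℕ}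

lemma cellLabel_strictMono_right (n i : ℕ) : StrictMono (cellLabel n i) := fun j j' h => by
  have : (j : ℤ) < j' := by exact_mod_cast h
  unfold cellLabel; linarith

lemma cellLabel_strictMono_left (hn : 1 ≤ n) (j : ℕ) : StrictMono fun i => cellLabel n i j :=
  fun i i' h => by
    have : (i : ℤ) < i' := by exact_mod_cast h
    have : (1 : ℤ) ≤ n := by exact_mod_cast hn
    unfold cellLabel; nlinarith

lemma cellLabel_pos {i j : ℕ} (hi : 1 ≤ i) (hj : 1 ≤ j) : 0 < cellLabel n i j := by
  have : (1 : ℤ) ≤ i := by exact_mod_cast hi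
  have : (1 : ℤ) ≤ j := by exact_mod_cast hj
  unfold cellLabel; nlinarith

lemma two_mul_cellLabel_lt {i j : ℕ} (hi : i ≤ n) (hj : j ≤ n) :
    2 * cellLabel n i j < ((4 * n ^ 2 : ℕ) : ℤ) := by
  have : (i : ℤ) ≤ n := by exact_mod_cast hi
  have : (j : ℤ) ≤ n := by exact_mod_cast hj
  unfold cellLabel; push_cast; nlinarith

lemma odd_cellLabel (n i j : ℕ) : Odd (cellLabel n i j) :=
  ⟨n * ((i : ℤ) - 1) + j - 1, by unfold cellLabel; ring⟩

lemma cellLabel_injOn :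
    Set.InjOn (fun p : ℕ × ℕ => cellLabel n p.1 p.2) ↑(Icc 1 n ×ˢ Icc 1 n) := by
  rintro ⟨i, j⟩ hp ⟨i', j'⟩ hq h
  simp only [coe_product, coe_Icc, Set.mem_prod, Set.mem_Icc] at hp hq
  simp only [cellLabel] at h
  have hdvd : (n : ℤ) ∣ (j' : ℤ) - j := ⟨i - i', by linarith⟩
  have hj : (j' : ℤ) - j = 0 := Int.eq_zero_of_abs_lt_dvd hdvd (by rw [abs_lt]; omega)
  have hi : (n : ℤ) * (i - i') = 0 := by linarith
  rw [mul_eq_zero] at hi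
  simp only [Prod.mk.injEq]
  omega

lemma exists_cellLabel_eq {u : ℤ} (hodd : Odd u) (hpos : 0 < u) (hlt : u < 2 * n ^ 2) :
    ∃ p ∈ Icc 1 n ×ˢ Icc 1 n, cellLabel n p.1 p.2 = u := by
  obtain ⟨t, rfl⟩ := hodd
  have hn : (0 : ℤ) < n := by nlinarith
  have hdiv := Int.mul_ediv_add_emod t n
  have hq0 : 0 ≤ t / n := Int.ediv_nonneg (by omega) hn.le
  have hqn : t / n < n := Int.ediv_lt_of_lt_mul hn (by nlinarith)
  have hr0 := Int.emod_nonneg t hn.ne'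
  have hrn := Int.emod_lt_of_pos t hn
  refine ⟨((t / n).toNat + 1, (t % n).toNat + 1), ?_, ?_⟩
  · simp only [mem_product, mem_Icc]; omega
  · simp only [cellLabel]; push_cast
    rw [Int.toNat_of_nonneg hq0, Int.toNat_of_nonneg hr0]
    linarith

def signedEntries (n : ℕ) (A : ℕ → ℕ → ZMod (4 * n ^ 2)) : Multiset (ZMod (4 * n ^ 2)) :=
  (Icc 1 n ×ˢ Icc 1 n).val.bind fun p => {A p.1 p.2, -A p.1 p.2}

lemma signedEntries_entry (n : ℕ) :
    signedEntries n (fun i j => (entry n i j : ZMod (4 * n ^ 2))) =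
      signedEntries n (fun i j => (cellLabel n i j : ZMod (4 * n ^ 2))) :=
  Multiset.bind_congr fun p _ => by
    simp only [entry, Int.cast_mul, Int.cast_pow, Int.cast_neg, Int.cast_one]
    exact Multiset.pair_neg_one_pow_mul _ _

lemma nodup_signedEntries (n : ℕ) :
    (signedEntries n fun i j => (entry n i j : ZMod (4 * n ^ 2))).Nodup := by
  rw [signedEntries_entry]
  have hL : ∀ p ∈ Icc 1 n ×ˢ Icc 1 n,
      0 < cellLabel n p.1 p.2 ∧ 2 * cellLabel n p.1 p.2 < ((4 * n ^ 2 : ℕ) : ℤ) := by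
    intro p hp
    simp only [mem_product, mem_Icc] at hp
    exact ⟨cellLabel_pos hp.1.1 hp.2.1, two_mul_cellLabel_lt hp.1.2 hp.2.2⟩
  refine Multiset.nodup_bind_pair_neg (fun p hp q hq h => cellLabel_injOn hp hq ?_)
    fun p hp q hq h => ?_
  · obtain ⟨hp₀, hp₁⟩ := hL p hp
    obtain ⟨hq₀, hq₁⟩ := hL q hq
    rwa [ZMod.intCast_eq_intCast_iff_of_abs_sub_lt (abs_lt.mpr ⟨by linarith, by linarith⟩)] at h
  · obtain ⟨hp₀, hp₁⟩ := hL p hp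
    obtain ⟨hq₀, hq₁⟩ := hL q hq
    rw [eq_neg_iff_add_eq_zero, ← Int.cast_add,
      ZMod.intCast_eq_zero_iff_of_abs_lt (abs_lt.mpr ⟨by linarith, by linarith⟩)] at h
    linarith

lemma mem_signedEntries_iff (hn : 1 ≤ n) (x : ZMod (4 * n ^ 2)) :
    x ∈ signedEntries n (fun i j => (entry n i j : ZMod (4 * n ^ 2))) ↔
      ¬∃ y, x = ((2 : ℕ) : ZMod (4 * n ^ 2)) * y := by
  have h2 : 2 ∣ 4 * n ^ 2 := ⟨2 * n ^ 2, by ring⟩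
  rw [signedEntries_entry, signedEntries, Multiset.mem_bind]
  simp only [Multiset.insert_eq_cons, Multiset.mem_cons, Multiset.mem_singleton]
  constructor
  · rintro ⟨p, -, rfl | rfl⟩
    · rw [ZMod.exists_intCast_eq_two_mul_iff_even h2, Int.not_even_iff_odd]
      exact odd_cellLabel ..
    · rw [← Int.cast_neg, ZMod.exists_intCast_eq_two_mul_iff_even h2, even_neg,
        Int.not_even_iff_odd]
      exact odd_cellLabel ..
  · intro hx
    have : NeZero (4 * n ^ 2) := ⟨by positivity⟩
    have hle := x.natAbs_valMinAbs_le
    rw [← x.coe_valMinAbs, ZMod.exists_intCast_eq_two_mul_iff_even h2, Int.not_even_iff_odd] at hx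
    -- an odd representative cannot reach the bound `2 n²`, which is even
    have hv : |x.valMinAbs| < 2 * n ^ 2 := by
      rw [Int.odd_iff] at hx
      have : ((n ^ 2 : ℕ) : ℤ) = (n : ℤ) ^ 2 := by push_cast; ring
      rw [abs_lt]
      omega
    rw [abs_lt] at hv
    have hv0 : x.valMinAbs ≠ 0 := by rintro h; simp [h] at hx
    rcases lt_or_gt_of_ne hv0 with hneg | hpos
    · obtain ⟨p, hp, hpv⟩ := exists_cellLabel_eq (n := n) hx.neg (by omega) (by omega)
      exact ⟨p, hp, Or.inr (by rw [hpv, Int.cast_neg, neg_neg, x.coe_valMinAbs])⟩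
    · obtain ⟨p, hp, hpv⟩ := exists_cellLabel_eq hx hpos hv.2
      exact ⟨p, hp, Or.inl (by rw [hpv, x.coe_valMinAbs])⟩

lemma sum_entry_row (n i k : ℕ) :
    ∑ j ∈ Icc 1 k, entry n i j = (-1) ^ i * altPartialSum (cellLabel n i) k := by
  rw [altPartialSum, mul_sum]
  refine sum_congr rfl fun j _ => ?_
  rw [entry, pow_add]; ring

lemma sum_entry_col (n j k : ℕ) :
    ∑ i ∈ Icc 1 k, entry n i j = (-1) ^ j * altPartialSum (fun i => cellLabel n i j) k := by
  rw [altPartialSum, mul_sum]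
  refine sum_congr rfl fun i _ => ?_
  rw [entry, pow_add]; ring

lemma rowPartialSum_ne_zero {i k : ℕ} (hi : i ∈ Icc 1 n) (hk : k ∈ Icc 1 n) :
    ∑ j ∈ Icc 1 k, (entry n i j : ZMod (4 * n ^ 2)) ≠ 0 := by
  rw [mem_Icc] at hi
  rw [← Int.cast_sum, sum_entry_row]
  exact altPartialSum.intCast_neg_one_pow_mul_ne_zero (cellLabel_strictMono_right n i)
    (cellLabel_pos hi.1 le_rfl) (two_mul_cellLabel_lt hi.2 le_rfl) i hk

lemma rowPartialSum_injOn {i : ℕ} (hi : i ∈ Icc 1 n) :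
    Set.InjOn (fun k => ∑ j ∈ Icc 1 k, (entry n i j : ZMod (4 * n ^ 2))) ↑(Icc 1 n) := by
  rw [mem_Icc] at hi
  simp only [← Int.cast_sum, sum_entry_row]
  exact altPartialSum.intCast_neg_one_pow_mul_injOn (cellLabel_strictMono_right n i)
    (cellLabel_pos hi.1 le_rfl) (two_mul_cellLabel_lt hi.2 le_rfl) i

lemma colPartialSum_ne_zero {j k : ℕ} (hj : j ∈ Icc 1 n) (hk : k ∈ Icc 1 n) :
    ∑ i ∈ Icc 1 k, (entry n i j : ZMod (4 * n ^ 2)) ≠ 0 := by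
  rw [mem_Icc] at hj
  rw [← Int.cast_sum, sum_entry_col]
  exact altPartialSum.intCast_neg_one_pow_mul_ne_zero
    (cellLabel_strictMono_left (hj.1.trans hj.2) j) (cellLabel_pos le_rfl hj.1)
    (two_mul_cellLabel_lt le_rfl hj.2) j hk

lemma colPartialSum_injOn {j : ℕ} (hj : j ∈ Icc 1 n) :
    Set.InjOn (fun k => ∑ i ∈ Icc 1 k, (entry n i j : ZMod (4 * n ^ 2))) ↑(Icc 1 n) := by
  rw [mem_Icc] at hj
  simp only [← Int.cast_sum, sum_entry_col]
  exact altPartialSum.intCast_neg_one_pow_mul_injOn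
    (cellLabel_strictMono_left (hj.1.trans hj.2) j) (cellLabel_pos le_rfl hj.1)
    (two_mul_cellLabel_lt le_rfl hj.2) j

end HeffterArray

theorem stmt6_general (n : ℕ) (hn : 1 ≤ n) :
    ∃ A : ℕ → ℕ → ZMod (4 * n ^ 2),
      (∀ x : ZMod (4 * n ^ 2),
        (∃ y : ZMod (4 * n ^ 2), x = ((2 : ℕ) : ZMod (4 * n ^ 2)) * y) →
        Multiset.count x
          (((Finset.Icc 1 n ×ˢ Finset.Icc 1 n).val).bind
            (fun p => ({A p.1 p.2, -A p.1 p.2} : Multiset (ZMod (4 * n ^ 2))))) = 0) ∧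
      (∀ x : ZMod (4 * n ^ 2),
        ¬(∃ y : ZMod (4 * n ^ 2), x = ((2 : ℕ) : ZMod (4 * n ^ 2)) * y) →
        Multiset.count x
          (((Finset.Icc 1 n ×ˢ Finset.Icc 1 n).val).bind
            (fun p => ({A p.1 p.2, -A p.1 p.2} : Multiset (ZMod (4 * n ^ 2))))) = 1) ∧
      (∀ i ∈ Finset.Icc 1 n, ∀ k ∈ Finset.Icc 1 n,
        (∑ j ∈ Finset.Icc 1 k, A i j) ≠ 0) ∧
      (∀ i ∈ Finset.Icc 1 n, ∀ k ∈ Finset.Icc 1 n, ∀ k' ∈ Finset.Icc 1 n,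
        (∑ j ∈ Finset.Icc 1 k, A i j) = (∑ j ∈ Finset.Icc 1 k', A i j) → k = k') ∧
      (∀ j ∈ Finset.Icc 1 n, ∀ k ∈ Finset.Icc 1 n,
        (∑ i ∈ Finset.Icc 1 k, A i j) ≠ 0) ∧
      (∀ j ∈ Finset.Icc 1 n, ∀ k ∈ Finset.Icc 1 n, ∀ k' ∈ Finset.Icc 1 n,
        (∑ i ∈ Finset.Icc 1 k, A i j) = (∑ i ∈ Finset.Icc 1 k', A i j) → k = k') := by
  refine ⟨fun i j => (HeffterArray.entry n i j : ZMod (4 * n ^ 2)), fun x hx => ?_,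
    fun x hx => ?_, fun i hi k hk => HeffterArray.rowPartialSum_ne_zero hi hk,
    fun i hi k hk k' hk' => HeffterArray.rowPartialSum_injOn hi hk hk',
    fun j hj k hk => HeffterArray.colPartialSum_ne_zero hj hk,
    fun j hj k hk k' hk' => HeffterArray.colPartialSum_injOn hj hk hk'⟩
  · exact Multiset.count_eq_zero.mpr fun hmem =>
      (HeffterArray.mem_signedEntries_iff hn x).mp hmem hx
  · exact Multiset.count_eq_one_of_mem (HeffterArray.nodup_signedEntries n)
      ((HeffterArray.mem_signedEntries_iff hn x).mpr hx)

/-- Proposition 3.10: for every odd n ≥ 1 there exists a globally simple tight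
relative non-zero sum Heffter array NH_{2n²}(n;n) over Z_{4n²}, where the
subgroup J of order 2n² consists of the multiples of 2. -/
theorem stmt6 (n : ℕ) (hn : 1 ≤ n) (hodd : Odd n) :
    ∃ A : ℕ → ℕ → ZMod (4 * n ^ 2),
      (∀ x : ZMod (4 * n ^ 2),
        (∃ y : ZMod (4 * n ^ 2), x = ((2 : ℕ) : ZMod (4 * n ^ 2)) * y) →
        Multiset.count x
          (((Finset.Icc 1 n ×ˢ Finset.Icc 1 n).val).bind
            (fun p => ({A p.1 p.2, -A p.1 p.2} : Multiset (ZMod (4 * n ^ 2))))) = 0) ∧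
      (∀ x : ZMod (4 * n ^ 2),
        ¬(∃ y : ZMod (4 * n ^ 2), x = ((2 : ℕ) : ZMod (4 * n ^ 2)) * y) →
        Multiset.count x
          (((Finset.Icc 1 n ×ˢ Finset.Icc 1 n).val).bind
            (fun p => ({A p.1 p.2, -A p.1 p.2} : Multiset (ZMod (4 * n ^ 2))))) = 1) ∧
      (∀ i ∈ Finset.Icc 1 n, ∀ k ∈ Finset.Icc 1 n,
        (∑ j ∈ Finset.Icc 1 k, A i j) ≠ 0) ∧
      (∀ i ∈ Finset.Icc 1 n, ∀ k ∈ Finset.Icc 1 n, ∀ k' ∈ Finset.Icc 1 n,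
        (∑ j ∈ Finset.Icc 1 k, A i j) = (∑ j ∈ Finset.Icc 1 k', A i j) → k = k') ∧
      (∀ j ∈ Finset.Icc 1 n, ∀ k ∈ Finset.Icc 1 n,
        (∑ i ∈ Finset.Icc 1 k, A i j) ≠ 0) ∧
      (∀ j ∈ Finset.Icc 1 n, ∀ k ∈ Finset.Icc 1 n, ∀ k' ∈ Finset.Icc 1 n,
        (∑ i ∈ Finset.Icc 1 k, A i j) = (∑ i ∈ Finset.Icc 1 k', A i j) → k = k') :=
  stmt6_general n hn
end

section
/- For every odd integer n ≥ 1 and every divisor t of n there exists a globally simple tight relative non-zero sum Heffter array NH_t(n;n): setting v = 2n² + t and J = {k·(v/t) : 0 ≤ k < t} (the subgroup of order t of Z_v), there exists an n×n matrix A = (a_{i,j}) with entries in Z_v such that the multiset formed by all a_{i,j} and −a_{i,j} contains every element of Z_v ∖ J exactly once, and for every row i the partial sums a_{i,1} + ⋯ + a_{i,k} (1 ≤ k ≤ n) are nonzero and pairwise distinct in Z_v, and for every column j the partial sums a_{1,j} + ⋯ + a_{k,j} (1 ≤ k ≤ n) are nonzero and pairwise distinct in Z_v. -/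
def stmt7sfun (m k : ℕ) : ℕ := k + (k-1)/(m-1)

lemma stmt7sfun_mono (m : ℕ) {k k' : ℕ} (h : k < k') : stmt7sfun m k < stmt7sfun m k' := by
  unfold stmt7sfun
  exact Nat.add_lt_add_of_lt_of_le h (Nat.div_le_div_right (by omega))

lemma stmt7sfun_pos (m : ℕ) {k : ℕ} (h : 1 ≤ k) : 1 ≤ stmt7sfun m k :=
  le_trans h (Nat.le_add_right _ _)

lemma stmt7sfun_eq {m : ℕ} (hm : 2 ≤ m) (k : ℕ) (hk : 1 ≤ k) :
    stmt7sfun m k = m * ((k-1)/(m-1)) + (k-1) % (m-1) + 1 := by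
  unfold stmt7sfun
  have h := Nat.div_add_mod (k-1) (m-1)
  set q := (k-1)/(m-1)
  set r := (k-1) % (m-1)
  have hmq : m * q = (m-1) * q + q := by
    calc m * q = ((m-1)+1) * q := by rw [Nat.sub_add_cancel (by omega : 1 ≤ m)]
    _ = (m-1)*q + q := by ring
  omega

lemma stmt7sfun_not_dvd {m : ℕ} (hm : 2 ≤ m) (k : ℕ) (hk : 1 ≤ k) : ¬ m ∣ stmt7sfun m k := by
  rw [stmt7sfun_eq hm k hk]
  have hr : (k-1) % (m-1) < m - 1 := Nat.mod_lt _ (by omega)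
  intro hdvd
  have h2 : m ∣ (k-1) % (m-1) + 1 := (Nat.dvd_add_right (Dvd.intro _ rfl)).mp (by
    have : m * ((k-1)/(m-1)) + ((k-1) % (m-1) + 1) = m * ((k-1)/(m-1)) + (k-1) % (m-1) + 1 := by ring
    rwa [this])
  have := Nat.le_of_dvd (by omega) h2
  omega

lemma stmt7sfun_surj {m u w : ℕ} (hu : 1 ≤ u) (hm : m = 2*u + 1) {x N : ℕ}
    (hN : N = (2*w+1) * u) (hx1 : 1 ≤ x) (hx2 : 2*x ≤ 2*(2*w+1)*u + 2*w) (hxd : ¬ m ∣ x) :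
    ∃ k, 1 ≤ k ∧ k ≤ N ∧ stmt7sfun m k = x := by
  subst hm
  obtain ⟨a, b, hab, hb⟩ : ∃ a b, x = (2*u+1) * a + b ∧ b < 2*u+1 :=
    ⟨x / (2*u+1), x % (2*u+1), (Nat.div_add_mod x (2*u+1)).symm, Nat.mod_lt _ (by omega)⟩
  have hb0 : 1 ≤ b := by
    rcases Nat.eq_zero_or_pos b with h | h
    · exact absurd ⟨a, by omega⟩ hxd
    · exact h
  have e1 : x = 2*(u*a) + a + b := by rw [hab]; ring
  have e2 : 2*x ≤ 4*(w*u) + 2*u + 2*w := by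
    calc 2*x ≤ 2*(2*w+1)*u + 2*w := hx2
    _ = 4*(w*u) + 2*u + 2*w := by ring
  have e3 : N = 2*(w*u) + u := by rw [hN]; ring
  have e4 : 2*u*a = 2*(u*a) := by ring
  refine ⟨2*u*a + b, by omega, ?_, ?_⟩
  · rcases le_or_gt w a with h | h
    · omega
    · have e5 : u*(a+1) ≤ u*w := Nat.mul_le_mul le_rfl h
      have e6 : u*(a+1) = u*a + u := by ring
      have e7 : u*w = w*u := by ring
      omega
  · have hdiv : (2*u*a + b - 1) / (2*u+1-1) = a := by
      have h1 : 2*u+1-1 = 2*u := by omega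
      have h2 : 2*u*a + b - 1 = 2*u*a + (b-1) := by omega
      rw [h1, h2, Nat.mul_add_div (by omega)]
      have : (b-1) / (2*u) = 0 := Nat.div_eq_of_lt (by omega)
      omega
    unfold stmt7sfun
    rw [hdiv]
    omega

lemma stmt7sfun_top {m u w : ℕ} (hu : 1 ≤ u) (hm : m = 2*u+1) :
    2 * stmt7sfun m ((2*w+1)*u) = 2*(2*w+1)*u + 2*w := by
  subst hm
  unfold stmt7sfun
  have hm1 : 2*u+1 - 1 = 2*u := by omega
  have h1 : (2*w+1)*u - 1 = 2*u*w + (u-1) := by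
    have h : (2*w+1)*u = 2*u*w + u := by ring
    omega
  rw [hm1, h1, Nat.mul_add_div (by omega), Nat.div_eq_of_lt (by omega : u-1 < 2*u)]
  have h2 : (2*w+1)*u = 2*u*w + u := by ring
  have h3 : 2*(2*w+1)*u = 2*(2*u*w) + 2*u := by ring
  omega

/-- Q k = alternating partial sum starting with +. -/
noncomputable def stmt7Q (c : ℕ → ℤ) (k : ℕ) : ℤ := ∑ j ∈ Finset.Icc 1 k, (-1:ℤ)^(j+1) * c j

lemma stmt7Q_succ (c : ℕ → ℤ) (k : ℕ) :
    stmt7Q c (k+1) = stmt7Q c k + (-1:ℤ)^(k+2) * c (k+1) := by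
  unfold stmt7Q
  rw [Finset.sum_Icc_succ_top (by omega : 1 ≤ k+1)]

lemma stmt7Q_bounds (c : ℕ → ℤ) (N : ℕ)
    (h1 : 1 ≤ c 1)
    (hmono : ∀ j, 1 ≤ j → j < N → c j < c (j+1)) :
    ∀ k, 1 ≤ k → k ≤ N →
      (Odd k → 0 < stmt7Q c k ∧ stmt7Q c k ≤ c k) ∧
      (Even k → 0 < -stmt7Q c k ∧ -stmt7Q c k < c k) := by
  intro k hk1
  induction k, hk1 using Nat.le_induction with
  | base =>
    intro _
    have hQ1 : stmt7Q c 1 = c 1 := by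
      unfold stmt7Q; simp
    constructor
    · intro _; constructor <;> omega
    · intro h; exact absurd h (by decide)
  | succ k hk ih =>
    intro hkN
    have ihh := ih (by omega)
    have hstep := stmt7Q_succ c k
    have hc : c k < c (k+1) := hmono k hk (by omega)
    rcases Nat.even_or_odd k with he | ho
    · -- k even, k+1 odd
      have h2 := ihh.2 he
      have hsign : (-1:ℤ)^(k+2) = 1 := Even.neg_one_pow (by
        rcases he with ⟨r, hr⟩; exact ⟨r+1, by omega⟩)
      constructor
      · intro _
        rw [hstep, hsign, one_mul]
        constructor <;> nlinarith [h2.1, h2.2]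
      · intro hcon
        rcases he with ⟨r, hr⟩
        rcases hcon with ⟨s, hs⟩
        omega
    · -- k odd, k+1 even
      have h2 := ihh.1 ho
      have hsign : (-1:ℤ)^(k+2) = -1 := Odd.neg_one_pow (by
        rcases ho with ⟨r, hr⟩; exact ⟨r+1, by omega⟩)
      constructor
      · intro hcon
        rcases hcon with ⟨r, hr⟩
        rcases ho with ⟨s, hs⟩
        omega
      · intro _
        rw [hstep, hsign]
        constructor <;> nlinarith [h2.1, h2.2]

lemma stmt7Q_step1 (c : ℕ → ℤ) (N : ℕ)
    (hmono : ∀ j, 1 ≤ j → j < N → c j < c (j+1)) :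
    ∀ k, 1 ≤ k → k + 2 ≤ N →
      (Odd k → stmt7Q c k < stmt7Q c (k + 2)) ∧
      (Even k → stmt7Q c (k + 2) < stmt7Q c k) := by
  intro k hk1 hkN
  have hQ1 := stmt7Q_succ c k
  have hQ2 := stmt7Q_succ c (k+1)
  have hc : c (k+1) < c (k+2) := hmono (k+1) (by omega) (by omega)
  have hkk : k + 1 + 1 = k + 2 := by omega
  rw [hkk] at hQ2
  constructor
  · intro ho
    have hs1 : (-1:ℤ)^(k+2) = -1 := Odd.neg_one_pow (by
      rcases ho with ⟨r, hr⟩; exact ⟨r+1, by omega⟩)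
    have hs2 : (-1:ℤ)^(k+1+2) = 1 := Even.neg_one_pow (by
      rcases ho with ⟨r, hr⟩; exact ⟨r+2, by omega⟩)
    rw [hs1] at hQ1; rw [hs2] at hQ2
    nlinarith
  · intro he
    have hs1 : (-1:ℤ)^(k+2) = 1 := Even.neg_one_pow (by
      rcases he with ⟨r, hr⟩; exact ⟨r+1, by omega⟩)
    have hs2 : (-1:ℤ)^(k+1+2) = -1 := Odd.neg_one_pow (by
      rcases he with ⟨r, hr⟩; exact ⟨r+1, by omega⟩)
    rw [hs1] at hQ1; rw [hs2] at hQ2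
    nlinarith

lemma stmt7Q_step2 (c : ℕ → ℤ) (N : ℕ)
    (hmono : ∀ j, 1 ≤ j → j < N → c j < c (j+1)) :
    ∀ d k, 1 ≤ k → k + 2*(d+1) ≤ N →
      (Odd k → stmt7Q c k < stmt7Q c (k + 2*(d+1))) ∧
      (Even k → stmt7Q c (k + 2*(d+1)) < stmt7Q c k) := by
  intro d
  induction d with
  | zero =>
    intro k hk1 hkN
    have h := stmt7Q_step1 c N hmono k hk1 (by omega)
    have e : k + 2*(0+1) = k + 2 := by omega
    rw [e]
    exact h
  | succ d ih =>
    intro k hk1 hkN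
    have h1 := stmt7Q_step1 c N hmono k hk1 (by omega)
    have h2 := ih (k+2) (by omega) (by omega)
    have e : k + 2 + 2*(d+1) = k + 2*(d+1+1) := by omega
    rw [e] at h2
    constructor
    · intro ho
      have ho2 : Odd (k+2) := by rcases ho with ⟨r, hr⟩; exact ⟨r+1, by omega⟩
      exact lt_trans (h1.1 ho) (h2.1 ho2)
    · intro he
      have he2 : Even (k+2) := by rcases he with ⟨r, hr⟩; exact ⟨r+1, by omega⟩
      exact lt_trans (h2.2 he2) (h1.2 he)

lemma stmt7Q_inj (c : ℕ → ℤ) (N : ℕ)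
    (h1 : 1 ≤ c 1)
    (hmono : ∀ j, 1 ≤ j → j < N → c j < c (j+1)) :
    ∀ k k', 1 ≤ k → k ≤ N → 1 ≤ k' → k' ≤ N →
      stmt7Q c k = stmt7Q c k' → k = k' := by
  have key : ∀ k k', 1 ≤ k → k < k' → k' ≤ N → stmt7Q c k ≠ stmt7Q c k' := by
    intro k k' hk1 hkk hk'N
    rcases Nat.even_or_odd k with he | ho
    · rcases Nat.even_or_odd k' with he' | ho'
      · -- same parity even
        obtain ⟨d, hd⟩ : ∃ d, k' = k + 2*(d+1) := by
          rcases he with ⟨r, hr⟩; rcases he' with ⟨s, hs⟩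
          exact ⟨s - r - 1, by omega⟩
        subst hd
        exact ne_of_gt ((stmt7Q_step2 c N hmono d k hk1 (by omega)).2 he)
      · -- k even (Q<0), k' odd (Q>0)
        have b1 := (stmt7Q_bounds c N h1 hmono k hk1 (by omega)).2 he
        have b2 := (stmt7Q_bounds c N h1 hmono k' (by omega) hk'N).1 ho'
        intro h; omega
    · rcases Nat.even_or_odd k' with he' | ho'
      · have b1 := (stmt7Q_bounds c N h1 hmono k hk1 (by omega)).1 ho
        have b2 := (stmt7Q_bounds c N h1 hmono k' (by omega) hk'N).2 he'
        intro h; omega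
      · obtain ⟨d, hd⟩ : ∃ d, k' = k + 2*(d+1) := by
          rcases ho with ⟨r, hr⟩; rcases ho' with ⟨s, hs⟩
          exact ⟨s - r - 1, by omega⟩
        subst hd
        exact ne_of_lt ((stmt7Q_step2 c N hmono d k hk1 (by omega)).1 ho)
  intro k k' hk1 hkN hk'1 hk'N heq
  rcases lt_trichotomy k k' with h | h | h
  · exact absurd heq (key k k' hk1 h hk'N)
  · exact h
  · exact absurd heq.symm (key k' k hk'1 h hkN)

lemma stmt7sfun_le (m : ℕ) {k k' : ℕ} (h : k ≤ k') : stmt7sfun m k ≤ stmt7sfun m k' := by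
  rcases Nat.lt_or_ge k k' with h' | h'
  · exact le_of_lt (stmt7sfun_mono m h')
  · have : k = k' := by omega
    rw [this]

lemma stmt7idx_inj {n x y b b' : ℕ} (hb : 1 ≤ b) (hbn : b ≤ n) (hb' : 1 ≤ b') (hb'n : b' ≤ n)
    (h : x*n + b = y*n + b') : x = y ∧ b = b' := by
  rcases lt_trichotomy x y with hxy | hxy | hxy
  · have : (x+1)*n ≤ y*n := Nat.mul_le_mul_right n (by omega)
    have e : (x+1)*n = x*n + n := by ring
    omega
  · constructor
    · exact hxy
    · rw [hxy] at h; omega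
  · have : (y+1)*n ≤ x*n := Nat.mul_le_mul_right n (by omega)
    have e : (y+1)*n = y*n + n := by ring
    omega

/-- Theorem 3.13: for every odd n ≥ 1 and every divisor t of n there exists a globally simple tight
relative non-zero sum Heffter array NH_t(n;n) over Z_{2n²+t} for every divisor t of n, where the
subgroup J of order t consists of the multiples of v/t = 2n²/t + 1. -/
theorem stmt7 (n t : ℕ) (hn : 1 ≤ n) (hodd : Odd n) (ht : t ∣ n) :
    ∃ A : ℕ → ℕ → ZMod (2 * n ^ 2 + t),
      (∀ x : ZMod (2 * n ^ 2 + t),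
        (∃ y : ZMod (2 * n ^ 2 + t), x = ((2 * n ^ 2 / t + 1 : ℕ) : ZMod (2 * n ^ 2 + t)) * y) →
        Multiset.count x
          (((Finset.Icc 1 n ×ˢ Finset.Icc 1 n).val).bind
            (fun p => ({A p.1 p.2, -A p.1 p.2} : Multiset (ZMod (2 * n ^ 2 + t))))) = 0) ∧
      (∀ x : ZMod (2 * n ^ 2 + t),
        ¬(∃ y : ZMod (2 * n ^ 2 + t), x = ((2 * n ^ 2 / t + 1 : ℕ) : ZMod (2 * n ^ 2 + t)) * y) →
        Multiset.count x
          (((Finset.Icc 1 n ×ˢ Finset.Icc 1 n).val).bind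
            (fun p => ({A p.1 p.2, -A p.1 p.2} : Multiset (ZMod (2 * n ^ 2 + t))))) = 1) ∧
      (∀ i ∈ Finset.Icc 1 n, ∀ k ∈ Finset.Icc 1 n,
        (∑ j ∈ Finset.Icc 1 k, A i j) ≠ 0) ∧
      (∀ i ∈ Finset.Icc 1 n, ∀ k ∈ Finset.Icc 1 n, ∀ k' ∈ Finset.Icc 1 n,
        (∑ j ∈ Finset.Icc 1 k, A i j) = (∑ j ∈ Finset.Icc 1 k', A i j) → k = k') ∧
      (∀ j ∈ Finset.Icc 1 n, ∀ k ∈ Finset.Icc 1 n,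
        (∑ i ∈ Finset.Icc 1 k, A i j) ≠ 0) ∧
      (∀ j ∈ Finset.Icc 1 n, ∀ k ∈ Finset.Icc 1 n, ∀ k' ∈ Finset.Icc 1 n,
        (∑ i ∈ Finset.Icc 1 k, A i j) = (∑ i ∈ Finset.Icc 1 k', A i j) → k = k') := by
  -- basic arithmetic setup
  have ht1 : 1 ≤ t := Nat.pos_of_dvd_of_pos ht hn
  have htodd : Odd t := by
    rcases Nat.even_or_odd t with he | ho
    · exfalso
      rcases hodd with ⟨r, hr⟩
      rcases he with ⟨s, hs⟩
      rcases ht with ⟨c, hc⟩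
      have e : n = (s+s)*c := by rw [hc, hs]
      have e2 : (s+s)*c = 2*(s*c) := by ring
      omega
    · exact ho
  obtain ⟨w, hw⟩ := htodd
  have htn2 : t ∣ n^2 := dvd_trans ht (dvd_pow_self n two_ne_zero)
  have hn2 : 1 ≤ n^2 := Nat.one_le_pow _ _ hn
  set v := 2 * n ^ 2 + t with hv
  set m := 2 * n ^ 2 / t + 1 with hmdef
  set u := n^2 / t with hudef
  have hu : t * u = n^2 := Nat.mul_div_cancel' htn2
  have hu1 : 1 ≤ u := by
    rcases Nat.eq_zero_or_pos u with h | h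
    · exfalso; rw [h] at hu; omega
    · exact h
  have hm : m = 2*u + 1 := by
    rw [hmdef, hudef, Nat.mul_div_assoc 2 htn2]
  have hm2 : 2 ≤ m := by omega
  have hn2w : (2*w+1) * u = n^2 := by
    have hw' : t = 2*w+1 := by omega
    rw [← hw']; exact hu
  have hw' : t = 2*w+1 := by omega
  have hvmt : v = m * t := by
    have e1 : (2*u+1) * t = 2*(t*u) + t := by ring
    rw [hv, hm, e1, hu]
  have hmv : m ∣ v := ⟨t, hvmt⟩
  have hvodd : v % 2 = 1 := by omega
  have hv3 : 3 ≤ v := by omega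
  haveI : NeZero v := ⟨by omega⟩
  -- the top value of sfun
  have hM : 2 * stmt7sfun m (n^2) + 1 = v := by
    have h := stmt7sfun_top (w := w) hu1 hm
    rw [hn2w] at h
    have e : 2*(2*w+1)*u = 2*((2*w+1)*u) := by ring
    rw [h]
    omega
  have hsfun_lt : ∀ k, 1 ≤ k → k ≤ n^2 → 2 * stmt7sfun m k ≤ v - 1 := by
    intro k hk1 hk2
    have := stmt7sfun_le m hk2
    omega
  -- surjectivity specialized
  have hsurj : ∀ x : ℕ, 1 ≤ x → 2*x ≤ v - 1 → ¬ m ∣ x → ∃ k, 1 ≤ k ∧ k ≤ n^2 ∧ stmt7sfun m k = x := by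
    intro x hx1 hx2 hxd
    have e : 2*(2*w+1)*u = 2*((2*w+1)*u) := by ring
    exact stmt7sfun_surj hu1 hm hn2w.symm hx1 (by omega) hxd
  -- cast facts
  have hBval : ∀ k, 1 ≤ k → k ≤ n^2 → ((stmt7sfun m k : ℕ) : ZMod v).val = stmt7sfun m k := by
    intro k h1 h2
    exact ZMod.val_cast_of_lt (by have := hsfun_lt k h1 h2; omega)
  -- the shared row/column partial-sum machinery
  have key : ∀ (c : ℕ → ℤ), 1 ≤ c 1 → (∀ j, 1 ≤ j → j < n → c j < c (j+1)) →
      (∀ j, 1 ≤ j → j ≤ n → c j ≤ (stmt7sfun m (n^2) : ℤ)) → ∀ ε : ℤ, (ε = 1 ∨ ε = -1) →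
      (∀ k, 1 ≤ k → k ≤ n → ((ε * stmt7Q c k : ℤ) : ZMod v) ≠ 0) ∧
      (∀ k k', 1 ≤ k → k ≤ n → 1 ≤ k' → k' ≤ n →
        ((ε * stmt7Q c k : ℤ) : ZMod v) = ((ε * stmt7Q c k' : ℤ) : ZMod v) → k = k') := by
    intro c h1 hmono hbd ε hε
    have habs : ∀ k, 1 ≤ k → k ≤ n → stmt7Q c k ≠ 0 ∧
        -(stmt7sfun m (n^2) : ℤ) ≤ stmt7Q c k ∧ stmt7Q c k ≤ (stmt7sfun m (n^2) : ℤ) := by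
      intro k hk1 hkn
      have hb := stmt7Q_bounds c n h1 hmono k hk1 hkn
      have hck := hbd k hk1 hkn
      rcases Nat.even_or_odd k with he | ho
      · have h2 := hb.2 he
        refine ⟨by omega, by omega, by omega⟩
      · have h2 := hb.1 ho
        refine ⟨by omega, by omega, by omega⟩
    have hvZ : ((v:ℕ):ℤ) = 2*(stmt7sfun m (n^2):ℤ) + 1 := by exact_mod_cast hM.symm
    have hdvd_of : ∀ z : ℤ, ((ε * z : ℤ) : ZMod v) = 0 → ((v:ℕ):ℤ) ∣ z := by
      intro z hz
      have hdvd : ((v:ℕ):ℤ) ∣ ε * z := (ZMod.intCast_zmod_eq_zero_iff_dvd _ _).mp hz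
      rcases hε with h | h
      · rwa [h, one_mul] at hdvd
      · rw [h, neg_one_mul] at hdvd; exact (dvd_neg).mp hdvd
    constructor
    · intro k hk1 hkn heq0
      have hdvd2 := hdvd_of _ heq0
      have h := habs k hk1 hkn
      have := Int.eq_zero_of_abs_lt_dvd hdvd2 (by rw [abs_lt]; constructor <;> omega)
      exact h.1 this
    · intro k k' hk1 hkn hk'1 hk'n heq
      have hsub : ((ε * (stmt7Q c k - stmt7Q c k') : ℤ) : ZMod v) = 0 := by
        have e : ε * (stmt7Q c k - stmt7Q c k') = ε * stmt7Q c k - ε * stmt7Q c k' := by ring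
        rw [e, Int.cast_sub, heq, sub_self]
      have hdvd2 := hdvd_of _ hsub
      have ha := habs k hk1 hkn
      have hb := habs k' hk'1 hk'n
      have hzero := Int.eq_zero_of_abs_lt_dvd hdvd2 (by rw [abs_lt]; constructor <;> omega)
      have heqQ : stmt7Q c k = stmt7Q c k' := by omega
      exact stmt7Q_inj c n h1 hmono k k' hk1 hkn hk'1 hk'n heqQ
  -- index bound
  have hidxbd : ∀ a b : ℕ, 1 ≤ a → a ≤ n → 1 ≤ b → b ≤ n → 1 ≤ (a-1)*n + b ∧ (a-1)*n + b ≤ n^2 := by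
    intro a b ha1 han hb1 hbn
    have h1 : (a-1)*n ≤ (n-1)*n := Nat.mul_le_mul_right n (by omega)
    have h2 : (n-1)*n + n = n^2 := by
      calc (n-1)*n + n = ((n-1)+1)*n := by ring
      _ = n*n := by rw [show (n-1)+1 = n from by omega]
      _ = n^2 := (pow_two n).symm
    omega
  -- the array
  set B : ℕ → ZMod v := fun k => ((stmt7sfun m k : ℕ) : ZMod v) with hB
  set A : ℕ → ℕ → ZMod v :=
    fun i j => (((-1:ℤ)^(i+j) * (stmt7sfun m ((i-1)*n + j) : ℤ) : ℤ) : ZMod v) with hA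
  -- the multiset identity
  have hidx : ((Finset.Icc 1 n ×ˢ Finset.Icc 1 n).val.map (fun p : ℕ×ℕ => (p.1-1)*n + p.2))
      = (Finset.Icc 1 (n^2)).val := by
    have hnd1 : ((Finset.Icc 1 n ×ˢ Finset.Icc 1 n).val.map
        (fun p : ℕ×ℕ => (p.1-1)*n + p.2)).Nodup := by
      refine Multiset.Nodup.map_on ?_ (Finset.Icc 1 n ×ˢ Finset.Icc 1 n).nodup
      intro p hp q hq hpq
      simp only [Finset.mem_val, Finset.mem_product, Finset.mem_Icc] at hp hq
      have h := stmt7idx_inj hp.2.1 hp.2.2 hq.2.1 hq.2.2 hpq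
      have h1 : p.1 = q.1 := by omega
      exact Prod.ext h1 h.2
    refine (Multiset.Nodup.ext hnd1 (Finset.Icc 1 (n^2)).nodup).mpr ?_
    intro a
    simp only [Multiset.mem_map, Finset.mem_val, Finset.mem_product, Finset.mem_Icc]
    constructor
    · rintro ⟨p, ⟨⟨hp11, hp12⟩, hp21, hp22⟩, rfl⟩
      exact hidxbd p.1 p.2 hp11 hp12 hp21 hp22
    · rintro ⟨ha1, ha2⟩
      obtain ⟨q, r, hqr, hrn⟩ : ∃ q r, n*q + r = a-1 ∧ r < n :=
        ⟨(a-1)/n, (a-1)%n, Nat.div_add_mod _ _, Nat.mod_lt _ (by omega)⟩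
      have hnn : n*n = n^2 := (pow_two n).symm
      have hqn : q < n := by
        by_contra hq
        push_neg at hq
        have : n*n ≤ n*q := Nat.mul_le_mul_left n hq
        omega
      refine ⟨(q + 1, r + 1), ⟨⟨by omega, by omega⟩, by omega, by omega⟩, ?_⟩
      have e : (q + 1 - 1)*n = n*q := by
        rw [show q + 1 - 1 = q from by omega]; ring
      simp only []
      omega
  have hbind : (((Finset.Icc 1 n ×ˢ Finset.Icc 1 n).val).bind
        (fun p => ({A p.1 p.2, -A p.1 p.2} : Multiset (ZMod v))))
      = (Finset.Icc 1 (n^2)).val.map B + (Finset.Icc 1 (n^2)).val.map (fun k => -B k) := by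
    have hpair : ∀ p : ℕ × ℕ, ({A p.1 p.2, -A p.1 p.2} : Multiset (ZMod v))
        = {B ((p.1-1)*n + p.2), -B ((p.1-1)*n + p.2)} := by
      intro p
      rcases Nat.even_or_odd (p.1 + p.2) with he | ho
      · have h : A p.1 p.2 = B ((p.1-1)*n + p.2) := by
          rw [hA, hB]
          simp only [Even.neg_one_pow he, one_mul, Int.cast_natCast]
        rw [h]
      · have h : A p.1 p.2 = -B ((p.1-1)*n + p.2) := by
          rw [hA, hB]
          simp only [Odd.neg_one_pow ho, neg_one_mul, Int.cast_neg, Int.cast_natCast]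
        rw [h, neg_neg]
        exact Multiset.cons_swap _ _ _
    rw [show (fun p : ℕ×ℕ => ({A p.1 p.2, -A p.1 p.2} : Multiset (ZMod v)))
        = fun p => ({B ((p.1-1)*n+p.2)} : Multiset (ZMod v)) + {-B ((p.1-1)*n+p.2)} from
      funext fun p => by rw [hpair p, Multiset.insert_eq_cons, Multiset.singleton_add]]
    rw [Multiset.bind_add, Multiset.bind_singleton, Multiset.bind_singleton]
    have e1 : ((Finset.Icc 1 n ×ˢ Finset.Icc 1 n).val).map (fun p : ℕ×ℕ => B ((p.1-1)*n+p.2))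
        = (((Finset.Icc 1 n ×ˢ Finset.Icc 1 n).val).map (fun p : ℕ×ℕ => (p.1-1)*n+p.2)).map B :=
      by rw [Multiset.map_map]; rfl
    have e2 : ((Finset.Icc 1 n ×ˢ Finset.Icc 1 n).val).map (fun p : ℕ×ℕ => -B ((p.1-1)*n+p.2))
        = (((Finset.Icc 1 n ×ˢ Finset.Icc 1 n).val).map (fun p : ℕ×ℕ => (p.1-1)*n+p.2)).map
          (fun k => -B k) :=
      by rw [Multiset.map_map]; rfl
    rw [e1, e2, hidx]
  -- injectivity of B on the index range
  have hBinj : ∀ k k', 1 ≤ k → k ≤ n^2 → 1 ≤ k' → k' ≤ n^2 → B k = B k' → k = k' := by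
    intro k k' h1 h2 h1' h2' heq
    have hv1 := hBval k h1 h2
    have hv2 := hBval k' h1' h2'
    have heq' : ((stmt7sfun m k : ℕ) : ZMod v) = ((stmt7sfun m k' : ℕ) : ZMod v) := heq
    have : stmt7sfun m k = stmt7sfun m k' := by
      rw [← hv1, ← hv2, heq']
    rcases lt_trichotomy k k' with h | h | h
    · exact absurd this (ne_of_lt (stmt7sfun_mono m h))
    · exact h
    · exact absurd this.symm (ne_of_lt (stmt7sfun_mono m h))
  have hnodB : ((Finset.Icc 1 (n^2)).val.map B).Nodup := by
    refine Multiset.Nodup.map_on ?_ (Finset.Icc 1 (n^2)).nodup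
    intro k hk k' hk' heq
    simp only [Finset.mem_val, Finset.mem_Icc] at hk hk'
    exact hBinj k k' hk.1 hk.2 hk'.1 hk'.2 heq
  have hnodB' : ((Finset.Icc 1 (n^2)).val.map (fun k => -B k)).Nodup := by
    refine Multiset.Nodup.map_on ?_ (Finset.Icc 1 (n^2)).nodup
    intro k hk k' hk' heq
    simp only [Finset.mem_val, Finset.mem_Icc] at hk hk'
    exact hBinj k k' hk.1 hk.2 hk'.1 hk'.2 (neg_injective heq)
  -- sum-to-v fact used in "x = -B k" analyses
  have hsumv : ∀ (x : ZMod v) k, 1 ≤ k → k ≤ n^2 → B k + x = 0 → stmt7sfun m k + x.val = v := by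
    intro x k h1 h2 h0
    have hxv : ((x.val : ℕ) : ZMod v) = x := ZMod.natCast_rightInverse x
    have hcast : ((stmt7sfun m k + x.val : ℕ) : ZMod v) = 0 := by
      rw [Nat.cast_add, hxv]
      exact h0
    have hdvd : v ∣ stmt7sfun m k + x.val := (ZMod.natCast_eq_zero_iff _ _).mp hcast
    have hs1 : 1 ≤ stmt7sfun m k := stmt7sfun_pos m h1
    have hs2 : 2 * stmt7sfun m k ≤ v - 1 := hsfun_lt k h1 h2
    have hxlt : x.val < v := ZMod.val_lt x
    rcases hdvd with ⟨c, hc⟩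
    have hc1 : c = 1 := by
      rcases Nat.lt_or_ge c 1 with h | h
      · exfalso; have : c = 0 := by omega
        rw [this, Nat.mul_zero] at hc; omega
      · rcases Nat.lt_or_ge c 2 with h' | h'
        · omega
        · exfalso
          have : v * 2 ≤ v * c := Nat.mul_le_mul_left v h'
          omega
    rw [hc1, Nat.mul_one] at hc
    exact hc
  refine ⟨A, ?_, ?_, ?_, ?_, ?_, ?_⟩
  · -- elements of J do not occur
    intro x hx
    have hxdvd : m ∣ x.val := by
      obtain ⟨y, hy⟩ := hx
      have hyv : ((y.val : ℕ) : ZMod v) = y := ZMod.natCast_rightInverse y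
      have hxy : x = ((m * y.val : ℕ) : ZMod v) := by
        rw [Nat.cast_mul, hyv]; exact hy
      have : x.val = (m * y.val) % v := by rw [hxy]; exact ZMod.val_natCast _ _
      rw [this]
      have hdm := Nat.div_add_mod (m * y.val) v
      have h1 : m ∣ v * ((m * y.val) / v) := Dvd.dvd.mul_right hmv _
      exact (Nat.dvd_add_right h1).mp (by rw [hdm]; exact Dvd.intro _ rfl)
    rw [hbind, Multiset.count_add]
    have c1 : x ∉ (Finset.Icc 1 (n^2)).val.map B := by
      intro hmem
      obtain ⟨k, hk, hBk⟩ := Multiset.mem_map.mp hmem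
      simp only [Finset.mem_val, Finset.mem_Icc] at hk
      have : x.val = stmt7sfun m k := by rw [← hBk]; exact hBval k hk.1 hk.2
      exact stmt7sfun_not_dvd hm2 k hk.1 (by rwa [← this])
    have c2 : x ∉ (Finset.Icc 1 (n^2)).val.map (fun k => -B k) := by
      intro hmem
      obtain ⟨k, hk, hBk⟩ := Multiset.mem_map.mp hmem
      simp only [Finset.mem_val, Finset.mem_Icc] at hk
      have h0 : B k + x = 0 := by rw [← hBk]; ring
      have hsum := hsumv x k hk.1 hk.2 h0
      have : stmt7sfun m k = v - x.val := by omega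
      have hdvds : m ∣ stmt7sfun m k := by
        rw [this]; exact Nat.dvd_sub hmv hxdvd
      exact stmt7sfun_not_dvd hm2 k hk.1 hdvds
    rw [Multiset.count_eq_zero_of_notMem c1, Multiset.count_eq_zero_of_notMem c2]
  · -- elements outside J occur exactly once
    intro x hx
    have hxv : ((x.val : ℕ) : ZMod v) = x := ZMod.natCast_rightInverse x
    have hxdvd : ¬ m ∣ x.val := by
      intro hdvd
      obtain ⟨c, hc⟩ := hdvd
      exact hx ⟨(c : ZMod v), by rw [← hxv, hc, Nat.cast_mul]⟩
    have hx0 : x.val ≠ 0 := fun h => hxdvd (by rw [h]; exact dvd_zero m)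
    have hxlt : x.val < v := ZMod.val_lt x
    rw [hbind, Multiset.count_add]
    rcases Nat.lt_or_ge (2 * x.val) v with h2x | h2x
    · -- small case: x itself is in the image of B
      obtain ⟨k, hk1, hk2, hks⟩ := hsurj x.val (by omega) (by omega) hxdvd
      have hmem1 : x ∈ (Finset.Icc 1 (n^2)).val.map B := by
        refine Multiset.mem_map.mpr ⟨k, ?_, ?_⟩
        · simp only [Finset.mem_val, Finset.mem_Icc]; exact ⟨hk1, hk2⟩
        · rw [hB]; simp only []; rw [hks]; exact hxv
      have hmem2 : x ∉ (Finset.Icc 1 (n^2)).val.map (fun k => -B k) := by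
        intro hmem
        obtain ⟨k', hk', hBk'⟩ := Multiset.mem_map.mp hmem
        simp only [Finset.mem_val, Finset.mem_Icc] at hk'
        have h0 : B k' + x = 0 := by rw [← hBk']; ring
        have hsum := hsumv x k' hk'.1 hk'.2 h0
        have := hsfun_lt k' hk'.1 hk'.2
        omega
      rw [Multiset.count_eq_one_of_mem hnodB hmem1, Multiset.count_eq_zero_of_notMem hmem2]
    · -- large case: -x is in the image of B
      have h2x' : 2 * x.val ≥ v + 1 := by omega
      have hy1 : 1 ≤ v - x.val := by omega
      have hy2 : 2 * (v - x.val) ≤ v - 1 := by omega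
      have hyd : ¬ m ∣ v - x.val := by
        intro hdvd
        have : x.val = v - (v - x.val) := by omega
        exact hxdvd (by rw [this]; exact Nat.dvd_sub hmv hdvd)
      obtain ⟨k, hk1, hk2, hks⟩ := hsurj (v - x.val) hy1 hy2 hyd
      have hmem1 : x ∉ (Finset.Icc 1 (n^2)).val.map B := by
        intro hmem
        obtain ⟨k', hk', hBk'⟩ := Multiset.mem_map.mp hmem
        simp only [Finset.mem_val, Finset.mem_Icc] at hk'
        have : x.val = stmt7sfun m k' := by rw [← hBk']; exact hBval k' hk'.1 hk'.2
        have := hsfun_lt k' hk'.1 hk'.2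
        omega
      have hmem2 : x ∈ (Finset.Icc 1 (n^2)).val.map (fun k => -B k) := by
        refine Multiset.mem_map.mpr ⟨k, ?_, ?_⟩
        · simp only [Finset.mem_val, Finset.mem_Icc]; exact ⟨hk1, hk2⟩
        · have h0 : B k + x = 0 := by
            have e : ((v - x.val : ℕ) : ZMod v) + ((x.val : ℕ) : ZMod v) = 0 := by
              rw [← Nat.cast_add, show v - x.val + x.val = v from by omega]
              exact ZMod.natCast_self v
            rw [hxv] at e
            rw [hB]; simp only []; rw [hks]
            exact e
          have := eq_neg_of_add_eq_zero_right h0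
          exact this.symm
      rw [Multiset.count_eq_zero_of_notMem hmem1, Multiset.count_eq_one_of_mem hnodB' hmem2]
  · -- row partial sums nonzero
    intro i hi k hk
    simp only [Finset.mem_Icc] at hi hk
    set c : ℕ → ℤ := fun j => (stmt7sfun m ((i-1)*n + j) : ℤ) with hc
    have hc1 : 1 ≤ c 1 := by
      show (1:ℤ) ≤ ((stmt7sfun m ((i-1)*n + 1) : ℕ) : ℤ)
      exact_mod_cast stmt7sfun_pos m (show 1 ≤ (i-1)*n+1 from by omega)
    have hcmono : ∀ j, 1 ≤ j → j < n → c j < c (j+1) := by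
      intro j _ _
      show ((stmt7sfun m ((i-1)*n + j) : ℕ) : ℤ) < ((stmt7sfun m ((i-1)*n + (j+1)) : ℕ) : ℤ)
      exact_mod_cast stmt7sfun_mono m (show (i-1)*n+j < (i-1)*n+(j+1) from by omega)
    have hcbd : ∀ j, 1 ≤ j → j ≤ n → c j ≤ (stmt7sfun m (n^2) : ℤ) := by
      intro j hj1 hjn
      show ((stmt7sfun m ((i-1)*n + j) : ℕ) : ℤ) ≤ ((stmt7sfun m (n^2) : ℕ) : ℤ)
      exact_mod_cast stmt7sfun_le m (hidxbd i j hi.1 hi.2 hj1 hjn).2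
    have hsum : ∀ K : ℕ, (∑ j ∈ Finset.Icc 1 K, A i j)
        = (((-1:ℤ)^(i+1) * stmt7Q c K : ℤ) : ZMod v) := by
      intro K
      have e1 : (-1:ℤ)^(i+1) * stmt7Q c K = ∑ j ∈ Finset.Icc 1 K, (-1:ℤ)^(i+j) * c j := by
        rw [stmt7Q, Finset.mul_sum]
        refine Finset.sum_congr rfl fun j _ => ?_
        rw [← mul_assoc, ← pow_add]
        congr 1
        rw [show i+1+(j+1) = (i+j)+2 from by ring, pow_add, neg_one_sq, mul_one]
      rw [e1, Int.cast_sum]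
    have hε : (-1:ℤ)^(i+1) = 1 ∨ (-1:ℤ)^(i+1) = -1 :=
      (Nat.even_or_odd (i+1)).elim (fun h => Or.inl (Even.neg_one_pow h))
        (fun h => Or.inr (Odd.neg_one_pow h))
    rw [hsum k]
    exact (key c hc1 hcmono hcbd ((-1:ℤ)^(i+1)) hε).1 k hk.1 hk.2
  · -- row partial sums pairwise distinct
    intro i hi k hk k' hk' heq
    simp only [Finset.mem_Icc] at hi hk hk'
    set c : ℕ → ℤ := fun j => (stmt7sfun m ((i-1)*n + j) : ℤ) with hc
    have hc1 : 1 ≤ c 1 := by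
      show (1:ℤ) ≤ ((stmt7sfun m ((i-1)*n + 1) : ℕ) : ℤ)
      exact_mod_cast stmt7sfun_pos m (show 1 ≤ (i-1)*n+1 from by omega)
    have hcmono : ∀ j, 1 ≤ j → j < n → c j < c (j+1) := by
      intro j _ _
      show ((stmt7sfun m ((i-1)*n + j) : ℕ) : ℤ) < ((stmt7sfun m ((i-1)*n + (j+1)) : ℕ) : ℤ)
      exact_mod_cast stmt7sfun_mono m (show (i-1)*n+j < (i-1)*n+(j+1) from by omega)
    have hcbd : ∀ j, 1 ≤ j → j ≤ n → c j ≤ (stmt7sfun m (n^2) : ℤ) := by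
      intro j hj1 hjn
      show ((stmt7sfun m ((i-1)*n + j) : ℕ) : ℤ) ≤ ((stmt7sfun m (n^2) : ℕ) : ℤ)
      exact_mod_cast stmt7sfun_le m (hidxbd i j hi.1 hi.2 hj1 hjn).2
    have hsum : ∀ K : ℕ, (∑ j ∈ Finset.Icc 1 K, A i j)
        = (((-1:ℤ)^(i+1) * stmt7Q c K : ℤ) : ZMod v) := by
      intro K
      have e1 : (-1:ℤ)^(i+1) * stmt7Q c K = ∑ j ∈ Finset.Icc 1 K, (-1:ℤ)^(i+j) * c j := by
        rw [stmt7Q, Finset.mul_sum]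
        refine Finset.sum_congr rfl fun j _ => ?_
        rw [← mul_assoc, ← pow_add]
        congr 1
        rw [show i+1+(j+1) = (i+j)+2 from by ring, pow_add, neg_one_sq, mul_one]
      rw [e1, Int.cast_sum]
    have hε : (-1:ℤ)^(i+1) = 1 ∨ (-1:ℤ)^(i+1) = -1 :=
      (Nat.even_or_odd (i+1)).elim (fun h => Or.inl (Even.neg_one_pow h))
        (fun h => Or.inr (Odd.neg_one_pow h))
    rw [hsum k, hsum k'] at heq
    exact (key c hc1 hcmono hcbd ((-1:ℤ)^(i+1)) hε).2 k k' hk.1 hk.2 hk'.1 hk'.2 heq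
  · -- column partial sums nonzero
    intro j hj k hk
    simp only [Finset.mem_Icc] at hj hk
    set c : ℕ → ℤ := fun i => (stmt7sfun m ((i-1)*n + j) : ℤ) with hc
    have hc1 : 1 ≤ c 1 := by
      show (1:ℤ) ≤ ((stmt7sfun m ((1-1)*n + j) : ℕ) : ℤ)
      exact_mod_cast stmt7sfun_pos m (show 1 ≤ (1-1)*n+j from by omega)
    have hcmono : ∀ i, 1 ≤ i → i < n → c i < c (i+1) := by
      intro i hi1 _
      show ((stmt7sfun m ((i-1)*n + j) : ℕ) : ℤ) < ((stmt7sfun m ((i+1-1)*n + j) : ℕ) : ℤ)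
      have e2 : (i+1-1)*n = (i-1)*n + n := by
        rw [show i+1-1 = (i-1)+1 from by omega]; ring
      exact_mod_cast stmt7sfun_mono m (show (i-1)*n+j < (i+1-1)*n+j from by omega)
    have hcbd : ∀ i, 1 ≤ i → i ≤ n → c i ≤ (stmt7sfun m (n^2) : ℤ) := by
      intro i hi1 hin
      show ((stmt7sfun m ((i-1)*n + j) : ℕ) : ℤ) ≤ ((stmt7sfun m (n^2) : ℕ) : ℤ)
      exact_mod_cast stmt7sfun_le m (hidxbd i j hi1 hin hj.1 hj.2).2
    have hsum : ∀ K : ℕ, (∑ i ∈ Finset.Icc 1 K, A i j)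
        = (((-1:ℤ)^(j+1) * stmt7Q c K : ℤ) : ZMod v) := by
      intro K
      have e1 : (-1:ℤ)^(j+1) * stmt7Q c K = ∑ i ∈ Finset.Icc 1 K, (-1:ℤ)^(i+j) * c i := by
        rw [stmt7Q, Finset.mul_sum]
        refine Finset.sum_congr rfl fun i _ => ?_
        rw [← mul_assoc, ← pow_add]
        congr 1
        rw [show j+1+(i+1) = (i+j)+2 from by ring, pow_add, neg_one_sq, mul_one]
      rw [e1, Int.cast_sum]
    have hε : (-1:ℤ)^(j+1) = 1 ∨ (-1:ℤ)^(j+1) = -1 :=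
      (Nat.even_or_odd (j+1)).elim (fun h => Or.inl (Even.neg_one_pow h))
        (fun h => Or.inr (Odd.neg_one_pow h))
    rw [hsum k]
    exact (key c hc1 hcmono hcbd ((-1:ℤ)^(j+1)) hε).1 k hk.1 hk.2
  · -- column partial sums pairwise distinct
    intro j hj k hk k' hk' heq
    simp only [Finset.mem_Icc] at hj hk hk'
    set c : ℕ → ℤ := fun i => (stmt7sfun m ((i-1)*n + j) : ℤ) with hc
    have hc1 : 1 ≤ c 1 := by
      show (1:ℤ) ≤ ((stmt7sfun m ((1-1)*n + j) : ℕ) : ℤ)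
      exact_mod_cast stmt7sfun_pos m (show 1 ≤ (1-1)*n+j from by omega)
    have hcmono : ∀ i, 1 ≤ i → i < n → c i < c (i+1) := by
      intro i hi1 _
      show ((stmt7sfun m ((i-1)*n + j) : ℕ) : ℤ) < ((stmt7sfun m ((i+1-1)*n + j) : ℕ) : ℤ)
      have e2 : (i+1-1)*n = (i-1)*n + n := by
        rw [show i+1-1 = (i-1)+1 from by omega]; ring
      exact_mod_cast stmt7sfun_mono m (show (i-1)*n+j < (i+1-1)*n+j from by omega)
    have hcbd : ∀ i, 1 ≤ i → i ≤ n → c i ≤ (stmt7sfun m (n^2) : ℤ) := by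
      intro i hi1 hin
      show ((stmt7sfun m ((i-1)*n + j) : ℕ) : ℤ) ≤ ((stmt7sfun m (n^2) : ℕ) : ℤ)
      exact_mod_cast stmt7sfun_le m (hidxbd i j hi1 hin hj.1 hj.2).2
    have hsum : ∀ K : ℕ, (∑ i ∈ Finset.Icc 1 K, A i j)
        = (((-1:ℤ)^(j+1) * stmt7Q c K : ℤ) : ZMod v) := by
      intro K
      have e1 : (-1:ℤ)^(j+1) * stmt7Q c K = ∑ i ∈ Finset.Icc 1 K, (-1:ℤ)^(i+j) * c i := by
        rw [stmt7Q, Finset.mul_sum]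
        refine Finset.sum_congr rfl fun i _ => ?_
        rw [← mul_assoc, ← pow_add]
        congr 1
        rw [show j+1+(i+1) = (i+j)+2 from by ring, pow_add, neg_one_sq, mul_one]
      rw [e1, Int.cast_sum]
    have hε : (-1:ℤ)^(j+1) = 1 ∨ (-1:ℤ)^(j+1) = -1 :=
      (Nat.even_or_odd (j+1)).elim (fun h => Or.inl (Even.neg_one_pow h))
        (fun h => Or.inr (Odd.neg_one_pow h))
    rw [hsum k, hsum k'] at heq
    exact (key c hc1 hcmono hcbd ((-1:ℤ)^(j+1)) hε).2 k k' hk.1 hk.2 hk'.1 hk'.2 heq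
end

section
/- Let n be a prime number. Then for every admissible t, i.e. for every divisor t of 2n² (equivalently t ∈ {1, 2, n, 2n, n², 2n²}), there exists a globally simple tight relative non-zero sum Heffter array NH_t(n;n): setting v = 2n² + t and J = {k·(v/t) : 0 ≤ k < t} (the subgroup of order t of Z_v), there exists an n×n matrix A = (a_{i,j}) with entries in Z_v such that the multiset formed by all a_{i,j} and −a_{i,j} contains every element of Z_v ∖ J exactly once, and every row and every column of A admits a simple natural ordering, i.e. a cyclic rotation of its left-to-right (resp. top-to-bottom) reading whose partial sums are all nonzero and pairwise distinct in Z_v. -/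
/-!
Let `u = 2n²/t + 1`, so that `v = 2n² + t = t u` and `J` is the set of multiples of `u`. The
positive integers `r` with `2 r < v` and `u ∤ r` form a half-set of `Z_v ∖ J`: they contain exactly
one element of each pair `{x, -x}`, and there are exactly `n²` of them. Write them into the array
row by row in increasing order and give entry `(i, j)` the sign `(-1)^(i+j)`.

Every row and every column then reads `b₀, -b₁, b₂, …` up to a global sign, with
`0 < b₀ < b₁ < ⋯ < b_{n-1} < v / 2`. Its partial sums alternate in sign, have absolute value less
than `v / 2`, and the positive ones increase while the negative ones decrease, so they are nonzero
and pairwise distinct modulo `v`.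
-/

open Finset

def altSum (b : ℕ → ℤ) (k : ℕ) : ℤ := ∑ m ∈ range k, (-1) ^ m * b m

section altSum

variable {b : ℕ → ℤ}

theorem altSum_succ (k : ℕ) : altSum b (k + 1) = altSum b k + (-1) ^ k * b k :=
  sum_range_succ _ _

theorem neg_one_pow_mul_altSum_add_two (k : ℕ) :
    (-1) ^ (k + 1) * altSum b (k + 2) = b (k + 1) - (-1) ^ k * altSum b (k + 1) := by
  have hsq : ((-1 : ℤ) ^ k) ^ 2 = 1 := by rw [← pow_mul, pow_mul']; simp
  rw [altSum_succ (k + 1)]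
  linear_combination (b (k + 1)) * hsq

variable (hb : StrictMono b) (hb0 : 0 < b 0)
include hb hb0

theorem neg_one_pow_mul_altSum_succ_mem (k : ℕ) :
    0 < (-1) ^ k * altSum b (k + 1) ∧ (-1) ^ k * altSum b (k + 1) ≤ b k := by
  induction k with
  | zero => simpa [altSum] using hb0
  | succ k ih =>
    rw [neg_one_pow_mul_altSum_add_two]
    have := hb (Nat.lt_succ_self k)
    constructor <;> linarith [ih.1, ih.2]

omit hb0 in
theorem neg_one_pow_mul_altSum_succ_lt (k : ℕ) :
    (-1) ^ k * altSum b (k + 1) < (-1) ^ (k + 2) * altSum b (k + 2 + 1) := by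
  have h := neg_one_pow_mul_altSum_add_two (b := b) (k + 1)
  rw [neg_one_pow_mul_altSum_add_two k] at h
  have := hb (Nat.lt_succ_self (k + 1))
  linarith

theorem altSum_succ_injective : Function.Injective fun k => altSum b (k + 1) := by
  intro k k' h
  simp only at h
  have hsign : k % 2 = k' % 2 := by
    have hk := (neg_one_pow_mul_altSum_succ_mem hb hb0 k).1
    have hk' := (neg_one_pow_mul_altSum_succ_mem hb hb0 k').1
    rw [neg_one_pow_eq_pow_mod_two, h] at hk
    rw [neg_one_pow_eq_pow_mod_two] at hk'
    rcases Nat.mod_two_eq_zero_or_one k with h1 | h1 <;>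
      rcases Nat.mod_two_eq_zero_or_one k' with h2 | h2 <;> simp only [h1, h2] at hk hk' ⊢ <;>
      linarith
  have hmono (p : ℕ) : StrictMono fun j => (-1) ^ (2 * j + p) * altSum b (2 * j + p + 1) :=
    strictMono_nat_of_lt_succ fun j => by
      simpa [show 2 * (j + 1) + p = 2 * j + p + 2 by ring]
        using neg_one_pow_mul_altSum_succ_lt hb (2 * j + p)
  have : k / 2 = k' / 2 := by
    apply (hmono (k % 2)).injective
    dsimp only
    rw [Nat.div_add_mod k, hsign, Nat.div_add_mod, h, neg_one_pow_eq_pow_mod_two, hsign,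
      ← neg_one_pow_eq_pow_mod_two]
  omega

end altSum

def SimplePartialSums {G : Type*} [AddCommMonoid G] (n : ℕ) (a : ℕ → G) : Prop :=
  (∀ k ∈ Icc 1 n, ∑ m ∈ range k, a m ≠ 0) ∧ Set.InjOn (fun k => ∑ m ∈ range k, a m) (Icc 1 n)

namespace SimplePartialSums

variable {n : ℕ}

theorem congr {G : Type*} [AddCommMonoid G] {a a' : ℕ → G} (h : SimplePartialSums n a)
    (haa' : ∀ m < n, a m = a' m) : SimplePartialSums n a' := by
  have hsum : ∀ k ∈ Icc 1 n, ∑ m ∈ range k, a m = ∑ m ∈ range k, a' m := fun k hk =>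
    sum_congr rfl fun m hm => haa' m (by grind)
  exact ⟨fun k hk => hsum k hk ▸ h.1 k hk, h.2.congr fun k hk => hsum k hk⟩

theorem const_mul {R : Type*} [Ring R] {a : ℕ → R} {c : R} (hc : IsUnit c)
    (h : SimplePartialSums n a) : SimplePartialSums n fun m => c * a m := by
  simp only [SimplePartialSums, ← mul_sum]
  exact ⟨fun k hk => by rw [Ne, hc.mul_right_eq_zero]; exact h.1 k hk,
    fun k hk k' hk' hkk' => h.2 hk hk' (hc.mul_left_cancel hkk')⟩

end SimplePartialSums

theorem Int.eq_of_intCast_eq_of_two_mul_abs_lt {V : ℕ} {x y : ℤ} (hx : 2 * |x| < V)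
    (hy : 2 * |y| < V) (h : (x : ZMod V) = y) : x = y := by
  have hdvd := (ZMod.intCast_eq_intCast_iff_dvd_sub _ _ _).mp h
  have := Int.eq_zero_of_abs_lt_dvd hdvd (by linarith [abs_sub y x])
  linarith

theorem simplePartialSums_alternating {V n : ℕ} {b : ℕ → ℤ} (hb : StrictMono b) (hb0 : 0 < b 0)
    (hbV : ∀ m < n, 2 * b m < V) :
    SimplePartialSums n fun m => (((-1) ^ m * b m : ℤ) : ZMod V) := by
  have hsmall : ∀ k ∈ Icc 1 n, altSum b k ≠ 0 ∧ 2 * |altSum b k| < V := by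
    intro k hk
    obtain ⟨k, rfl⟩ : ∃ k₀, k = k₀ + 1 := ⟨k - 1, by grind⟩
    obtain ⟨hpos, hle⟩ := neg_one_pow_mul_altSum_succ_mem hb hb0 k
    have habs : |altSum b (k + 1)| = (-1) ^ k * altSum b (k + 1) := by
      rw [← abs_of_pos hpos, abs_mul, abs_pow, abs_neg, abs_one, one_pow, one_mul]
    refine ⟨fun h0 => by simp [h0] at hpos, ?_⟩
    linarith [hbV k (by grind)]
  have hcast : ∀ k, ∑ m ∈ range k, (((-1) ^ m * b m : ℤ) : ZMod V) = (altSum b k : ZMod V) := by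
    intro k
    simp [altSum]
  refine ⟨fun k hk h0 => (hsmall k hk).1 ?_, fun k hk k' hk' hkk' => ?_⟩
  · rw [hcast, ← Int.cast_zero] at h0
    refine Int.eq_of_intCast_eq_of_two_mul_abs_lt (hsmall k hk).2 ?_ h0
    rw [abs_zero, mul_zero]
    exact lt_of_le_of_lt (by positivity) (hsmall k hk).2
  · simp only [hcast] at hkk'
    obtain ⟨k, rfl⟩ : ∃ k₀, k = k₀ + 1 := ⟨k - 1, by grind⟩
    obtain ⟨k', rfl⟩ : ∃ k₀, k' = k₀ + 1 := ⟨k' - 1, by grind⟩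
    exact congrArg (· + 1) (altSum_succ_injective hb hb0
      (Int.eq_of_intCast_eq_of_two_mul_abs_lt (hsmall _ hk).2 (hsmall _ hk').2 hkk'))

section ZModHalf

variable {V u : ℕ}

theorem natCast_add_natCast_ne_zero {r r' : ℕ} (hr : 0 < r) (h : r + r' < V) :
    (r : ZMod V) + r' ≠ 0 := by
  rw [← Nat.cast_add, Ne, ZMod.natCast_eq_zero_iff]
  exact Nat.not_dvd_of_pos_of_lt (by omega) h

variable [NeZero V]

theorem exists_eq_natCast_mul_iff_dvd_val (huV : u ∣ V) (x : ZMod V) :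
    (∃ y, x = (u : ZMod V) * y) ↔ u ∣ x.val := by
  constructor
  · rintro ⟨y, rfl⟩
    rw [ZMod.val_mul, Nat.dvd_mod_iff huV, ZMod.val_natCast]
    exact ((Nat.dvd_mod_iff huV).mpr dvd_rfl).mul_right _
  · rintro ⟨c, hc⟩
    exact ⟨c, by rw [← ZMod.natCast_zmod_val x, hc, Nat.cast_mul]⟩

theorem not_dvd_val_of_eq_natCast_or_neg (huV : u ∣ V) {r : ℕ} (hr : ¬ u ∣ r) (hrV : r < V)
    {x : ZMod V} (hx : x = r ∨ x = -r) : ¬ u ∣ x.val := by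
  rcases hx with rfl | rfl
  · rwa [ZMod.val_natCast_of_lt hrV]
  · have hr0 : (r : ZMod V) ≠ 0 := by
      rw [Ne, ZMod.natCast_eq_zero_iff]
      exact fun hV => hr (Nat.eq_zero_of_dvd_of_lt hV hrV ▸ dvd_zero u)
    rw [ZMod.neg_val, if_neg hr0, ZMod.val_natCast_of_lt hrV]
    intro hdvd
    exact hr (by simpa [Nat.sub_sub_self hrV.le] using Nat.dvd_sub huV hdvd)

theorem exists_natCast_or_neg_eq (huV : u ∣ V) (hhalf : ∀ r, 2 * r = V → u ∣ r) {x : ZMod V}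
    (hx : ¬ u ∣ x.val) : ∃ r, ¬ u ∣ r ∧ 2 * r < V ∧ (x = r ∨ x = -r) := by
  rcases lt_or_ge (2 * x.val) V with hlt | hge
  · exact ⟨x.val, hx, hlt, .inl (ZMod.natCast_zmod_val x).symm⟩
  · have hne : 2 * x.val ≠ V := fun h => hx (hhalf _ h)
    have := x.val_lt
    refine ⟨V - x.val, fun hdvd => hx ?_, by omega, .inr ?_⟩
    · simpa [Nat.sub_sub_self x.val_lt.le] using Nat.dvd_sub huV hdvd
    · rw [Nat.cast_sub x.val_lt.le, ZMod.natCast_self, zero_sub, neg_neg, ZMod.natCast_zmod_val]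

end ZModHalf

theorem Finset.nodup_bind_pair_neg {ι G : Type*} [AddGroup G] {s : Finset ι} {φ : ι → G}
    (hinj : Set.InjOn φ s) (hne : ∀ p ∈ s, ∀ q ∈ s, φ p ≠ -φ q) :
    (s.val.bind fun p => {φ p, -φ p}).Nodup := by
  rw [Multiset.nodup_bind]
  refine ⟨fun p hp => by simpa using hne p hp p hp, s.nodup.pairwise fun p hp q hq hpq => ?_⟩
  simp only [Function.onFun, Multiset.disjoint_left, Multiset.insert_eq_cons, Multiset.mem_cons,
    Multiset.mem_singleton]
  rintro x (rfl | rfl) (h | h)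
  · exact hpq (hinj hp hq h)
  · exact hne p hp q hq h
  · exact hne q hq p hp h.symm
  · exact hpq (hinj hp hq (neg_injective h))

theorem infinite_setOf_not_dvd {u : ℕ} (hu : 2 ≤ u) : {r | ¬ u ∣ r}.Infinite := by
  refine Set.infinite_of_forall_exists_gt fun a => ⟨a * u + 1, fun hdvd => ?_, by nlinarith⟩
  have := (Nat.dvd_add_right (dvd_mul_left u a)).mp hdvd
  exact absurd (Nat.le_of_dvd one_pos this) (by omega)

theorem not_dvd_nth_not_dvd {u : ℕ} (hu : 2 ≤ u) (k : ℕ) : ¬ u ∣ Nat.nth (fun r => ¬ u ∣ r) k :=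
  Nat.nth_mem_of_infinite (infinite_setOf_not_dvd hu) k

theorem nth_not_dvd_pos {u : ℕ} (hu : 2 ≤ u) (k : ℕ) : 0 < Nat.nth (fun r => ¬ u ∣ r) k :=
  Nat.pos_of_ne_zero fun h0 => not_dvd_nth_not_dvd hu k (h0 ▸ dvd_zero u)

theorem Nat.count_not_dvd_succ (u M : ℕ) : Nat.count (fun r => ¬ u ∣ r) (M + 1) = M - M / u := by
  have hfilter : {r ∈ range (M + 1) | ¬ u ∣ r} = {r ∈ Ioc 0 M | ¬ u ∣ r} := by
    ext r
    simp only [mem_filter, mem_range, mem_Ioc]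
    constructor
    · rintro ⟨hr, hdvd⟩
      exact ⟨⟨Nat.pos_of_ne_zero (by rintro rfl; exact hdvd (dvd_zero u)), by omega⟩, hdvd⟩
    · rintro ⟨hr, hdvd⟩
      exact ⟨by omega, hdvd⟩
  have := card_filter_add_card_filter_not (s := Ioc 0 M) (u ∣ ·)
  rw [Nat.Ioc_filter_dvd_card_eq_div, Nat.card_Ioc] at this
  rw [Nat.count_eq_card_filter_range, hfilter]
  omega

def gridIndex (n : ℕ) (p : ℕ × ℕ) : ℕ := (p.1 - 1) * n + (p.2 - 1)

theorem gridIndex_bijOn (n : ℕ) :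
    Set.BijOn (gridIndex n) ↑(Icc 1 n ×ˢ Icc 1 n) ↑(range (n ^ 2)) := by
  simp only [Set.BijOn, Set.MapsTo, Set.InjOn, Set.SurjOn, Set.subset_def, Set.mem_image,
    coe_product, Set.mem_prod, coe_Icc, Set.mem_Icc, coe_range, Set.mem_Iio, gridIndex]
  refine ⟨fun p hp => ?_, fun p hp q hq hpq => ?_, fun k hk => ?_⟩
  · have ha : p.1 - 1 < n := by omega
    have hb : p.2 - 1 < n := by omega
    nlinarith
  · have hn : 0 < n := by omega
    have hdivmod (p : ℕ × ℕ) (hp : 1 ≤ p.2 ∧ p.2 ≤ n) :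
        ((p.1 - 1) * n + (p.2 - 1)) / n = p.1 - 1 ∧ ((p.1 - 1) * n + (p.2 - 1)) % n = p.2 - 1 :=
      (Nat.div_mod_unique hn).mpr ⟨by ring, by omega⟩
    have h1 := hdivmod p hp.2
    have h2 := hdivmod q hq.2
    rw [hpq] at h1
    exact Prod.ext (by omega) (by omega)
  · have hn : 0 < n := Nat.pos_of_ne_zero (by rintro rfl; simp at hk)
    have hdiv := (Nat.div_lt_iff_lt_mul hn).mpr (by rwa [← sq])
    have hmod := Nat.mod_lt k hn
    exact ⟨(k / n + 1, k % n + 1), ⟨⟨le_add_self, hdiv⟩, le_add_self, hmod⟩,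
      by simpa using Nat.div_add_mod' k n⟩

noncomputable def heffterArray (V u n i j : ℕ) : ZMod V :=
  (-1) ^ (i + j) * (Nat.nth (fun r => ¬ u ∣ r) (gridIndex n (i, j)) : ZMod V)

theorem heffterArray_pair_eq (V u n : ℕ) (p : ℕ × ℕ) :
    ({heffterArray V u n p.1 p.2, -heffterArray V u n p.1 p.2} : Multiset (ZMod V)) =
      {(Nat.nth (fun r => ¬ u ∣ r) (gridIndex n p) : ZMod V),
        -(Nat.nth (fun r => ¬ u ∣ r) (gridIndex n p) : ZMod V)} := by
  rcases neg_one_pow_eq_or (ZMod V) (p.1 + p.2) with h | h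
  · simp only [heffterArray, h, one_mul]
  · simp only [heffterArray, h, neg_one_mul, neg_neg]
    exact Multiset.pair_comm _ _

section HeffterArray

variable {V u n : ℕ} (hcount : Nat.count (fun r => ¬ u ∣ r) ((V + 1) / 2) = n ^ 2)
include hcount

theorem two_mul_nth_not_dvd_lt {k : ℕ} (hk : k < n ^ 2) :
    2 * Nat.nth (fun r => ¬ u ∣ r) k < V := by
  have := Nat.nth_lt_of_lt_count (hcount ▸ hk)
  omega

theorem exists_nth_not_dvd_eq {r : ℕ} (hr : ¬ u ∣ r) (h2r : 2 * r < V) :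
    ∃ k < n ^ 2, Nat.nth (fun r => ¬ u ∣ r) k = r :=
  ⟨_, hcount ▸ Nat.count_strict_mono hr (by omega), Nat.nth_count hr⟩

variable (hu : 2 ≤ u)
include hu

theorem simplePartialSums_nth_not_dvd {e : ℕ → ℕ} (he : StrictMono e)
    (hen : ∀ m < n, e m < n ^ 2) {c : ZMod V} (hc : IsUnit c) :
    SimplePartialSums n fun m => c * ((-1) ^ m * Nat.nth (fun r => ¬ u ∣ r) (e m)) := by
  have := simplePartialSums_alternating (V := V) (n := n)
    (b := fun m => (Nat.nth (fun r => ¬ u ∣ r) (e m) : ℤ))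
    (fun m m' h => Nat.cast_lt.mpr (Nat.nth_strictMono (infinite_setOf_not_dvd hu) (he h)))
    (Nat.cast_pos.mpr (nth_not_dvd_pos hu _))
    (fun m hm => by exact_mod_cast two_mul_nth_not_dvd_lt hcount (hen m hm))
  simpa using this.const_mul hc

theorem simplePartialSums_heffterArray_row {i : ℕ} (hi : i ∈ Icc 1 n) :
    SimplePartialSums n fun m => heffterArray V u n i (m + 1) := by
  refine (simplePartialSums_nth_not_dvd hcount hu (e := fun m => gridIndex n (i, m + 1))
    (fun m m' h => by simp only [gridIndex]; omega)
    (fun m hm => mem_range.mp ((gridIndex_bijOn n).mapsTo (by simp_all)))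
    ((isUnit_neg_one).pow (i + 1))).congr fun m _ => ?_
  simp only [heffterArray]
  ring

theorem simplePartialSums_heffterArray_col {j : ℕ} (hj : j ∈ Icc 1 n) :
    SimplePartialSums n fun m => heffterArray V u n (m + 1) j := by
  have hn : 0 < n := by simp at hj; omega
  refine (simplePartialSums_nth_not_dvd hcount hu (e := fun m => gridIndex n (m + 1, j))
    (fun m m' h => by simp only [gridIndex, Nat.add_sub_cancel]; nlinarith)
    (fun m hm => mem_range.mp ((gridIndex_bijOn n).mapsTo (by simp_all)))
    ((isUnit_neg_one).pow (j + 1))).congr fun m _ => ?_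
  simp only [heffterArray]
  ring

theorem nodup_bind_nth_not_dvd_pair :
    ((Icc 1 n ×ˢ Icc 1 n).val.bind fun p =>
      {(Nat.nth (fun r => ¬ u ∣ r) (gridIndex n p) : ZMod V),
        -(Nat.nth (fun r => ¬ u ∣ r) (gridIndex n p) : ZMod V)}).Nodup := by
  have hV : ∀ p ∈ Icc 1 n ×ˢ Icc 1 n, 2 * Nat.nth (fun r => ¬ u ∣ r) (gridIndex n p) < V :=
    fun p hp => two_mul_nth_not_dvd_lt hcount (mem_range.mp ((gridIndex_bijOn n).mapsTo hp))
  refine Finset.nodup_bind_pair_neg (fun p hp q hq hpq => ?_) fun p hp q hq h => ?_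
  · have := congrArg ZMod.val hpq
    rw [ZMod.val_natCast_of_lt (by linarith [hV p hp]),
      ZMod.val_natCast_of_lt (by linarith [hV q hq])] at this
    exact (gridIndex_bijOn n).injOn hp hq
      ((Nat.nth_strictMono (infinite_setOf_not_dvd hu)).injective this)
  · exact natCast_add_natCast_ne_zero (nth_not_dvd_pos hu _) (by linarith [hV p hp, hV q hq])
      (eq_neg_iff_add_eq_zero.mp h)

theorem count_bind_heffterArray [NeZero V] (huV : u ∣ V) (hhalf : ∀ r, 2 * r = V → u ∣ r)
    (x : ZMod V) :
    Multiset.count x ((Icc 1 n ×ˢ Icc 1 n).val.bind fun p =>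
        {heffterArray V u n p.1 p.2, -heffterArray V u n p.1 p.2}) =
      if u ∣ x.val then 0 else 1 := by
  rw [Multiset.bind_congr fun p _ => heffterArray_pair_eq V u n p]
  split_ifs with hx
  · refine Multiset.count_eq_zero.mpr fun hmem => ?_
    obtain ⟨p, hp, hxp⟩ := Multiset.mem_bind.mp hmem
    have hpV := two_mul_nth_not_dvd_lt hcount (mem_range.mp ((gridIndex_bijOn n).mapsTo hp))
    exact not_dvd_val_of_eq_natCast_or_neg huV (not_dvd_nth_not_dvd hu (gridIndex n p)) (by omega)
      (by simpa using hxp) hx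
  · obtain ⟨r, hr, h2r, hxr⟩ := exists_natCast_or_neg_eq huV hhalf hx
    obtain ⟨k, hk, rfl⟩ := exists_nth_not_dvd_eq hcount hr h2r
    obtain ⟨p, hp, rfl⟩ := (gridIndex_bijOn n).surjOn (by simpa using hk)
    exact Multiset.count_eq_one_of_mem (nodup_bind_nth_not_dvd_pair hcount hu)
      (Multiset.mem_bind.mpr ⟨p, hp, by simpa using hxr⟩)

end HeffterArray

section Parameters

variable {t s N : ℕ} (h : t * s = 2 * N)
include h

theorem succ_dvd_two_mul_add : s + 1 ∣ 2 * N + t := ⟨t, by linarith⟩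

theorem succ_dvd_of_two_mul_eq {r : ℕ} (hr : 2 * r = 2 * N + t) : s + 1 ∣ r := by
  obtain ⟨q, rfl⟩ : 2 ∣ t := ⟨r - N, by omega⟩
  exact ⟨q, by nlinarith⟩

theorem count_not_dvd_half (ht : 0 < t) :
    Nat.count (fun r => ¬ s + 1 ∣ r) ((2 * N + t + 1) / 2) = N := by
  have hM : (2 * N + t + 1) / 2 = N + (t - 1) / 2 + 1 := by omega
  have hdiv : (N + (t - 1) / 2) / (s + 1) = (t - 1) / 2 := by
    obtain ⟨q, hq⟩ : ∃ q, (t - 1) / 2 = q := ⟨_, rfl⟩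
    have ht : t = 2 * q + 1 ∨ t = 2 * q + 2 := by omega
    rw [hq]
    apply Nat.div_eq_of_lt_le <;> rcases ht with rfl | rfl <;> nlinarith
  rw [hM, Nat.count_not_dvd_succ, hdiv]
  omega

end Parameters

theorem stmt8_general (n t : ℕ) (ht : t ∣ 2 * n ^ 2) :
    ∃ A : ℕ → ℕ → ZMod (2 * n ^ 2 + t),
      (∀ x : ZMod (2 * n ^ 2 + t),
        (∃ y : ZMod (2 * n ^ 2 + t), x = ((2 * n ^ 2 / t + 1 : ℕ) : ZMod (2 * n ^ 2 + t)) * y) →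
        Multiset.count x
          (((Finset.Icc 1 n ×ˢ Finset.Icc 1 n).val).bind
            (fun p => ({A p.1 p.2, -A p.1 p.2} : Multiset (ZMod (2 * n ^ 2 + t))))) = 0) ∧
      (∀ x : ZMod (2 * n ^ 2 + t),
        ¬(∃ y : ZMod (2 * n ^ 2 + t), x = ((2 * n ^ 2 / t + 1 : ℕ) : ZMod (2 * n ^ 2 + t)) * y) →
        Multiset.count x
          (((Finset.Icc 1 n ×ˢ Finset.Icc 1 n).val).bind
            (fun p => ({A p.1 p.2, -A p.1 p.2} : Multiset (ZMod (2 * n ^ 2 + t))))) = 1) ∧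
      (∀ i ∈ Finset.Icc 1 n, ∃ r < n,
        (∀ k ∈ Finset.Icc 1 n,
          (∑ m ∈ Finset.range k, A i ((r + m) % n + 1)) ≠ 0) ∧
        (∀ k ∈ Finset.Icc 1 n, ∀ k' ∈ Finset.Icc 1 n,
          (∑ m ∈ Finset.range k, A i ((r + m) % n + 1)) =
            (∑ m ∈ Finset.range k', A i ((r + m) % n + 1)) → k = k')) ∧
      (∀ j ∈ Finset.Icc 1 n, ∃ r < n,
        (∀ k ∈ Finset.Icc 1 n,
          (∑ m ∈ Finset.range k, A ((r + m) % n + 1) j) ≠ 0) ∧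
        (∀ k ∈ Finset.Icc 1 n, ∀ k' ∈ Finset.Icc 1 n,
          (∑ m ∈ Finset.range k, A ((r + m) % n + 1) j) =
            (∑ m ∈ Finset.range k', A ((r + m) % n + 1) j) → k = k')) := by
  rcases Nat.eq_zero_or_pos n with rfl | hn
  · exact ⟨0, by simp, fun x hx => absurd ⟨x, by simp⟩ hx, by simp, by simp⟩
  have ht0 : 0 < t := Nat.pos_of_dvd_of_pos ht (by positivity)
  have hts : t * (2 * n ^ 2 / t) = 2 * n ^ 2 := Nat.mul_div_cancel' ht
  have hu : 2 ≤ 2 * n ^ 2 / t + 1 :=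
    Nat.succ_le_succ (Nat.div_pos (Nat.le_of_dvd (by positivity) ht) ht0)
  have : NeZero (2 * n ^ 2 + t) := ⟨by omega⟩
  have huV := succ_dvd_two_mul_add hts
  have hcount := count_not_dvd_half hts ht0
  have hhalf := fun r => succ_dvd_of_two_mul_eq hts (r := r)
  have hJ := exists_eq_natCast_mul_iff_dvd_val (V := 2 * n ^ 2 + t) huV
  refine ⟨heffterArray _ (2 * n ^ 2 / t + 1) n, fun x hx => ?_, fun x hx => ?_,
    fun i hi => ⟨0, hn, ?_⟩, fun j hj => ⟨0, hn, ?_⟩⟩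
  · rw [count_bind_heffterArray hcount hu huV hhalf, if_pos ((hJ x).mp hx)]
  · rw [count_bind_heffterArray hcount hu huV hhalf, if_neg (mt (hJ x).mpr hx)]
  · exact (simplePartialSums_heffterArray_row hcount hu hi).congr fun m hm => by
      rw [zero_add, Nat.mod_eq_of_lt hm]
  · exact (simplePartialSums_heffterArray_col hcount hu hj).congr fun m hm => by
      rw [zero_add, Nat.mod_eq_of_lt hm]

/-- Theorem 3.16: for every prime n and every divisor t of 2n² there exists a globally
simple tight relative non-zero sum Heffter array NH_t(n;n) over Z_{2n²+t}; here the
subgroup J of order t consists of the multiples of v/t = 2n²/t + 1, and "globally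
simple" means every row and column admits a simple natural ordering, i.e. a cyclic
rotation (starting point r) of its reading whose partial sums are nonzero and pairwise
distinct. -/
theorem stmt8 (n t : ℕ) (hn : n.Prime) (ht : t ∣ 2 * n ^ 2) :
    ∃ A : ℕ → ℕ → ZMod (2 * n ^ 2 + t),
      (∀ x : ZMod (2 * n ^ 2 + t),
        (∃ y : ZMod (2 * n ^ 2 + t), x = ((2 * n ^ 2 / t + 1 : ℕ) : ZMod (2 * n ^ 2 + t)) * y) →
        Multiset.count x
          (((Finset.Icc 1 n ×ˢ Finset.Icc 1 n).val).bind
            (fun p => ({A p.1 p.2, -A p.1 p.2} : Multiset (ZMod (2 * n ^ 2 + t))))) = 0) ∧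
      (∀ x : ZMod (2 * n ^ 2 + t),
        ¬(∃ y : ZMod (2 * n ^ 2 + t), x = ((2 * n ^ 2 / t + 1 : ℕ) : ZMod (2 * n ^ 2 + t)) * y) →
        Multiset.count x
          (((Finset.Icc 1 n ×ˢ Finset.Icc 1 n).val).bind
            (fun p => ({A p.1 p.2, -A p.1 p.2} : Multiset (ZMod (2 * n ^ 2 + t))))) = 1) ∧
      (∀ i ∈ Finset.Icc 1 n, ∃ r < n,
        (∀ k ∈ Finset.Icc 1 n,
          (∑ m ∈ Finset.range k, A i ((r + m) % n + 1)) ≠ 0) ∧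
        (∀ k ∈ Finset.Icc 1 n, ∀ k' ∈ Finset.Icc 1 n,
          (∑ m ∈ Finset.range k, A i ((r + m) % n + 1)) =
            (∑ m ∈ Finset.range k', A i ((r + m) % n + 1)) → k = k')) ∧
      (∀ j ∈ Finset.Icc 1 n, ∃ r < n,
        (∀ k ∈ Finset.Icc 1 n,
          (∑ m ∈ Finset.range k, A ((r + m) % n + 1) j) ≠ 0) ∧
        (∀ k ∈ Finset.Icc 1 n, ∀ k' ∈ Finset.Icc 1 n,
          (∑ m ∈ Finset.range k, A ((r + m) % n + 1) j) =
            (∑ m ∈ Finset.range k', A ((r + m) % n + 1) j) → k = k')) :=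
  stmt8_general n t ht
end

section
/- Let n ≥ 1 and let A = (a_{i,j}) be the n×n matrix over Z_{2n²+2} defined by a_{i,j} = (−1)^{i+j}·(j + (i−1)n). If n is odd, then for every j ∈ [1,n] the sum of the entries of column j equals (−1)^{j+1}·(j + n(n−1)/2) in Z_{2n²+2}, and for every i ∈ [1,n] the sum of the entries of row i equals (−1)^{i+1}·((i−1)n + (n+1)/2) in Z_{2n²+2}. If n is even, then for every j ∈ [1,n] the sum of column j equals (−1)^j·n²/2 and for every i ∈ [1,n] the sum of row i equals (−1)^i·n/2 in Z_{2n²+2}. -/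
/-!
Up to the sign (-1)^j (resp. (-1)^i), a column (resp. row) sum is an alternating sum
∑ₜ (-1)^t (a + b t) of an arithmetic progression. Grouping consecutive terms in pairs, each
pair contributes the common difference b, so the sum is b k for n = 2k and -(a + b(k+1))
for n = 2k+1; the integer quotients n(n-1)/2, (n+1)/2, n²/2 and n/2 are exact.
-/
open Finset

section AlternatingSum

variable {R : Type*} [CommRing R]

theorem sum_Icc_neg_one_pow_mul_of_eq_two_mul (a b : R) {n k : ℕ} (hk : n = 2 * k) :
    ∑ t ∈ Icc 1 n, (-1 : R) ^ t * (a + b * t) = b * k := by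
  subst hk
  induction k with
  | zero => simp
  | succ k ih =>
    rw [show 2 * (k + 1) = 2 * k + 1 + 1 by ring, sum_Icc_succ_top (by omega),
      sum_Icc_succ_top (by omega), ih]
    simp only [pow_succ, pow_mul]
    push_cast
    ring

theorem sum_Icc_neg_one_pow_mul_of_eq_two_mul_add_one (a b : R) {n k : ℕ}
    (hk : n = 2 * k + 1) :
    ∑ t ∈ Icc 1 n, (-1 : R) ^ t * (a + b * t) = -(a + b * (k + 1)) := by
  rw [hk, sum_Icc_succ_top (by omega), sum_Icc_neg_one_pow_mul_of_eq_two_mul a b rfl,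
    pow_succ, (even_two_mul k).neg_one_pow]
  push_cast
  ring

end AlternatingSum

theorem stmt9_general (n : ℕ) (A : ℕ → ℕ → ZMod (2 * n ^ 2 + 2))
    (hA : ∀ i ∈ Finset.Icc 1 n, ∀ j ∈ Finset.Icc 1 n,
      A i j = (((-1) ^ (i + j) * ((j : ℤ) + ((i : ℤ) - 1) * n) : ℤ) : ZMod (2 * n ^ 2 + 2))) :
    (Odd n →
      (∀ j ∈ Finset.Icc 1 n,
        (∑ i ∈ Finset.Icc 1 n, A i j) =
          (((-1) ^ (j + 1) * ((j : ℤ) + (n : ℤ) * ((n : ℤ) - 1) / 2) : ℤ)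
            : ZMod (2 * n ^ 2 + 2))) ∧
      (∀ i ∈ Finset.Icc 1 n,
        (∑ j ∈ Finset.Icc 1 n, A i j) =
          (((-1) ^ (i + 1) * (((i : ℤ) - 1) * n + ((n : ℤ) + 1) / 2) : ℤ)
            : ZMod (2 * n ^ 2 + 2)))) ∧
    (Even n →
      (∀ j ∈ Finset.Icc 1 n,
        (∑ i ∈ Finset.Icc 1 n, A i j) =
          (((-1) ^ j * ((n : ℤ) ^ 2 / 2) : ℤ) : ZMod (2 * n ^ 2 + 2))) ∧
      (∀ i ∈ Finset.Icc 1 n,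
        (∑ j ∈ Finset.Icc 1 n, A i j) =
          (((-1) ^ i * ((n : ℤ) / 2) : ℤ) : ZMod (2 * n ^ 2 + 2)))) := by
  have hcol (j) (hj : j ∈ Icc 1 n) : ∑ i ∈ Icc 1 n, A i j =
      (-1) ^ j * ∑ i ∈ Icc 1 n, (-1) ^ i * (((j : ZMod (2 * n ^ 2 + 2)) - n) + n * i) := by
    rw [mul_sum]
    exact sum_congr rfl fun i hi => by rw [hA i hi j hj]; push_cast; ring
  have hrow (i) (hi : i ∈ Icc 1 n) : ∑ j ∈ Icc 1 n, A i j =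
      (-1) ^ i * ∑ j ∈ Icc 1 n, (-1) ^ j * (((i : ZMod (2 * n ^ 2 + 2)) - 1) * n + 1 * j) := by
    rw [mul_sum]
    exact sum_congr rfl fun j hj => by rw [hA i hi j hj]; push_cast; ring
  refine ⟨fun ⟨k, hk⟩ => ⟨fun j hj => ?_, fun i hi => ?_⟩,
    fun ⟨k, hk⟩ => ⟨fun j hj => ?_, fun i hi => ?_⟩⟩
  · rw [hcol j hj, sum_Icc_neg_one_pow_mul_of_eq_two_mul_add_one _ _ hk,
      Int.ediv_eq_of_eq_mul_left two_ne_zero (show (n : ℤ) * (n - 1) = n * k * 2 by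
        rw [hk]; push_cast; ring)]
    push_cast
    ring
  · rw [hrow i hi, sum_Icc_neg_one_pow_mul_of_eq_two_mul_add_one _ _ hk,
      show ((n : ℤ) + 1) / 2 = k + 1 by omega]
    push_cast
    ring
  · rw [hcol j hj, sum_Icc_neg_one_pow_mul_of_eq_two_mul _ _ (by omega : n = 2 * k),
      Int.ediv_eq_of_eq_mul_left two_ne_zero (show (n : ℤ) ^ 2 = n * k * 2 by
        rw [hk]; push_cast; ring)]
    push_cast
    ring
  · rw [hrow i hi, sum_Icc_neg_one_pow_mul_of_eq_two_mul _ _ (by omega : n = 2 * k),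
      show (n : ℤ) / 2 = k by omega]
    push_cast
    ring

/-- Remark 3.3: total row and column sums of the matrix
a_{i,j} = (−1)^{i+j}·(j + (i−1)n) over Z_{2n²+2}. -/
theorem stmt9 (n : ℕ) (hn : 1 ≤ n) (A : ℕ → ℕ → ZMod (2 * n ^ 2 + 2))
    (hA : ∀ i ∈ Finset.Icc 1 n, ∀ j ∈ Finset.Icc 1 n,
      A i j = (((-1) ^ (i + j) * ((j : ℤ) + ((i : ℤ) - 1) * n) : ℤ) : ZMod (2 * n ^ 2 + 2))) :
    (Odd n →
      (∀ j ∈ Finset.Icc 1 n,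
        (∑ i ∈ Finset.Icc 1 n, A i j) =
          (((-1) ^ (j + 1) * ((j : ℤ) + (n : ℤ) * ((n : ℤ) - 1) / 2) : ℤ)
            : ZMod (2 * n ^ 2 + 2))) ∧
      (∀ i ∈ Finset.Icc 1 n,
        (∑ j ∈ Finset.Icc 1 n, A i j) =
          (((-1) ^ (i + 1) * (((i : ℤ) - 1) * n + ((n : ℤ) + 1) / 2) : ℤ)
            : ZMod (2 * n ^ 2 + 2)))) ∧
    (Even n →
      (∀ j ∈ Finset.Icc 1 n,
        (∑ i ∈ Finset.Icc 1 n, A i j) =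
          (((-1) ^ j * ((n : ℤ) ^ 2 / 2) : ℤ) : ZMod (2 * n ^ 2 + 2))) ∧
      (∀ i ∈ Finset.Icc 1 n,
        (∑ j ∈ Finset.Icc 1 n, A i j) =
          (((-1) ^ i * ((n : ℤ) / 2) : ℤ) : ZMod (2 * n ^ 2 + 2)))) :=
  stmt9_general n A hA
end

section
/- Let n ≥ 1 be odd and let A = (a_{i,j}) be the n×n matrix over Z_{2n²+2n} defined by a_{i,j} = i + (n+1)(j−1) when i ≡ j (mod 2) and a_{i,j} = n² + n − i − (n+1)(j−1) when i ≢ j (mod 2). Then for every j ∈ [1,n] the sum of the entries of column j equals (n+1)·(n² + (−1)^j(n+1−2j))/2 in Z_{2n²+2n}, and for every i ∈ [1,n] the sum of the entries of row i equals (n²+n)/2 + (−1)^i·((n³+1)/2 − i) in Z_{2n²+2n}. -/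
/-!
Write `n = 2k + 1` and `c = (n² + n)/2 = (k + 1)(2k + 1)`. Both cases of the definition merge into
`a i j = c + (-1)^(i+j) (i + (n + 1)(j - 1) - c)`, so every row and column sum is `n c` plus an
alternating sum `∑ (-1)^m (α m + β)` over `m ∈ [1, 2k + 1]`, which equals
`-(α (k + 1) + β)`.
This gives the column sums exactly in `ℤ`; the row sums agree with the stated value exactly for
even `i` and up to `k (2n² + 2n)` for odd `i`.
-/

open Finset

theorem sum_Icc_neg_one_pow_mul_add {R : Type*} [CommRing R] (a b : R) (k : ℕ) :
    ∑ m ∈ Icc 1 (2 * k + 1), (-1 : R) ^ m * (a * m + b) = -(a * (k + 1) + b) := by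
  induction k with
  | zero => simp
  | succ k ih =>
    rw [show 2 * (k + 1) + 1 = 2 * k + 1 + 1 + 1 by ring, sum_Icc_succ_top (by omega),
      sum_Icc_succ_top (by omega), ih, Even.neg_one_pow ⟨k + 1, by ring⟩,
      Odd.neg_one_pow ⟨k + 1, by ring⟩]
    push_cast
    ring

def matrixEntry (k i j : ℕ) : ℤ :=
  (k + 1) * (2 * k + 1) +
    (-1) ^ (i + j) * (i + (2 * k + 2) * ((j : ℤ) - 1) - (k + 1) * (2 * k + 1))

theorem neg_one_pow_add_of_mod_two_eq {R : Type*} [Monoid R] [HasDistribNeg R] {i j : ℕ}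
    (h : i % 2 = j % 2) : (-1 : R) ^ (i + j) = 1 :=
  Even.neg_one_pow (Nat.even_add.mpr (by simp only [Nat.even_iff]; omega))

theorem neg_one_pow_add_of_mod_two_ne {R : Type*} [Monoid R] [HasDistribNeg R] {i j : ℕ}
    (h : i % 2 ≠ j % 2) : (-1 : R) ^ (i + j) = -1 :=
  Odd.neg_one_pow (Nat.odd_add.mpr (by simp only [Nat.even_iff, Nat.odd_iff]; omega))

theorem matrixEntry_of_mod_two_eq {k i j : ℕ} (h : i % 2 = j % 2) :
    matrixEntry k i j = i + (2 * k + 2) * ((j : ℤ) - 1) := by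
  rw [matrixEntry, neg_one_pow_add_of_mod_two_eq h]
  ring

theorem matrixEntry_of_mod_two_ne {k i j : ℕ} (h : i % 2 ≠ j % 2) :
    matrixEntry k i j = (2 * k + 1) ^ 2 + (2 * k + 1) - i - (2 * k + 2) * ((j : ℤ) - 1) := by
  rw [matrixEntry, neg_one_pow_add_of_mod_two_ne h]
  ring

theorem sum_matrixEntry_col (k j : ℕ) :
    ∑ i ∈ Icc 1 (2 * k + 1), matrixEntry k i j =
      (k + 1) * ((2 * k + 1) ^ 2 + (-1) ^ j * (2 * k + 2 - 2 * (j : ℤ))) := by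
  have h : ∀ i ∈ Icc 1 (2 * k + 1), matrixEntry k i j = (k + 1) * (2 * k + 1) +
      (-1) ^ i * ((-1) ^ j * i +
        (-1) ^ j * ((2 * k + 2) * ((j : ℤ) - 1) - (k + 1) * (2 * k + 1))) := by
    intro i _
    rw [matrixEntry, pow_add]
    ring
  rw [sum_congr rfl h, sum_add_distrib, sum_const, Nat.card_Icc, sum_Icc_neg_one_pow_mul_add,
    nsmul_eq_mul]
  push_cast
  ring

theorem sum_matrixEntry_row (k i : ℕ) :
    ∑ j ∈ Icc 1 (2 * k + 1), matrixEntry k i j =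
      (2 * k + 1) * ((k + 1) * (2 * k + 1)) + (-1) ^ i * (k + 1 - (i : ℤ)) := by
  have h : ∀ j ∈ Icc 1 (2 * k + 1), matrixEntry k i j = (k + 1) * (2 * k + 1) +
      (-1) ^ j * ((-1) ^ i * (2 * k + 2) * j +
        (-1) ^ i * (i - (2 * k + 2) - (k + 1) * (2 * k + 1))) := by
    intro j _
    rw [matrixEntry, pow_add]
    ring
  rw [sum_congr rfl h, sum_add_distrib, sum_const, Nat.card_Icc, sum_Icc_neg_one_pow_mul_add,
    nsmul_eq_mul]
  push_cast
  ring

theorem sum_matrixEntry_row_eq_mod (k i : ℕ) :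
    ((∑ j ∈ Icc 1 (2 * k + 1), matrixEntry k i j : ℤ) :
        ZMod (2 * (2 * k + 1) ^ 2 + 2 * (2 * k + 1))) =
      (((k + 1) * (2 * k + 1) + (-1) ^ i * ((k + 1) * (4 * k ^ 2 + 2 * k + 1) - (i : ℤ)) : ℤ) :
        ZMod (2 * (2 * k + 1) ^ 2 + 2 * (2 * k + 1))) := by
  rw [sum_matrixEntry_row, ZMod.intCast_eq_intCast_iff_dvd_sub]
  rcases neg_one_pow_eq_or ℤ i with h | h
  · exact ⟨0, by rw [h]; ring⟩
  · exact ⟨-k, by rw [h]; push_cast; ring⟩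

theorem stmt10_general (n : ℕ) (hodd : Odd n)
    (A : ℕ → ℕ → ZMod (2 * n ^ 2 + 2 * n))
    (hA : ∀ i ∈ Finset.Icc 1 n, ∀ j ∈ Finset.Icc 1 n,
      (i % 2 = j % 2 →
        A i j = (((i : ℤ) + ((n : ℤ) + 1) * ((j : ℤ) - 1) : ℤ) : ZMod (2 * n ^ 2 + 2 * n))) ∧
      (i % 2 ≠ j % 2 →
        A i j = (((n : ℤ) ^ 2 + n - i - ((n : ℤ) + 1) * ((j : ℤ) - 1) : ℤ)
          : ZMod (2 * n ^ 2 + 2 * n)))) :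
    (∀ j ∈ Finset.Icc 1 n,
      (∑ i ∈ Finset.Icc 1 n, A i j) =
        (((((n : ℤ) + 1) * ((n : ℤ) ^ 2 + (-1) ^ j * ((n : ℤ) + 1 - 2 * j)) / 2) : ℤ)
          : ZMod (2 * n ^ 2 + 2 * n))) ∧
    (∀ i ∈ Finset.Icc 1 n,
      (∑ j ∈ Finset.Icc 1 n, A i j) =
        (((((n : ℤ) ^ 2 + n) / 2 + (-1) ^ i * (((n : ℤ) ^ 3 + 1) / 2 - i)) : ℤ)
          : ZMod (2 * n ^ 2 + 2 * n))) := by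
  obtain ⟨k, rfl⟩ := hodd
  have hA_entry :
      ∀ i ∈ Icc 1 (2 * k + 1), ∀ j ∈ Icc 1 (2 * k + 1), A i j = matrixEntry k i j := by
    intro i hi j hj
    by_cases h : i % 2 = j % 2
    · rw [(hA i hi j hj).1 h, matrixEntry_of_mod_two_eq h]
      push_cast
      ring
    · rw [(hA i hi j hj).2 h, matrixEntry_of_mod_two_ne h]
      push_cast
      ring
  have hcol (j : ℕ) : ((((2 * k + 1 : ℕ) : ℤ) + 1) * (((2 * k + 1 : ℕ) : ℤ) ^ 2 +
      (-1) ^ j * (((2 * k + 1 : ℕ) : ℤ) + 1 - 2 * j))) / 2 =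
      (k + 1) * ((2 * k + 1) ^ 2 + (-1) ^ j * (2 * k + 2 - 2 * (j : ℤ))) :=
    Int.ediv_eq_of_eq_mul_left two_ne_zero (by push_cast; ring)
  have hc :
      (((2 * k + 1 : ℕ) : ℤ) ^ 2 + ((2 * k + 1 : ℕ) : ℤ)) / 2 = (k + 1) * (2 * k + 1) :=
    Int.ediv_eq_of_eq_mul_left two_ne_zero (by push_cast; ring)
  have hd : (((2 * k + 1 : ℕ) : ℤ) ^ 3 + 1) / 2 = (k + 1) * (4 * k ^ 2 + 2 * k + 1) :=
    Int.ediv_eq_of_eq_mul_left two_ne_zero (by push_cast; ring)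
  refine ⟨fun j hj => ?_, fun i hi => ?_⟩
  · rw [sum_congr rfl fun i hi => hA_entry i hi j hj, ← Int.cast_sum,
      sum_matrixEntry_col, hcol]
  · rw [sum_congr rfl fun j hj => hA_entry i hi j hj, ← Int.cast_sum,
      sum_matrixEntry_row_eq_mod, hc, hd]

/-- Remark 3.5: total row and column sums of the matrix of Proposition 3.4
(the globally simple NH_{2n}(n;n)) over Z_{2n²+2n}, n odd. -/
theorem stmt10 (n : ℕ) (hn : 1 ≤ n) (hodd : Odd n)
    (A : ℕ → ℕ → ZMod (2 * n ^ 2 + 2 * n))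
    (hA : ∀ i ∈ Finset.Icc 1 n, ∀ j ∈ Finset.Icc 1 n,
      (i % 2 = j % 2 →
        A i j = (((i : ℤ) + ((n : ℤ) + 1) * ((j : ℤ) - 1) : ℤ) : ZMod (2 * n ^ 2 + 2 * n))) ∧
      (i % 2 ≠ j % 2 →
        A i j = (((n : ℤ) ^ 2 + n - i - ((n : ℤ) + 1) * ((j : ℤ) - 1) : ℤ)
          : ZMod (2 * n ^ 2 + 2 * n)))) :
    (∀ j ∈ Finset.Icc 1 n,
      (∑ i ∈ Finset.Icc 1 n, A i j) =
        (((((n : ℤ) + 1) * ((n : ℤ) ^ 2 + (-1) ^ j * ((n : ℤ) + 1 - 2 * j)) / 2) : ℤ)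
          : ZMod (2 * n ^ 2 + 2 * n))) ∧
    (∀ i ∈ Finset.Icc 1 n,
      (∑ j ∈ Finset.Icc 1 n, A i j) =
        (((((n : ℤ) ^ 2 + n) / 2 + (-1) ^ i * (((n : ℤ) ^ 3 + 1) / 2 - i)) : ℤ)
          : ZMod (2 * n ^ 2 + 2 * n))) :=
  stmt10_general n hodd A hA
end

section
/- Let n ≥ 1 be odd and let A = (a_{i,j}) be the n×n matrix over Z_{3n²} defined by a_{i,j} = (−1)^{i+j}·(3n(j−1) + 3(i−1) + 1) for 1 ≤ j ≤ (n+1)/2 and a_{i,j} = (−1)^{i+j}·(3nj − 3i + 1) for (n+3)/2 ≤ j ≤ n. Then for every j ∈ [1,n] the sum of the entries of column j equals (−1)^{j−1}·(3nj − (3n+1)/2) in Z_{3n²}. Moreover, if n ≡ 1 (mod 4) then for every i ∈ [1,n] the sum of the entries of row i equals (−1)^{i−1}·(3i − 2 + 3n(n−1)/2), while if n ≡ 3 (mod 4) then for every i ∈ [1,n] the sum of the entries of row i equals (−1)^{i−1}·(3(n+1−i) − 2 + 3n(n−1)/2), in Z_{3n²}. -/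
/-!
Every entry of `A` is the reduction of an explicit integer, and its row and column sums can
already be computed in `ℤ`. Up to the sign `(-1) ^ j`, a column is an alternating sum of an
arithmetic progression; a row is the sum of two such pieces, split at `(n + 1) / 2`. The closed
form `4 ∑_{p < j ≤ q} (-1) ^ j (a + b j) = (-1) ^ q (2a + b(2q + 1)) - (-1) ^ p (2a + b(2p + 1))`
evaluates all of them; the sign `(-1) ^ ((n + 1) / 2)` it leaves in the row sums is what
separates the cases `n ≡ 1` and `n ≡ 3 (mod 4)`.
-/

open Finset

theorem four_mul_sum_Ioc_neg_one_pow_mul {R : Type*} [CommRing R] (a b : R) {p q : ℕ}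
    (hpq : p ≤ q) :
    4 * ∑ j ∈ Ioc p q, (-1) ^ j * (a + b * j) =
      (-1) ^ q * (2 * a + b * (2 * q + 1)) - (-1) ^ p * (2 * a + b * (2 * p + 1)) := by
  induction q, hpq using Nat.le_induction with
  | base => simp
  | succ q hpq ih =>
    rw [sum_Ioc_succ_top hpq, pow_succ]
    push_cast
    linear_combination ih

theorem neg_one_pow_eq_neg_neg_one_pow_sub_one {R : Type*} [Ring R] {i : ℕ} (hi : 1 ≤ i) :
    (-1 : R) ^ i = -(-1) ^ (i - 1) := by
  conv_lhs => rw [← Nat.sub_add_cancel hi, pow_succ, mul_neg_one]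

theorem two_mul_three_mul_mul_sub_one_div_two (n : ℤ) :
    2 * (3 * n * (n - 1) / 2) = 3 * n * (n - 1) := by
  rw [mul_assoc]
  exact Int.mul_ediv_cancel' ((Int.even_mul_pred_self n).two_dvd.mul_left 3)

/-- The entry `a_{i,j}` of `A` (indices from `1`), lifted to `ℤ`. -/
def nhEntry (n i j : ℕ) : ℤ :=
  if j ≤ (n + 1) / 2 then (-1) ^ (i + j) * (3 * n * ((j : ℤ) - 1) + 3 * ((i : ℤ) - 1) + 1)
  else (-1) ^ (i + j) * (3 * n * j - 3 * (i : ℤ) + 1)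

theorem four_mul_sum_nhEntry_col {n : ℕ} (hn : Odd n) (j : ℕ) :
    4 * ∑ i ∈ Icc 1 n, nhEntry n i j = (-1) ^ j * (6 * n - 12 * n * j + 2) := by
  rw [show Icc 1 n = Ioc 0 n from Icc_add_one_left_eq_Ioc 0 n]
  by_cases hj : j ≤ (n + 1) / 2
  · have hcol : ∀ i ∈ Ioc 0 n,
        nhEntry n i j = (-1) ^ j * ((-1) ^ i * ((3 * n * ((j : ℤ) - 1) - 2) + 3 * i)) := by
      intro i _
      rw [nhEntry, if_pos hj, pow_add]; ring
    rw [sum_congr rfl hcol, ← mul_sum, mul_left_comm,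
      four_mul_sum_Ioc_neg_one_pow_mul _ _ (Nat.zero_le n), hn.neg_one_pow]
    push_cast
    ring
  · have hcol : ∀ i ∈ Ioc 0 n,
        nhEntry n i j = (-1) ^ j * ((-1) ^ i * ((3 * n * (j : ℤ) + 1) + (-3) * i)) := by
      intro i _
      rw [nhEntry, if_neg hj, pow_add]; ring
    rw [sum_congr rfl hcol, ← mul_sum, mul_left_comm,
      four_mul_sum_Ioc_neg_one_pow_mul _ _ (Nat.zero_le n), hn.neg_one_pow]
    push_cast
    ring

theorem four_mul_sum_nhEntry_row {n : ℕ} (hn : Odd n) (i : ℕ) :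
    4 * ∑ j ∈ Icc 1 n, nhEntry n i j =
      (-1) ^ i * ((-1) ^ ((n + 1) / 2) * (12 * i - 6 * n - 6) - 6 * n ^ 2 + 2) := by
  have hm : (n + 1) / 2 ≤ n := by omega
  have hlow : ∀ j ∈ Ioc 0 ((n + 1) / 2),
      nhEntry n i j = (-1) ^ i * ((-1) ^ j * ((3 * (i : ℤ) - 2 - 3 * n) + 3 * n * j)) := by
    intro j hj
    rw [nhEntry, if_pos (mem_Ioc.1 hj).2, pow_add]; ring
  have hhigh : ∀ j ∈ Ioc ((n + 1) / 2) n,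
      nhEntry n i j = (-1) ^ i * ((-1) ^ j * ((1 - 3 * (i : ℤ)) + 3 * n * j)) := by
    intro j hj
    rw [nhEntry, if_neg (not_le.2 (mem_Ioc.1 hj).1), pow_add]; ring
  rw [show Icc 1 n = Ioc 0 n from Icc_add_one_left_eq_Ioc 0 n,
    ← sum_Ioc_consecutive _ (Nat.zero_le _) hm, sum_congr rfl hlow, sum_congr rfl hhigh,
    ← mul_sum, ← mul_sum, ← mul_add, mul_left_comm, mul_add,
    four_mul_sum_Ioc_neg_one_pow_mul _ _ (Nat.zero_le _),
    four_mul_sum_Ioc_neg_one_pow_mul _ _ hm, hn.neg_one_pow]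
  push_cast
  ring

theorem sum_nhEntry_col {n : ℕ} (hn : Odd n) {j : ℕ} (hj : 1 ≤ j) :
    ∑ i ∈ Icc 1 n, nhEntry n i j = (-1) ^ (j - 1) * (3 * n * j - (3 * n + 1) / 2) := by
  have hhalf : 2 * ((3 * (n : ℤ) + 1) / 2) = 3 * n + 1 := by
    have := Nat.odd_iff.1 hn
    omega
  refine mul_left_cancel₀ (four_ne_zero' ℤ) ?_
  rw [four_mul_sum_nhEntry_col hn, neg_one_pow_eq_neg_neg_one_pow_sub_one hj]
  linear_combination 2 * (-1 : ℤ) ^ (j - 1) * hhalf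

theorem sum_nhEntry_row_of_mod_four_eq_one {n : ℕ} (hn : n % 4 = 1) {i : ℕ} (hi : 1 ≤ i) :
    ∑ j ∈ Icc 1 n, nhEntry n i j = (-1) ^ (i - 1) * (3 * i - 2 + 3 * n * (n - 1) / 2) := by
  refine mul_left_cancel₀ (four_ne_zero' ℤ) ?_
  rw [four_mul_sum_nhEntry_row (Nat.odd_iff.2 (by omega)),
    neg_one_pow_eq_neg_neg_one_pow_sub_one hi,
    (Nat.odd_iff.2 (by omega) : Odd ((n + 1) / 2)).neg_one_pow]
  linear_combination (-2) * (-1 : ℤ) ^ (i - 1) * two_mul_three_mul_mul_sub_one_div_two n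

theorem sum_nhEntry_row_of_mod_four_eq_three {n : ℕ} (hn : n % 4 = 3) {i : ℕ} (hi : 1 ≤ i) :
    ∑ j ∈ Icc 1 n, nhEntry n i j =
      (-1) ^ (i - 1) * (3 * (n + 1 - i) - 2 + 3 * n * (n - 1) / 2) := by
  refine mul_left_cancel₀ (four_ne_zero' ℤ) ?_
  rw [four_mul_sum_nhEntry_row (Nat.odd_iff.2 (by omega)),
    neg_one_pow_eq_neg_neg_one_pow_sub_one hi,
    (Nat.even_iff.2 (by omega) : Even ((n + 1) / 2)).neg_one_pow]
  linear_combination (-2) * (-1 : ℤ) ^ (i - 1) * two_mul_three_mul_mul_sub_one_div_two n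

theorem stmt11_general (n : ℕ) (hodd : Odd n)
    (A : ℕ → ℕ → ZMod (3 * n ^ 2))
    (hA : ∀ i ∈ Finset.Icc 1 n, ∀ j ∈ Finset.Icc 1 n,
      (j ≤ (n + 1) / 2 →
        A i j = (((-1) ^ (i + j) * (3 * (n : ℤ) * ((j : ℤ) - 1) + 3 * ((i : ℤ) - 1) + 1) : ℤ)
          : ZMod (3 * n ^ 2))) ∧
      ((n + 3) / 2 ≤ j →
        A i j = (((-1) ^ (i + j) * (3 * (n : ℤ) * j - 3 * (i : ℤ) + 1) : ℤ)
          : ZMod (3 * n ^ 2)))) :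
    (∀ j ∈ Finset.Icc 1 n,
      (∑ i ∈ Finset.Icc 1 n, A i j) =
        (((-1) ^ (j - 1) * (3 * (n : ℤ) * j - (3 * (n : ℤ) + 1) / 2) : ℤ) : ZMod (3 * n ^ 2))) ∧
    (n % 4 = 1 →
      ∀ i ∈ Finset.Icc 1 n,
        (∑ j ∈ Finset.Icc 1 n, A i j) =
          (((-1) ^ (i - 1) * (3 * (i : ℤ) - 2 + 3 * (n : ℤ) * ((n : ℤ) - 1) / 2) : ℤ)
            : ZMod (3 * n ^ 2))) ∧
    (n % 4 = 3 →
      ∀ i ∈ Finset.Icc 1 n,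
        (∑ j ∈ Finset.Icc 1 n, A i j) =
          (((-1) ^ (i - 1) * (3 * ((n : ℤ) + 1 - i) - 2 + 3 * (n : ℤ) * ((n : ℤ) - 1) / 2) : ℤ)
            : ZMod (3 * n ^ 2))) := by
  have hentry : ∀ i ∈ Icc 1 n, ∀ j ∈ Icc 1 n, A i j = (nhEntry n i j : ZMod (3 * n ^ 2)) := by
    intro i hi j hj
    rw [nhEntry]
    split_ifs with hlow
    · exact (hA i hi j hj).1 hlow
    · exact (hA i hi j hj).2 (by omega)
  refine ⟨fun j hj => ?_, fun h4 i hi => ?_, fun h4 i hi => ?_⟩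
  · rw [sum_congr rfl fun i hi => hentry i hi j hj, ← Int.cast_sum,
      sum_nhEntry_col hodd (mem_Icc.1 hj).1]
  · rw [sum_congr rfl (hentry i hi), ← Int.cast_sum,
      sum_nhEntry_row_of_mod_four_eq_one h4 (mem_Icc.1 hi).1]
  · rw [sum_congr rfl (hentry i hi), ← Int.cast_sum,
      sum_nhEntry_row_of_mod_four_eq_three h4 (mem_Icc.1 hi).1]

/-- Remark 3.8: total row and column sums of the matrix of Proposition 3.7
(the globally simple NH_{n²}(n;n)) over Z_{3n²}, n odd. -/
theorem stmt11 (n : ℕ) (hn : 1 ≤ n) (hodd : Odd n)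
    (A : ℕ → ℕ → ZMod (3 * n ^ 2))
    (hA : ∀ i ∈ Finset.Icc 1 n, ∀ j ∈ Finset.Icc 1 n,
      (j ≤ (n + 1) / 2 →
        A i j = (((-1) ^ (i + j) * (3 * (n : ℤ) * ((j : ℤ) - 1) + 3 * ((i : ℤ) - 1) + 1) : ℤ)
          : ZMod (3 * n ^ 2))) ∧
      ((n + 3) / 2 ≤ j →
        A i j = (((-1) ^ (i + j) * (3 * (n : ℤ) * j - 3 * (i : ℤ) + 1) : ℤ)
          : ZMod (3 * n ^ 2)))) :
    (∀ j ∈ Finset.Icc 1 n,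
      (∑ i ∈ Finset.Icc 1 n, A i j) =
        (((-1) ^ (j - 1) * (3 * (n : ℤ) * j - (3 * (n : ℤ) + 1) / 2) : ℤ) : ZMod (3 * n ^ 2))) ∧
    (n % 4 = 1 →
      ∀ i ∈ Finset.Icc 1 n,
        (∑ j ∈ Finset.Icc 1 n, A i j) =
          (((-1) ^ (i - 1) * (3 * (i : ℤ) - 2 + 3 * (n : ℤ) * ((n : ℤ) - 1) / 2) : ℤ)
            : ZMod (3 * n ^ 2))) ∧
    (n % 4 = 3 →
      ∀ i ∈ Finset.Icc 1 n,
        (∑ j ∈ Finset.Icc 1 n, A i j) =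
          (((-1) ^ (i - 1) * (3 * ((n : ℤ) + 1 - i) - 2 + 3 * (n : ℤ) * ((n : ℤ) - 1) / 2) : ℤ)
            : ZMod (3 * n ^ 2))) :=
  stmt11_general n hodd A hA
end

section
/- Let n ≥ 1 be odd and let A = (a_{i,j}) be the n×n matrix over Z_{4n²} defined by: a_{i,j} = 2n(j−1) + 2i − 1 if i ≡ j (mod 2) and 1 ≤ j ≤ (n+1)/2; a_{i,j} = 2n(n−j+1) − 2i + 1 if i ≢ j (mod 2) and 1 ≤ j ≤ (n+1)/2; a_{i,j} = 2nj − 2i + 1 if i ≡ j (mod 2) and (n+3)/2 ≤ j ≤ n; a_{i,j} = 2n(n−j) + 2i − 1 if i ≢ j (mod 2) and (n+3)/2 ≤ j ≤ n. Then for every j ∈ [1,n] the sum of the entries of column j equals n³ + (−1)^{j−1}·(2nj − n² − n) in Z_{4n²}. Moreover, if n ≡ 1 (mod 4) then for every i ∈ [1,n] the sum of the entries of row i equals n³ + (−1)^{i−1}·(2i − n − 1), while if n ≡ 3 (mod 4) then for every i ∈ [1,n] the sum of the entries of row i equals n³ + (−1)^{i−1}·(n + 1 − 2i), in Z_{4n²}.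 -/
lemma myGeven (c p q : ℤ) (m : ℕ) :
    ∑ j ∈ Finset.Icc 1 (2*m), (if j % 2 = 1 then p + c * (j:ℤ) else q - c * (j:ℤ))
      = m*p + m*q - c*m := by
  induction m with
  | zero => simp
  | succ m ih =>
    rw [show 2*(m+1) = (2*m+1)+1 by ring, Finset.sum_Icc_succ_top (by omega),
      Finset.sum_Icc_succ_top (by omega), ih, if_pos (by omega : (2*m+1) % 2 = 1),
      if_neg (by omega : ¬ (2*m+1+1) % 2 = 1)]
    push_cast
    ring

lemma myGodd (c p q : ℤ) (m : ℕ) :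
    ∑ j ∈ Finset.Icc 1 (2*m+1), (if j % 2 = 1 then p + c * (j:ℤ) else q - c * (j:ℤ))
      = (m+1)*p + m*q + c*(m+1) := by
  rw [Finset.sum_Icc_succ_top (by omega), myGeven, if_pos (by omega : (2*m+1) % 2 = 1)]
  push_cast
  ring

lemma mySplit {M : Type*} [AddCommMonoid M] (g : ℕ → M) (a b : ℕ) (hab : a ≤ b) :
    ∑ j ∈ Finset.Icc 1 b, g j
      = (∑ j ∈ Finset.Icc 1 a, g j) + ∑ j ∈ Finset.Icc (a+1) b, g j := by
  have h : ∀ x, Finset.Icc 1 x = Finset.Ioc 0 x := fun x => by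
    rw [← Finset.Icc_add_one_left_eq_Ioc]; rfl
  rw [h, h, Finset.Icc_add_one_left_eq_Ioc]
  exact (Finset.sum_Ioc_consecutive g (Nat.zero_le a) hab).symm

lemma myRow (n : ℕ) (A : ℕ → ℕ → ZMod (4*n^2)) (i k : ℕ) (hk : k ≤ n)
    (c p₁ q₁ p₂ q₂ : ℤ)
    (h1 : ∀ j ∈ Finset.Icc 1 k,
      A i j = (((if j % 2 = 1 then p₁ + c*(j:ℤ) else q₁ - c*(j:ℤ)) : ℤ) : ZMod (4*n^2)))
    (h2 : ∀ j ∈ Finset.Icc (k+1) n,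
      A i j = (((if j % 2 = 1 then p₂ + c*(j:ℤ) else q₂ - c*(j:ℤ)) : ℤ) : ZMod (4*n^2))) :
    ∑ j ∈ Finset.Icc 1 n, A i j =
      ((((∑ j ∈ Finset.Icc 1 k, (if j % 2 = 1 then p₁ + c*(j:ℤ) else q₁ - c*(j:ℤ)))
        + (∑ j ∈ Finset.Icc 1 n, (if j % 2 = 1 then p₂ + c*(j:ℤ) else q₂ - c*(j:ℤ)))
        - (∑ j ∈ Finset.Icc 1 k, (if j % 2 = 1 then p₂ + c*(j:ℤ) else q₂ - c*(j:ℤ)))) : ℤ)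
          : ZMod (4*n^2)) := by
  rw [mySplit (fun j => A i j) k n hk, Finset.sum_congr rfl h1, Finset.sum_congr rfl h2,
    mySplit (fun j => (if j % 2 = 1 then p₂ + c*(j:ℤ) else q₂ - c*(j:ℤ))) k n hk]
  push_cast
  ring

/-- Remark 3.11: total row and column sums of the matrix of Proposition 3.10
(the globally simple NH_{2n²}(n;n)) over Z_{4n²}, n odd. -/
theorem stmt12 (n : ℕ) (hn : 1 ≤ n) (hodd : Odd n)
    (A : ℕ → ℕ → ZMod (4 * n ^ 2))
    (hA : ∀ i ∈ Finset.Icc 1 n, ∀ j ∈ Finset.Icc 1 n,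
      (i % 2 = j % 2 → j ≤ (n + 1) / 2 →
        A i j = ((2 * (n : ℤ) * ((j : ℤ) - 1) + 2 * (i : ℤ) - 1 : ℤ) : ZMod (4 * n ^ 2))) ∧
      (i % 2 ≠ j % 2 → j ≤ (n + 1) / 2 →
        A i j = ((2 * (n : ℤ) * ((n : ℤ) - j + 1) - 2 * (i : ℤ) + 1 : ℤ) : ZMod (4 * n ^ 2))) ∧
      (i % 2 = j % 2 → (n + 3) / 2 ≤ j →
        A i j = ((2 * (n : ℤ) * j - 2 * (i : ℤ) + 1 : ℤ) : ZMod (4 * n ^ 2))) ∧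
      (i % 2 ≠ j % 2 → (n + 3) / 2 ≤ j →
        A i j = ((2 * (n : ℤ) * ((n : ℤ) - j) + 2 * (i : ℤ) - 1 : ℤ) : ZMod (4 * n ^ 2)))) :
    (∀ j ∈ Finset.Icc 1 n,
      (∑ i ∈ Finset.Icc 1 n, A i j) =
        (((n : ℤ) ^ 3 + (-1) ^ (j - 1) * (2 * (n : ℤ) * j - (n : ℤ) ^ 2 - n) : ℤ)
          : ZMod (4 * n ^ 2))) ∧
    (n % 4 = 1 →
      ∀ i ∈ Finset.Icc 1 n,
        (∑ j ∈ Finset.Icc 1 n, A i j) =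
          (((n : ℤ) ^ 3 + (-1) ^ (i - 1) * (2 * (i : ℤ) - n - 1) : ℤ) : ZMod (4 * n ^ 2))) ∧
    (n % 4 = 3 →
      ∀ i ∈ Finset.Icc 1 n,
        (∑ j ∈ Finset.Icc 1 n, A i j) =
          (((n : ℤ) ^ 3 + (-1) ^ (i - 1) * ((n : ℤ) + 1 - 2 * i) : ℤ) : ZMod (4 * n ^ 2))) := by
  obtain ⟨m, hm⟩ := hodd
  refine ⟨?_, ?_, ?_⟩
  · -- column sums
    intro j hj
    have hj' := Finset.mem_Icc.mp hj
    by_cases hjk : j ≤ (n+1)/2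
    · by_cases hp : j % 2 = 1
      · have hs : ∀ i ∈ Finset.Icc 1 n, A i j =
            (((if i % 2 = 1 then (2*(n:ℤ)*((j:ℤ)-1) - 1) + 2*(i:ℤ)
                else (2*(n:ℤ)*((n:ℤ)-(j:ℤ)+1) + 1) - 2*(i:ℤ)) : ℤ) : ZMod (4*n^2)) := by
          intro i hi
          by_cases h : i % 2 = 1
          · rw [if_pos h, (hA i hi j hj).1 (by omega) hjk]; congr 1; ring
          · rw [if_neg h, (hA i hi j hj).2.1 (by omega) hjk]; congr 1; ring
        rw [Finset.sum_congr rfl hs, ← Int.cast_sum, hm, myGodd]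
        have he : (-1:ℤ)^(j-1) = 1 := Even.neg_one_pow (Nat.even_iff.mpr (by omega))
        rw [he]
        congr 1
        push_cast
        ring
      · have hs : ∀ i ∈ Finset.Icc 1 n, A i j =
            (((if i % 2 = 1 then (2*(n:ℤ)*((n:ℤ)-(j:ℤ)+1) + 1) + (-2)*(i:ℤ)
                else (2*(n:ℤ)*((j:ℤ)-1) - 1) - (-2)*(i:ℤ)) : ℤ) : ZMod (4*n^2)) := by
          intro i hi
          by_cases h : i % 2 = 1
          · rw [if_pos h, (hA i hi j hj).2.1 (by omega) hjk]; congr 1; ring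
          · rw [if_neg h, (hA i hi j hj).1 (by omega) hjk]; congr 1; ring
        rw [Finset.sum_congr rfl hs, ← Int.cast_sum, hm, myGodd]
        have he : (-1:ℤ)^(j-1) = -1 := Odd.neg_one_pow (Nat.odd_iff.mpr (by omega))
        rw [he]
        congr 1
        push_cast
        ring
    · have hjk2 : (n+3)/2 ≤ j := by omega
      by_cases hp : j % 2 = 1
      · have hs : ∀ i ∈ Finset.Icc 1 n, A i j =
            (((if i % 2 = 1 then (2*(n:ℤ)*(j:ℤ) + 1) + (-2)*(i:ℤ)
                else (2*(n:ℤ)*((n:ℤ)-(j:ℤ)) - 1) - (-2)*(i:ℤ)) : ℤ) : ZMod (4*n^2)) := by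
          intro i hi
          by_cases h : i % 2 = 1
          · rw [if_pos h, (hA i hi j hj).2.2.1 (by omega) hjk2]; congr 1; ring
          · rw [if_neg h, (hA i hi j hj).2.2.2 (by omega) hjk2]; congr 1; ring
        rw [Finset.sum_congr rfl hs, ← Int.cast_sum, hm, myGodd]
        have he : (-1:ℤ)^(j-1) = 1 := Even.neg_one_pow (Nat.even_iff.mpr (by omega))
        rw [he]
        congr 1
        push_cast
        ring
      · have hs : ∀ i ∈ Finset.Icc 1 n, A i j =
            (((if i % 2 = 1 then (2*(n:ℤ)*((n:ℤ)-(j:ℤ)) - 1) + 2*(i:ℤ)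
                else (2*(n:ℤ)*(j:ℤ) + 1) - 2*(i:ℤ)) : ℤ) : ZMod (4*n^2)) := by
          intro i hi
          by_cases h : i % 2 = 1
          · rw [if_pos h, (hA i hi j hj).2.2.2 (by omega) hjk2]; congr 1; ring
          · rw [if_neg h, (hA i hi j hj).2.2.1 (by omega) hjk2]; congr 1; ring
        rw [Finset.sum_congr rfl hs, ← Int.cast_sum, hm, myGodd]
        have he : (-1:ℤ)^(j-1) = -1 := Odd.neg_one_pow (Nat.odd_iff.mpr (by omega))
        rw [he]
        congr 1
        push_cast
        ring
  · -- row sums, n ≡ 1 (mod 4)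
    intro h4 i hi
    obtain ⟨t, ht⟩ : ∃ t, n = 4*t+1 := ⟨n/4, by omega⟩
    have hi' := Finset.mem_Icc.mp hi
    by_cases hip : i % 2 = 1
    · have h1 : ∀ j ∈ Finset.Icc 1 (2*t+1), A i j =
          (((if j % 2 = 1 then (2*(i:ℤ)-1-2*(n:ℤ)) + (2*(n:ℤ))*(j:ℤ)
              else (2*(n:ℤ)*((n:ℤ)+1)+1-2*(i:ℤ)) - (2*(n:ℤ))*(j:ℤ)) : ℤ) : ZMod (4*n^2)) := by
        intro j hj
        have hj' := Finset.mem_Icc.mp hj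
        have hjm : j ∈ Finset.Icc 1 n := Finset.mem_Icc.mpr (by omega)
        by_cases h : j % 2 = 1
        · rw [if_pos h, (hA i hi j hjm).1 (by omega) (by omega)]; congr 1; ring
        · rw [if_neg h, (hA i hi j hjm).2.1 (by omega) (by omega)]; congr 1; ring
      have h2 : ∀ j ∈ Finset.Icc (2*t+1+1) n, A i j =
          (((if j % 2 = 1 then (1-2*(i:ℤ)) + (2*(n:ℤ))*(j:ℤ)
              else (2*(n:ℤ)^2+2*(i:ℤ)-1) - (2*(n:ℤ))*(j:ℤ)) : ℤ) : ZMod (4*n^2)) := by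
        intro j hj
        have hj' := Finset.mem_Icc.mp hj
        have hjm : j ∈ Finset.Icc 1 n := Finset.mem_Icc.mpr (by omega)
        by_cases h : j % 2 = 1
        · rw [if_pos h, (hA i hi j hjm).2.2.1 (by omega) (by omega)]; congr 1; ring
        · rw [if_neg h, (hA i hi j hjm).2.2.2 (by omega) (by omega)]; congr 1; ring
      rw [myRow n A i (2*t+1) (by omega) (2*(n:ℤ)) _ _ _ _ h1 h2]
      rw [show n = 2*(2*t)+1 by omega, myGodd, myGodd, myGodd]
      have he : (-1:ℤ)^(i-1) = 1 := Even.neg_one_pow (Nat.even_iff.mpr (by omega))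
      rw [he]
      congr 1
      push_cast
      ring
    · have h1 : ∀ j ∈ Finset.Icc 1 (2*t+1), A i j =
          (((if j % 2 = 1 then (2*(n:ℤ)*((n:ℤ)+1)+1-2*(i:ℤ)) + (-(2*(n:ℤ)))*(j:ℤ)
              else (2*(i:ℤ)-1-2*(n:ℤ)) - (-(2*(n:ℤ)))*(j:ℤ)) : ℤ) : ZMod (4*n^2)) := by
        intro j hj
        have hj' := Finset.mem_Icc.mp hj
        have hjm : j ∈ Finset.Icc 1 n := Finset.mem_Icc.mpr (by omega)
        by_cases h : j % 2 = 1
        · rw [if_pos h, (hA i hi j hjm).2.1 (by omega) (by omega)]; congr 1; ring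
        · rw [if_neg h, (hA i hi j hjm).1 (by omega) (by omega)]; congr 1; ring
      have h2 : ∀ j ∈ Finset.Icc (2*t+1+1) n, A i j =
          (((if j % 2 = 1 then (2*(n:ℤ)^2+2*(i:ℤ)-1) + (-(2*(n:ℤ)))*(j:ℤ)
              else (1-2*(i:ℤ)) - (-(2*(n:ℤ)))*(j:ℤ)) : ℤ) : ZMod (4*n^2)) := by
        intro j hj
        have hj' := Finset.mem_Icc.mp hj
        have hjm : j ∈ Finset.Icc 1 n := Finset.mem_Icc.mpr (by omega)
        by_cases h : j % 2 = 1
        · rw [if_pos h, (hA i hi j hjm).2.2.2 (by omega) (by omega)]; congr 1; ring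
        · rw [if_neg h, (hA i hi j hjm).2.2.1 (by omega) (by omega)]; congr 1; ring
      rw [myRow n A i (2*t+1) (by omega) (-(2*(n:ℤ))) _ _ _ _ h1 h2]
      rw [show n = 2*(2*t)+1 by omega, myGodd, myGodd, myGodd]
      have he : (-1:ℤ)^(i-1) = -1 := Odd.neg_one_pow (Nat.odd_iff.mpr (by omega))
      rw [he]
      congr 1
      push_cast
      ring
  · -- row sums, n ≡ 3 (mod 4)
    intro h4 i hi
    obtain ⟨t, ht⟩ : ∃ t, n = 4*t+3 := ⟨n/4, by omega⟩
    have hi' := Finset.mem_Icc.mp hi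
    by_cases hip : i % 2 = 1
    · have h1 : ∀ j ∈ Finset.Icc 1 (2*(t+1)), A i j =
          (((if j % 2 = 1 then (2*(i:ℤ)-1-2*(n:ℤ)) + (2*(n:ℤ))*(j:ℤ)
              else (2*(n:ℤ)*((n:ℤ)+1)+1-2*(i:ℤ)) - (2*(n:ℤ))*(j:ℤ)) : ℤ) : ZMod (4*n^2)) := by
        intro j hj
        have hj' := Finset.mem_Icc.mp hj
        have hjm : j ∈ Finset.Icc 1 n := Finset.mem_Icc.mpr (by omega)
        by_cases h : j % 2 = 1
        · rw [if_pos h, (hA i hi j hjm).1 (by omega) (by omega)]; congr 1; ring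
        · rw [if_neg h, (hA i hi j hjm).2.1 (by omega) (by omega)]; congr 1; ring
      have h2 : ∀ j ∈ Finset.Icc (2*(t+1)+1) n, A i j =
          (((if j % 2 = 1 then (1-2*(i:ℤ)) + (2*(n:ℤ))*(j:ℤ)
              else (2*(n:ℤ)^2+2*(i:ℤ)-1) - (2*(n:ℤ))*(j:ℤ)) : ℤ) : ZMod (4*n^2)) := by
        intro j hj
        have hj' := Finset.mem_Icc.mp hj
        have hjm : j ∈ Finset.Icc 1 n := Finset.mem_Icc.mpr (by omega)
        by_cases h : j % 2 = 1
        · rw [if_pos h, (hA i hi j hjm).2.2.1 (by omega) (by omega)]; congr 1; ring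
        · rw [if_neg h, (hA i hi j hjm).2.2.2 (by omega) (by omega)]; congr 1; ring
      rw [myRow n A i (2*(t+1)) (by omega) (2*(n:ℤ)) _ _ _ _ h1 h2]
      rw [show n = 2*(2*t+1)+1 by omega, myGeven, myGodd, myGeven]
      have he : (-1:ℤ)^(i-1) = 1 := Even.neg_one_pow (Nat.even_iff.mpr (by omega))
      rw [he]
      congr 1
      push_cast
      ring
    · have h1 : ∀ j ∈ Finset.Icc 1 (2*(t+1)), A i j =
          (((if j % 2 = 1 then (2*(n:ℤ)*((n:ℤ)+1)+1-2*(i:ℤ)) + (-(2*(n:ℤ)))*(j:ℤ)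
              else (2*(i:ℤ)-1-2*(n:ℤ)) - (-(2*(n:ℤ)))*(j:ℤ)) : ℤ) : ZMod (4*n^2)) := by
        intro j hj
        have hj' := Finset.mem_Icc.mp hj
        have hjm : j ∈ Finset.Icc 1 n := Finset.mem_Icc.mpr (by omega)
        by_cases h : j % 2 = 1
        · rw [if_pos h, (hA i hi j hjm).2.1 (by omega) (by omega)]; congr 1; ring
        · rw [if_neg h, (hA i hi j hjm).1 (by omega) (by omega)]; congr 1; ring
      have h2 : ∀ j ∈ Finset.Icc (2*(t+1)+1) n, A i j =
          (((if j % 2 = 1 then (2*(n:ℤ)^2+2*(i:ℤ)-1) + (-(2*(n:ℤ)))*(j:ℤ)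
              else (1-2*(i:ℤ)) - (-(2*(n:ℤ)))*(j:ℤ)) : ℤ) : ZMod (4*n^2)) := by
        intro j hj
        have hj' := Finset.mem_Icc.mp hj
        have hjm : j ∈ Finset.Icc 1 n := Finset.mem_Icc.mpr (by omega)
        by_cases h : j % 2 = 1
        · rw [if_pos h, (hA i hi j hjm).2.2.2 (by omega) (by omega)]; congr 1; ring
        · rw [if_neg h, (hA i hi j hjm).2.2.1 (by omega) (by omega)]; congr 1; ring
      rw [myRow n A i (2*(t+1)) (by omega) (-(2*(n:ℤ))) _ _ _ _ h1 h2]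
      rw [show n = 2*(2*t+1)+1 by omega, myGeven, myGodd, myGeven]
      have he : (-1:ℤ)^(i-1) = -1 := Odd.neg_one_pow (Nat.odd_iff.mpr (by omega))
      rw [he]
      congr 1
      push_cast
      ring
end
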